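/- arXiv:math/0304218 — 4 statements merged into one kernel-verified Lean document; each statement's English description precedes it below -/
import Mathlib

section
/- Let K be an algebraically closed field with a surjective valuation deg : Kˣ → ℝ, let 1 ≤ d ≤ n, and let X ⊆ Kⁿ be a d-dimensional linear subspace all of whose Plücker coordinates ξ_I (I a d-subset of {1,…,n}) are nonzero. Set w_I = deg(ξ_I). For each (d+1)-subset J of {1,…,n}, let T(F_J) = { x ∈ ℝⁿ : the minimum min_{j∈J}( w_{J∖{j}} + x_j ) is attained for at least two indices j ∈ J }. Then the closure in ℝⁿ of the set { (deg u₁, …, deg uₙ) : u ∈ X, uᵢ ≠ 0 for all i } equals the intersection ∩_J T(F_J) over all (d+1)-subsets J. In particular, the tropical d-plane deg(X) is determined by the tropical Plücker vector w = deg(ξ). -/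
open scoped Classical

open MvPolynomial

/-- A surjective real valuation on a field `K`, recorded as a degree function `deg : K → ℝ`
(the value at `0` is irrelevant): `deg(ab) = deg a + deg b`, `deg(a+b) ≥ min (deg a) (deg b)`
whenever all three elements are nonzero, and every real number is the degree of some nonzero
element of `K`. -/
structure ValData (K : Type*) [Field K] where
  deg : K → ℝ
  deg_mul : ∀ a b : K, a ≠ 0 → b ≠ 0 → deg (a * b) = deg a + deg b
  deg_add : ∀ a b : K, a ≠ 0 → b ≠ 0 → a + b ≠ 0 → min (deg a) (deg b) ≤ deg (a + b)
  surj : ∀ r : ℝ, ∃ a : K, a ≠ 0 ∧ deg a = r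

variable {K : Type*} [Field K]

/-- The `w`-weight of the term of `f` with exponent vector `a`:
`deg(c_a) + ⟨a, w⟩` where `c_a` is the corresponding coefficient. -/
noncomputable def ValData.termWeight (V : ValData K) {n : ℕ} (w : Fin n → ℝ)
    (f : MvPolynomial (Fin n) K) (a : Fin n →₀ ℕ) : ℝ :=
  V.deg (f.coeff a) + a.sum fun i e => (e : ℝ) * w i

/-- The tropical hypersurface `T(trop f)` of a (nonzero) polynomial `f`: the set of `w ∈ ℝⁿ`
at which the minimum of the `w`-weights of the terms of `f` is attained at least twice. -/
def ValData.tropHyp (V : ValData K) {n : ℕ} (f : MvPolynomial (Fin n) K) :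
    Set (Fin n → ℝ) :=
  { w | ∃ a ∈ f.support, ∃ b ∈ f.support, a ≠ b ∧
      V.termWeight w f a = V.termWeight w f b ∧
      ∀ c ∈ f.support, V.termWeight w f a ≤ V.termWeight w f c }

/-- The `d × d` minor of a `d × n` matrix `A` on the columns indexed by a `d`-subset `S`
(defined to be `0` if `S` does not have exactly `d` elements). -/
noncomputable def minorOn {d n : ℕ} (A : Matrix (Fin d) (Fin n) K) (S : Finset (Fin n)) : K :=
  if h : S.card = d then
    (Matrix.of fun r c : Fin d => A r ((S.orderIsoOfFin h c : S) : Fin n)).det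
  else 0

/-- The tropical Plücker coordinate `w_I = deg ξ_I` of the row space of `A`,
for a `d`-subset `I`. -/
noncomputable def minorDeg (V : ValData K) {d n : ℕ} (A : Matrix (Fin d) (Fin n) K)
    (S : Finset (Fin n)) : ℝ :=
  V.deg (minorOn A S)

/-- The tropical hyperplane `T(F_J)` of the circuit `F_J = ∑_{j ∈ J} w_{J∖{j}} ⊙ x_j`
attached to a `(d+1)`-subset `J`: the set of `x ∈ ℝⁿ` where the minimum
`min_{j ∈ J} (w_{J∖{j}} + x_j)` is attained at least twice. -/
def circuitHyp (V : ValData K) {d n : ℕ} (A : Matrix (Fin d) (Fin n) K)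
    (J : Finset (Fin n)) : Set (Fin n → ℝ) :=
  { x | ∃ j ∈ J, ∃ j' ∈ J, j ≠ j' ∧
      minorDeg V A (J.erase j) + x j = minorDeg V A (J.erase j') + x j' ∧
      ∀ m ∈ J, minorDeg V A (J.erase j) + x j ≤ minorDeg V A (J.erase m) + x m }

namespace ValDataAux
variable {K : Type*} [Field K] (V : ValData K)

lemma deg_one : V.deg 1 = 0 := by
  have := V.deg_mul 1 1 one_ne_zero one_ne_zero
  simp at this; linarith

lemma deg_neg_one : V.deg (-1 : K) = 0 := by
  have := V.deg_mul (-1 : K) (-1) (by simp) (by simp)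
  simp at this
  have h1 := deg_one V
  linarith

lemma deg_neg {a : K} (ha : a ≠ 0) : V.deg (-a) = V.deg a := by
  have : (-a : K) = (-1) * a := by ring
  rw [this, V.deg_mul _ _ (by simp) ha, deg_neg_one V]; ring

lemma deg_neg_one_pow_mul {a : K} (ha : a ≠ 0) (k : ℕ) :
    V.deg ((-1 : K) ^ k * a) = V.deg a := by
  rcases Nat.even_or_odd k with h | h
  · rw [h.neg_one_pow, one_mul]
  · rw [h.neg_one_pow, neg_one_mul, deg_neg V ha]

lemma deg_add_eq_left {a b : K} (ha : a ≠ 0) (hb : b ≠ 0) (h : V.deg a < V.deg b) :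
    a + b ≠ 0 ∧ V.deg (a + b) = V.deg a := by
  have hab : a + b ≠ 0 := by
    intro h0
    have hba : b = -a := by linear_combination h0
    rw [hba, deg_neg V ha] at h; linarith
  refine ⟨hab, ?_⟩
  have h1 : V.deg a ≤ V.deg (a + b) := by
    have := V.deg_add a b ha hb hab
    have hmin : min (V.deg a) (V.deg b) = V.deg a := min_eq_left h.le
    linarith
  have h2 : a + b + (-b) = a := by ring
  have h3 : min (V.deg (a + b)) (V.deg (-b)) ≤ V.deg a := by
    have := V.deg_add (a + b) (-b) hab (by simpa using hb) (by rw [h2]; exact ha)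
    rw [h2] at this; exact this
  rw [deg_neg V hb] at h3
  rcases min_le_iff.mp h3 with h4 | h4 <;> linarith

lemma deg_add_eq_min {a b : K} (ha : a ≠ 0) (hb : b ≠ 0) (h : V.deg a ≠ V.deg b) :
    a + b ≠ 0 ∧ V.deg (a + b) = min (V.deg a) (V.deg b) := by
  rcases lt_or_gt_of_ne h with h' | h'
  · have := deg_add_eq_left V ha hb h'
    rw [min_eq_left h'.le]; exact this
  · have := deg_add_eq_left V hb ha h'
    rw [min_eq_right h'.le, add_comm]; exact this

lemma deg_sum_ge {ι : Type*} [DecidableEq ι] {T : Finset ι} {v : ι → K} {r : ℝ}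
    (hv : ∀ s ∈ T, v s ≠ 0) (hr : ∀ s ∈ T, r ≤ V.deg (v s))
    (hne : (∑ s ∈ T, v s) ≠ 0) : r ≤ V.deg (∑ s ∈ T, v s) := by
  induction T using Finset.induction_on with
  | empty => simp at hne
  | insert a T' ha ih =>
    rw [Finset.sum_insert ha] at hne ⊢
    by_cases hz : (∑ s ∈ T', v s) = 0
    · rw [hz, add_zero] at hne ⊢
      exact hr a (Finset.mem_insert_self a T')
    · have h1 : r ≤ V.deg (∑ s ∈ T', v s) :=
        ih (fun s hs => hv s (Finset.mem_insert_of_mem hs))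
          (fun s hs => hr s (Finset.mem_insert_of_mem hs)) hz
      have h2 := V.deg_add (v a) _ (hv a (Finset.mem_insert_self a T')) hz hne
      have h3 := hr a (Finset.mem_insert_self a T')
      rcases min_le_iff.mp (le_refl (min (V.deg (v a)) (V.deg (∑ s ∈ T', v s)))) with h4 | h4
      · rcases le_total (V.deg (v a)) (V.deg (∑ s ∈ T', v s)) with h5 | h5 <;>
        · rw [min_def] at h2; split at h2 <;> linarith
      · rw [min_def] at h2; split at h2 <;> linarith

lemma deg_sum_strict {ι : Type*} [DecidableEq ι] {T : Finset ι} {v : ι → K} (hT : T.Nonempty)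
    (hv : ∀ s ∈ T, v s ≠ 0)
    (hinj : ∀ s ∈ T, ∀ s' ∈ T, s ≠ s' → V.deg (v s) ≠ V.deg (v s')) :
    (∑ s ∈ T, v s) ≠ 0 ∧ V.deg (∑ s ∈ T, v s) = T.inf' hT (fun s => V.deg (v s)) := by
  induction T using Finset.cons_induction with
  | empty => exact absurd hT (by simp)
  | cons a T' ha ih =>
    have hv' : ∀ s ∈ T', v s ≠ 0 := fun s hs => hv s (Finset.mem_cons_of_mem hs)
    have hinj' : ∀ s ∈ T', ∀ s' ∈ T', s ≠ s' → V.deg (v s) ≠ V.deg (v s') :=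
      fun s hs s' hs' h => hinj s (Finset.mem_cons_of_mem hs) s' (Finset.mem_cons_of_mem hs') h
    have haT : a ∈ Finset.cons a T' ha := Finset.mem_cons_self a T'
    rcases T'.eq_empty_or_nonempty with rfl | hT'
    · simpa using hv a haT
    · obtain ⟨hne', hdeg'⟩ := ih hT' hv' hinj'
      obtain ⟨s₁, hs₁, hinf⟩ := Finset.exists_mem_eq_inf' hT' (fun s => V.deg (v s))
      have hne_deg : V.deg (v a) ≠ V.deg (∑ s ∈ T', v s) := by
        rw [hdeg', hinf]
        exact hinj a haT s₁ (Finset.mem_cons_of_mem hs₁) (by rintro rfl; exact ha hs₁)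
      have key := deg_add_eq_min V (hv a haT) hne' hne_deg
      rw [Finset.sum_cons]
      refine ⟨key.1, ?_⟩
      rw [key.2, hdeg', Finset.inf'_cons]

lemma exists_two_min {ι : Type*} [DecidableEq ι] {T : Finset ι} {v : ι → K}
    (h2 : 2 ≤ T.card) (hv : ∀ s ∈ T, v s ≠ 0) (hsum : (∑ s ∈ T, v s) = 0) :
    ∃ s ∈ T, ∃ s' ∈ T, s ≠ s' ∧ V.deg (v s) = V.deg (v s') ∧
      ∀ m ∈ T, V.deg (v s) ≤ V.deg (v m) := by
  have hTne : T.Nonempty := Finset.card_pos.mp (by omega)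
  obtain ⟨s₀, hs₀, hmin⟩ := Finset.exists_min_image T (fun s => V.deg (v s)) hTne
  by_cases hex : ∃ s' ∈ T, s' ≠ s₀ ∧ V.deg (v s') = V.deg (v s₀)
  · obtain ⟨s', hs', hne, heq⟩ := hex
    exact ⟨s₀, hs₀, s', hs', fun h => hne h.symm, heq.symm, hmin⟩
  · exfalso
    push_neg at hex
    have hEne : (T.erase s₀).Nonempty := by
      rw [← Finset.card_pos, Finset.card_erase_of_mem hs₀]; omega
    have hsum' : (∑ s ∈ T.erase s₀, v s) = - v s₀ := by
      have := Finset.sum_erase_add T v hs₀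
      linear_combination this + hsum
    have hvne : (∑ s ∈ T.erase s₀, v s) ≠ 0 := by
      rw [hsum']; exact neg_ne_zero.mpr (hv s₀ hs₀)
    obtain ⟨s₁, hs₁, hinf⟩ := Finset.exists_mem_eq_inf' hEne (fun s => V.deg (v s))
    have hstrict : ∀ s ∈ T.erase s₀, V.deg (v s₀) < V.deg (v s) := fun s hs => by
      have hsT := Finset.mem_of_mem_erase hs
      have h1 := hmin s hsT
      have h2 := hex s hsT (Finset.ne_of_mem_erase hs)
      exact lt_of_le_of_ne h1 (fun h => h2 h.symm)
    have hge := deg_sum_ge V (r := (T.erase s₀).inf' hEne fun s => V.deg (v s))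
      (fun s hs => hv s (Finset.mem_of_mem_erase hs))
      (fun s hs => Finset.inf'_le _ hs) hvne
    rw [hsum', deg_neg V (hv s₀ hs₀), hinf] at hge
    exact absurd hge (not_le.mpr (hstrict s₁ hs₁))

end ValDataAux


section AuxMinor
variable {K : Type*} [Field K] {d n : ℕ}

lemma minorOn_eq_det (A : Matrix (Fin d) (Fin n) K) (S : Finset (Fin n)) (hS : S.card = d) :
    minorOn A S = (Matrix.of fun r c : Fin d => A r (S.orderEmbOfFin hS c)).det := by
  rw [minorOn, dif_pos hS]; rfl

lemma orderEmbOfFin_erase (J : Finset (Fin n)) (hJ : J.card = d + 1) (c : Fin (d + 1))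
    (h : (J.erase (J.orderEmbOfFin hJ c)).card = d) (c' : Fin d) :
    (J.erase (J.orderEmbOfFin hJ c)).orderEmbOfFin h c'
      = J.orderEmbOfFin hJ (c.succAbove c') := by
  have hmono : StrictMono (fun c' : Fin d => J.orderEmbOfFin hJ (c.succAbove c')) :=
    (J.orderEmbOfFin hJ).strictMono.comp (Fin.strictMono_succAbove c)
  have hfs : ∀ c' : Fin d, J.orderEmbOfFin hJ (c.succAbove c') ∈ J.erase (J.orderEmbOfFin hJ c) := by
    intro c'
    refine Finset.mem_erase.mpr ⟨?_, Finset.orderEmbOfFin_mem _ _ _⟩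
    exact fun hc => (c.succAbove_ne c') ((J.orderEmbOfFin hJ).injective hc)
  exact (congrFun (Finset.orderEmbOfFin_unique h hfs hmono) c').symm

lemma deg_det_updateColumn (V : ValData K) (A : Matrix (Fin d) (Fin n) K)
    (hA : ∀ S : Finset (Fin n), S.card = d → minorOn A S ≠ 0)
    (I : Finset (Fin n)) (hI : I.card = d) (s : Fin d) (j : Fin n) (hj : j ∉ I) :
    ((Matrix.of fun r c : Fin d => A r (I.orderEmbOfFin hI c)).updateCol s
        (fun r => A r j)).det ≠ 0 ∧
    V.deg ((Matrix.of fun r c : Fin d => A r (I.orderEmbOfFin hI c)).updateCol s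
        (fun r => A r j)).det
      = minorDeg V A (insert j (I.erase (I.orderEmbOfFin hI s))) := by
  have hd1 : 1 ≤ d := s.pos
  set ι := I.orderEmbOfFin hI with hιdef
  have hjE : j ∉ I.erase (ι s) := fun h => hj (Finset.mem_of_mem_erase h)
  have hS : (insert j (I.erase (ι s))).card = d := by
    rw [Finset.card_insert_of_notMem hjE,
      Finset.card_erase_of_mem (Finset.orderEmbOfFin_mem _ _ _), hI]
    omega
  set S := insert j (I.erase (ι s)) with hSdef
  set f : Fin d → Fin n := fun c => if c = s then j else ι c with hfdef
  have hfS : ∀ c, f c ∈ S := by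
    intro c
    by_cases h : c = s
    · simp [hfdef, h, hSdef]
    · have h1 : ι c ∈ I := Finset.orderEmbOfFin_mem _ _ _
      have h2 : ι c ≠ ι s := fun hc => h ((I.orderEmbOfFin hI).injective hc)
      simp [hfdef, h, hSdef, Finset.mem_erase, h1, h2]
  have hfinj : Function.Injective f := by
    intro c c' hcc
    by_cases h : c = s <;> by_cases h' : c' = s
    · rw [h, h']
    · exfalso; apply hj
      rw [hfdef] at hcc; simp only [h, h', if_true, if_false, if_neg, not_false_iff] at hcc
      rw [hcc]; exact Finset.orderEmbOfFin_mem _ _ _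
    · exfalso; apply hj
      rw [hfdef] at hcc; simp only [h, h', if_true, if_false, if_neg, not_false_iff] at hcc
      rw [← hcc]; exact Finset.orderEmbOfFin_mem _ _ _
    · rw [hfdef] at hcc; simp only [h, h', if_neg, not_false_iff] at hcc
      exact (I.orderEmbOfFin hI).injective hcc
  set g : Fin d → S := fun c => ⟨f c, hfS c⟩ with hgdef
  have hgbij : Function.Bijective g := by
    rw [Fintype.bijective_iff_injective_and_card]
    constructor
    · intro c c' h
      exact hfinj (congrArg Subtype.val h)
    · simp [Fintype.card_coe, hS]
  set σ : Equiv.Perm (Fin d) :=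
    (Equiv.ofBijective g hgbij).trans (S.orderIsoOfFin hS).toEquiv.symm with hσdef
  have hkey : ∀ c, S.orderEmbOfFin hS (σ c) = f c := by
    intro c
    have h1 : (S.orderIsoOfFin hS) (σ c) = g c := by
      simp [hσdef]
    have h2 : ((S.orderIsoOfFin hS) (σ c) : Fin n) = f c := by rw [h1]
    rw [← h2, Finset.coe_orderIsoOfFin_apply]
  have hmat : (Matrix.of fun r c : Fin d => A r (ι c)).updateCol s (fun r => A r j)
      = (Matrix.of fun r c : Fin d => A r (S.orderEmbOfFin hS c)).submatrix id σ := by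
    ext r c
    rw [Matrix.updateCol_apply, Matrix.submatrix_apply, id]
    simp only [Matrix.of_apply]
    rw [hkey]
    by_cases h : c = s <;> simp [hfdef, h]
  have hdet : ((Matrix.of fun r c : Fin d => A r (ι c)).updateCol s (fun r => A r j)).det
      = (Equiv.Perm.sign σ : K) *
        (Matrix.of fun r c : Fin d => A r (S.orderEmbOfFin hS c)).det := by
    rw [hmat, Matrix.det_permute']
  have hminor : (Matrix.of fun r c : Fin d => A r (S.orderEmbOfFin hS c)).det = minorOn A S :=
    (minorOn_eq_det A S hS).symm
  have hmne : minorOn A S ≠ 0 := hA S hS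
  rcases Int.units_eq_one_or (Equiv.Perm.sign σ) with hsgn | hsgn <;>
    rw [hsgn] at hdet <;> simp only [Units.val_one, Units.val_neg, Int.cast_one,
      Int.cast_neg, one_mul, neg_one_mul] at hdet <;>
    rw [hdet, hminor]
  · exact ⟨hmne, rfl⟩
  · exact ⟨neg_ne_zero.mpr hmne, by rw [minorDeg]; exact ValDataAux.deg_neg V hmne⟩

end AuxMinor

/-- let `X ⊆ Kⁿ` be the row space of a `d × n` matrix `A` all of whose maximal
minors (Plücker coordinates) are nonzero, over an algebraically closed field with a
surjective real valuation.  Then the closure of the coordinatewise-degree image of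
`X ∩ (Kˣ)ⁿ` equals the intersection of the tropical hyperplanes `T(F_J)` over all
`(d+1)`-subsets `J` of `{1,…,n}`; in particular the tropical `d`-plane `deg(X)` is
determined by the tropical Plücker vector `w = deg ξ`. -/
theorem tropical_plane_eq_inter_circuits {K : Type} [Field K] [IsAlgClosed K]
    (V : ValData K) (d n : ℕ) (hd : 1 ≤ d) (hdn : d ≤ n)
    (A : Matrix (Fin d) (Fin n) K)
    (hA : ∀ S : Finset (Fin n), S.card = d → minorOn A S ≠ 0) :
    closure { p : Fin n → ℝ | ∃ u : Fin n → K,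
        u ∈ Submodule.span K (Set.range A) ∧ (∀ i, u i ≠ 0) ∧ p = fun i => V.deg (u i) }
      = ⋂ (J : Finset (Fin n)) (_ : J.card = d + 1), circuitHyp V A J := by
  apply Set.Subset.antisymm
  · apply closure_minimal
    · rintro p ⟨u, huspan, hunz, rfl⟩
      simp only [Set.mem_iInter]
      intro J hJ
      obtain ⟨c, hc⟩ := (Submodule.mem_span_range_iff_exists_fun K).mp huspan
      set emb := J.orderEmbOfFin hJ with hembdef
      set M : Matrix (Fin (d+1)) (Fin (d+1)) K :=
        Matrix.of (Fin.snoc (fun (i : Fin d) (c' : Fin (d+1)) => A i (emb c'))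
          (fun c' => u (emb c'))) with hM
      have hMlast : ∀ c', M (Fin.last d) c' = u (emb c') := by
        intro c'; simp [hM, Fin.snoc_last]
      have hMcast : ∀ (i : Fin d) c', M (Fin.castSucc i) c' = A i (emb c') := by
        intro i c'; simp [hM, Fin.snoc_castSucc]
      have hu : ∀ c', u (emb c') = ∑ i : Fin d, c i * A i (emb c') := by
        intro c'
        rw [← hc]
        simp [Finset.sum_apply]
      have hMdet : M.det = 0 := by
        apply Matrix.exists_vecMul_eq_zero_iff.mp
        refine ⟨(Fin.snoc c (-1) : Fin (d+1) → K), ?_, ?_⟩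
        · intro h0
          have := congrFun h0 (Fin.last d)
          simp [Fin.snoc_last] at this
        · funext c'
          show ∑ r, (Fin.snoc c (-1) : Fin (d+1) → K) r * M r c' = 0
          rw [Fin.sum_univ_castSucc]
          simp only [Fin.snoc_castSucc, Fin.snoc_last, hMlast]
          rw [hu c']
          simp only [hMcast]
          ring
      have hcard : ∀ c' : Fin (d+1), (J.erase (emb c')).card = d := by
        intro c'
        rw [Finset.card_erase_of_mem (Finset.orderEmbOfFin_mem _ _ _), hJ]
        omega
      have hsub : ∀ c' : Fin (d+1),
          (M.submatrix (Fin.last d).succAbove c'.succAbove).det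
            = minorOn A (J.erase (emb c')) := by
        intro c'
        rw [minorOn_eq_det A _ (hcard c')]
        congr 1
        ext r c''
        rw [Matrix.submatrix_apply, Fin.succAbove_last, hMcast]
        simp [orderEmbOfFin_erase J hJ c' (hcard c')]
        exact (congrArg (A r) (orderEmbOfFin_erase J hJ c' (hcard c') c'')).symm
      set v : Fin (d+1) → K := fun c' =>
        (-1 : K) ^ ((Fin.last d : ℕ) + (c' : ℕ)) *
          (u (emb c') * minorOn A (J.erase (emb c'))) with hvdef
      have hsum : ∑ c', v c' = 0 := by
        have hlap := Matrix.det_succ_row M (Fin.last d)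
        rw [hMdet] at hlap
        have : ∀ c' : Fin (d+1), v c'
            = (-1 : K) ^ ((Fin.last d : ℕ) + (c' : ℕ)) * M (Fin.last d) c' *
              (M.submatrix (Fin.last d).succAbove c'.succAbove).det := by
          intro c'
          rw [hMlast, hsub, hvdef, mul_assoc]
        rw [Finset.sum_congr rfl fun c' _ => this c']
        exact hlap.symm
      have hvne : ∀ c', v c' ≠ 0 := fun c' =>
        mul_ne_zero (pow_ne_zero _ (neg_ne_zero.mpr one_ne_zero))
          (mul_ne_zero (hunz _) (hA _ (hcard c')))
      have hvdeg : ∀ c', V.deg (v c')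
          = V.deg (u (emb c')) + minorDeg V A (J.erase (emb c')) := by
        intro c'
        rw [hvdef]
        rw [ValDataAux.deg_neg_one_pow_mul V (mul_ne_zero (hunz _) (hA _ (hcard c'))),
          V.deg_mul _ _ (hunz _) (hA _ (hcard c'))]
        rfl
      obtain ⟨c₁, -, c₂, -, hne, heq, hmin⟩ :=
        ValDataAux.exists_two_min V (T := (Finset.univ : Finset (Fin (d+1))))
          (by simp; exact hd) (fun s _ => hvne s) hsum
      refine ⟨emb c₁, Finset.orderEmbOfFin_mem _ _ _, emb c₂, Finset.orderEmbOfFin_mem _ _ _,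
        fun h => hne (emb.injective h), ?_, ?_⟩
      · rw [hvdeg, hvdeg] at heq
        show minorDeg V A (J.erase (emb c₁)) + V.deg (u (emb c₁))
          = minorDeg V A (J.erase (emb c₂)) + V.deg (u (emb c₂))
        linarith
      · intro m hm
        obtain ⟨c₃, hc₃⟩ := (J.orderIsoOfFin hJ).surjective ⟨m, hm⟩
        have hc₃' : emb c₃ = m := by
          rw [hembdef, ← Finset.coe_orderIsoOfFin_apply, hc₃]
        have h5 := hmin c₃ (Finset.mem_univ _)
        rw [hvdeg, hvdeg, hc₃'] at h5
        show minorDeg V A (J.erase (emb c₁)) + V.deg (u (emb c₁))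
          ≤ minorDeg V A (J.erase m) + V.deg (u m)
        linarith
    · refine isClosed_iInter fun J => isClosed_iInter fun hJ => ?_
      have hrw : circuitHyp V A J = ⋃ j ∈ J, ⋃ j' ∈ J,
          (({x : Fin n → ℝ | j ≠ j'} ∩
            {x | minorDeg V A (J.erase j) + x j = minorDeg V A (J.erase j') + x j'}) ∩
           ⋂ m ∈ J, {x | minorDeg V A (J.erase j) + x j ≤ minorDeg V A (J.erase m) + x m}) := by
        ext x
        simp only [circuitHyp, Set.mem_setOf_eq, Set.mem_iUnion, Set.mem_inter_iff,
          Set.mem_iInter]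
        constructor
        · rintro ⟨j, hj, j', hj', h1, h2, h3⟩
          exact ⟨j, hj, j', hj', ⟨⟨h1, h2⟩, h3⟩⟩
        · rintro ⟨j, hj, j', hj', ⟨⟨h1, h2⟩, h3⟩⟩
          exact ⟨j, hj, j', hj', h1, h2, h3⟩
      rw [hrw]
      refine Set.Finite.isClosed_biUnion J.finite_toSet fun j hj =>
        Set.Finite.isClosed_biUnion J.finite_toSet fun j' hj' => ?_
      refine IsClosed.inter (IsClosed.inter ?_ ?_) ?_
      · by_cases h : j = j' <;> simp [h, Set.setOf_false, Set.setOf_true]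
      · exact isClosed_eq (continuous_const.add (continuous_apply j))
          (continuous_const.add (continuous_apply j'))
      · exact isClosed_iInter fun m => isClosed_iInter fun hm =>
          isClosed_le (continuous_const.add (continuous_apply j))
            (continuous_const.add (continuous_apply m))
  · intro x hx
    simp only [Set.mem_iInter] at hx
    obtain ⟨I0, hI0sub, hI0card⟩ :=
      Finset.exists_subset_card_eq (s := (Finset.univ : Finset (Fin n))) (n := d) (by simpa using hdn)
    obtain ⟨I, hImem, hImin⟩ := Finset.exists_min_image
      ((Finset.univ : Finset (Finset (Fin n))).filter fun T => T.card = d)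
      (fun T => minorDeg V A T - ∑ i ∈ T, x i)
      ⟨I0, by simp [hI0card]⟩
    have hI : I.card = d := (Finset.mem_filter.mp hImem).2
    set ι := I.orderEmbOfFin hI with hιdef
    have hswap : ∀ j ∉ I, ∀ s : Fin d,
        x j + minorDeg V A I ≤ x (ι s) + minorDeg V A (insert j (I.erase (ι s))) := by
      intro j hj s
      have hjE : j ∉ I.erase (ι s) := fun h => hj (Finset.mem_of_mem_erase h)
      have hScard : (insert j (I.erase (ι s))).card = d := by
        rw [Finset.card_insert_of_notMem hjE,
          Finset.card_erase_of_mem (Finset.orderEmbOfFin_mem _ _ _), hI]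
        omega
      have h1 := hImin _ (Finset.mem_filter.mpr ⟨Finset.mem_univ _, hScard⟩)
      have h2 : ∑ i ∈ insert j (I.erase (ι s)), x i = x j + (∑ i ∈ I, x i - x (ι s)) := by
        rw [Finset.sum_insert hjE]
        have := Finset.sum_erase_add I x (Finset.orderEmbOfFin_mem I hI s)
        linarith
      rw [h2] at h1
      linarith
    have hcirc : ∀ j ∉ I, ∃ s : Fin d,
        x (ι s) + minorDeg V A (insert j (I.erase (ι s))) = x j + minorDeg V A I := by
      intro j hj
      have hJcard : (insert j I).card = d + 1 := by
        rw [Finset.card_insert_of_notMem hj, hI]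
      obtain ⟨j₁, hj₁, j₂, hj₂, hne, heq, hmin⟩ := hx (insert j I) hJcard
      have hvalI : ∀ m ∈ I, ((insert j I).erase m) = insert j (I.erase m) := fun m hm =>
        Finset.erase_insert_of_ne (fun h => hj (h ▸ hm))
      have hvalj : (insert j I).erase j = I := Finset.erase_insert hj
      have hkey : ∃ m ∈ I, minorDeg V A ((insert j I).erase m) + x m
          ≤ minorDeg V A ((insert j I).erase j) + x j := by
        rcases Finset.mem_insert.mp hj₁ with h1 | h1
        · rcases Finset.mem_insert.mp hj₂ with h2 | h2
          · exact absurd (h1.trans h2.symm) hne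
          · exact ⟨j₂, h2, by rw [← heq, h1]⟩
        · exact ⟨j₁, h1, hmin j (Finset.mem_insert_self j I)⟩
      obtain ⟨m, hm, hle⟩ := hkey
      obtain ⟨s, hs⟩ := (I.orderIsoOfFin hI).surjective ⟨m, hm⟩
      have hsm : ι s = m := by rw [hιdef, ← Finset.coe_orderIsoOfFin_apply, hs]
      refine ⟨s, ?_⟩
      have hge := hswap j hj s
      rw [hvalj, hvalI m hm] at hle
      rw [hsm] at hge
      rw [hsm]
      linarith
    rw [Metric.mem_closure_iff]
    intro ε hε
    set cc : Fin n → Fin d → ℝ := fun j s =>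
      x (ι s) - minorDeg V A I + minorDeg V A (insert j (I.erase (ι s))) with hccdef
    set Bad : Finset ℝ := Finset.image
      (fun p : Fin n × Fin d × Fin d =>
        (cc p.1 p.2.2 - cc p.1 p.2.1) / (((p.2.1 : ℕ) : ℝ) - ((p.2.2 : ℕ) : ℝ)))
      Finset.univ with hBaddef
    have hεd : (0:ℝ) < ε / (d+1) := by positivity
    obtain ⟨η, hηmem, hηBad⟩ := (Set.Ioo_infinite hεd).exists_notMem_finset Bad
    have hη0 : 0 < η := hηmem.1
    have hηd : η * (d+1) < ε := by
      have := hηmem.2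
      rw [lt_div_iff₀ (by positivity : (0:ℝ) < (d:ℝ)+1)] at this
      push_cast at this ⊢
      linarith
    choose t ht0 htd using fun s : Fin d => V.surj (x (ι s) - minorDeg V A I + η * s)
    set AI : Matrix (Fin d) (Fin d) K := Matrix.of fun r c : Fin d => A r (ι c) with hAIdef
    have hAIdet : AI.det = minorOn A I := (minorOn_eq_det A I hI).symm
    have hAIne : AI.det ≠ 0 := by rw [hAIdet]; exact hA I hI
    set u : Fin n → K := Matrix.vecMul t (AI.adjugate * A) with hudef
    have hvecMul : ∀ j, u j = ∑ s, t s * (AI.adjugate * A) s j := by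
      intro j
      rw [hudef, Matrix.vecMul, dotProduct]
    have hcol : ∀ (s : Fin d) (j : Fin n), (AI.adjugate * A) s j
        = (AI.updateCol s (fun r => A r j)).det := by
      intro s j
      rw [Matrix.mul_apply]
      have h1 : ∑ r, AI.adjugate s r * A r j = Matrix.mulVec AI.adjugate (fun r => A r j) s := rfl
      rw [h1, ← Matrix.cramer_eq_adjugate_mulVec, Matrix.cramer_apply]
    have humem : u ∈ Submodule.span K (Set.range A) := by
      have h1 : u = Matrix.vecMul (Matrix.vecMul t AI.adjugate) A := by
        rw [hudef, Matrix.vecMul_vecMul]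
      have h2 : Matrix.vecMul (Matrix.vecMul t AI.adjugate) A
          = ∑ r, (Matrix.vecMul t AI.adjugate) r • A r := by
        funext j
        rw [Matrix.vecMul, dotProduct, Finset.sum_apply]
        simp [mul_comm]
      rw [h1, h2]
      exact Submodule.sum_mem _ fun r _ =>
        Submodule.smul_mem _ _ (Submodule.subset_span ⟨r, rfl⟩)
    have huI : ∀ s' : Fin d, u (ι s') = t s' * AI.det := by
      intro s'
      rw [hvecMul]
      have h1 : ∀ s : Fin d, (AI.adjugate * A) s (ι s') = (AI.adjugate * AI) s s' := by
        intro s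
        rw [Matrix.mul_apply, Matrix.mul_apply]
        rfl
      rw [Finset.sum_congr rfl fun s _ => by rw [h1 s]]
      rw [Matrix.adjugate_mul]
      simp [Matrix.smul_apply, Matrix.one_apply, mul_ite, Finset.sum_ite_eq', mul_comm]
    have hdegI : ∀ s' : Fin d, u (ι s') ≠ 0 ∧ V.deg (u (ι s')) = x (ι s') + η * s' := by
      intro s'
      rw [huI s']
      refine ⟨mul_ne_zero (ht0 s') hAIne, ?_⟩
      rw [V.deg_mul _ _ (ht0 s') hAIne, htd s', hAIdet]
      show x (ι s') - minorDeg V A I + η * s' + minorDeg V A I = _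
      ring
    have hccge : ∀ j ∉ I, ∀ s : Fin d, x j ≤ cc j s := by
      intro j hj s
      have := hswap j hj s
      rw [hccdef]
      dsimp only
      linarith
    have hujdeg : ∀ j ∉ I, u j ≠ 0 ∧ x j ≤ V.deg (u j) ∧ V.deg (u j) ≤ x j + η * d := by
      intro j hj
      have hterm : ∀ s : Fin d, t s * (AI.updateCol s (fun r => A r j)).det ≠ 0 ∧
          V.deg (t s * (AI.updateCol s (fun r => A r j)).det) = cc j s + η * s := by
        intro s
        obtain ⟨hD0, hDdeg⟩ := deg_det_updateColumn V A hA I hI s j hj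
        refine ⟨mul_ne_zero (ht0 s) hD0, ?_⟩
        rw [V.deg_mul _ _ (ht0 s) hD0, htd s, hDdeg, hccdef]
        dsimp only
        ring
      have hdistinct : ∀ s ∈ (Finset.univ : Finset (Fin d)), ∀ s' ∈ Finset.univ, s ≠ s' →
          V.deg (t s * (AI.updateCol s (fun r => A r j)).det)
            ≠ V.deg (t s' * (AI.updateCol s' (fun r => A r j)).det) := by
        intro s _ s' _ hss heqd
        rw [(hterm s).2, (hterm s').2] at heqd
        have hcast : ((s : ℕ) : ℝ) ≠ ((s' : ℕ) : ℝ) := by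
          intro h
          exact hss (Fin.val_injective (Nat.cast_injective h))
        apply hηBad
        rw [hBaddef]
        apply Finset.mem_image.mpr
        refine ⟨(j, s, s'), Finset.mem_univ _, ?_⟩
        dsimp only
        rw [div_eq_iff (sub_ne_zero.mpr hcast)]
        ring_nf
        ring_nf at heqd
        linarith
      have huniv : (Finset.univ : Finset (Fin d)).Nonempty := ⟨⟨0, hd⟩, Finset.mem_univ _⟩
      obtain ⟨hne, hdeg⟩ := ValDataAux.deg_sum_strict V huniv
        (fun s _ => (hterm s).1) hdistinct
      have huj : u j = ∑ s, t s * (AI.updateCol s (fun r => A r j)).det := by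
        rw [hvecMul]
        exact Finset.sum_congr rfl fun s _ => by rw [hcol s j]
      rw [huj]
      refine ⟨hne, ?_, ?_⟩
      · rw [hdeg]
        apply Finset.le_inf'
        intro s _
        rw [(hterm s).2]
        have h1 := hccge j hj s
        have h2 : 0 ≤ η * s := by positivity
        linarith
      · rw [hdeg]
        obtain ⟨s₀, hs₀⟩ := hcirc j hj
        have hccs₀ : cc j s₀ = x j := by
          rw [hccdef]; dsimp only; linarith
        have h1 := Finset.inf'_le
          (fun s => V.deg (t s * (AI.updateCol s (fun r => A r j)).det))
          (Finset.mem_univ s₀)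
        rw [(hterm s₀).2] at h1
        have h2 : ((s₀ : ℕ) : ℝ) ≤ (d : ℝ) := by
          have := s₀.2
          exact_mod_cast this.le
        have h3 : η * s₀ ≤ η * d := by nlinarith
        linarith
    have hnz : ∀ i, u i ≠ 0 := by
      intro i
      by_cases hi : i ∈ I
      · obtain ⟨s, hs⟩ := (I.orderIsoOfFin hI).surjective ⟨i, hi⟩
        have hsi : ι s = i := by rw [hιdef, ← Finset.coe_orderIsoOfFin_apply, hs]
        rw [← hsi]
        exact (hdegI s).1
      · exact (hujdeg i hi).1
    refine ⟨(fun i => V.deg (u i)), ⟨u, humem, hnz, rfl⟩, ?_⟩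
    rw [dist_pi_lt_iff hε]
    intro i
    rw [Real.dist_eq]
    have hηdd : η * d < ε := by nlinarith
    by_cases hi : i ∈ I
    · obtain ⟨s, hs⟩ := (I.orderIsoOfFin hI).surjective ⟨i, hi⟩
      have hsi : ι s = i := by rw [hιdef, ← Finset.coe_orderIsoOfFin_apply, hs]
      rw [← hsi, (hdegI s).2]
      have h1 : 0 ≤ η * s := by positivity
      have h2 : (s : ℝ) ≤ (d : ℝ) := by
        have := s.2
        exact_mod_cast this.le
      rw [abs_sub_lt_iff]
      constructor <;> nlinarith
    · obtain ⟨-, h1, h2⟩ := hujdeg i hi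
      rw [abs_sub_lt_iff]
      constructor <;> nlinarith
end

section
/- Let K be an algebraically closed field with a surjective valuation deg : Kˣ → ℝ, let 1 ≤ d ≤ n, and let X, X′ ⊆ Kⁿ be two d-dimensional linear subspaces all of whose Plücker coordinates ξ_I, ξ′_I are nonzero. If the closures in ℝⁿ of the sets { (deg u₁,…,deg uₙ) : u ∈ X, all uᵢ ≠ 0 } and { (deg u₁,…,deg uₙ) : u ∈ X′, all uᵢ ≠ 0 } are equal, then there is a constant c ∈ ℝ with deg(ξ_I) − deg(ξ′_I) = c for every d-subset I of {1,…,n}. In other words, the map w ↦ L_w from the tropical Grassmannian (modulo the all-ones vector) to tropical d-planes in n-space is injective. -/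
open scoped Classical

open MvPolynomial

variable {K : Type*} [Field K]

namespace ValData

variable {K : Type*} [Field K]

lemma deg_one' (V : ValData K) : V.deg 1 = 0 := by
  have h := V.deg_mul 1 1 one_ne_zero one_ne_zero
  rw [mul_one] at h; linarith

lemma deg_neg_one (V : ValData K) : V.deg (-1 : K) = 0 := by
  have h := V.deg_mul (-1 : K) (-1) (by norm_num) (by norm_num)
  rw [neg_mul_neg, one_mul, V.deg_one'] at h; linarith

lemma deg_neg' (V : ValData K) {a : K} (ha : a ≠ 0) : V.deg (-a) = V.deg a := by
  have h := V.deg_mul (-1 : K) a (by norm_num) ha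
  rw [neg_one_mul, V.deg_neg_one, zero_add] at h
  exact h

lemma deg_add_left (V : ValData K) {a b : K} (ha : a ≠ 0) (hb : b ≠ 0)
    (h : V.deg a < V.deg b) : a + b ≠ 0 ∧ V.deg (a + b) = V.deg a := by
  have hab : a + b ≠ 0 := by
    intro h0
    have hb' : b = -a := by linear_combination h0
    rw [hb', V.deg_neg' ha] at h
    exact lt_irrefl _ h
  refine ⟨hab, le_antisymm ?_ ?_⟩
  · by_contra hlt
    push_neg at hlt
    have hsum : (a + b) + (-b) = a := by ring
    have h2 := V.deg_add (a + b) (-b) hab (neg_ne_zero.2 hb) (by rw [hsum]; exact ha)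
    rw [hsum, V.deg_neg' hb] at h2
    have h3 := lt_min hlt h
    have h4 : min (V.deg (a+b)) (V.deg b) ≤ V.deg a := h2
    linarith [lt_of_lt_of_le h3 h4]
  · have h3 := V.deg_add a b ha hb hab
    rw [min_eq_left h.le] at h3; exact h3

lemma deg_sum_ge (V : ValData K) {ι : Type*} (F : Finset ι) (f : ι → K) (m : ℝ)
    (h : ∀ c ∈ F, f c ≠ 0 → m ≤ V.deg (f c)) (hx : (∑ c ∈ F, f c) ≠ 0) :
    m ≤ V.deg (∑ c ∈ F, f c) := by
  classical
  induction F using Finset.cons_induction with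
  | empty => simp at hx
  | cons a F ha ih =>
    rw [Finset.sum_cons] at hx ⊢
    by_cases h1 : f a = 0
    · rw [h1, zero_add] at hx ⊢
      exact ih (fun c hc => h c (Finset.mem_cons_of_mem hc)) hx
    by_cases h2 : (∑ c ∈ F, f c) = 0
    · rw [h2, add_zero] at hx ⊢
      exact h a (Finset.mem_cons_self a F) h1
    · have hmin := V.deg_add (f a) _ h1 h2 hx
      have h1' := h a (Finset.mem_cons_self a F) h1
      have h2' := ih (fun c hc => h c (Finset.mem_cons_of_mem hc)) h2
      exact le_trans (le_min h1' h2') hmin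

end ValData

section PlueckerAux

variable {K : Type*} [Field K] {d n : ℕ}

/-- The enumeration of the columns of a `d`-subset `T` in increasing order. -/
noncomputable def colEnum (T : Finset (Fin n)) (h : T.card = d) (c : Fin d) : Fin n :=
  ((T.orderIsoOfFin h c : T) : Fin n)

lemma colEnum_mem (T : Finset (Fin n)) (h : T.card = d) (c : Fin d) :
    colEnum T h c ∈ T := (T.orderIsoOfFin h c).2

lemma colEnum_inj (T : Finset (Fin n)) (h : T.card = d) :
    Function.Injective (colEnum T h) := fun a b hab =>
  (T.orderIsoOfFin h).injective (Subtype.ext hab)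

lemma colEnum_surj (T : Finset (Fin n)) (h : T.card = d) {x : Fin n} (hx : x ∈ T) :
    ∃ c, colEnum T h c = x :=
  ⟨(T.orderIsoOfFin h).symm ⟨x, hx⟩, by simp [colEnum]⟩

/-- The square matrix of the columns of `A` in a `d`-subset `T`. -/
noncomputable def minorMat (A : Matrix (Fin d) (Fin n) K) (T : Finset (Fin n)) (h : T.card = d) :
    Matrix (Fin d) (Fin d) K := Matrix.of fun r c => A r (colEnum T h c)

lemma minorOn_eq (A : Matrix (Fin d) (Fin n) K) (T : Finset (Fin n)) (h : T.card = d) :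
    minorOn A T = (minorMat A T h).det := dif_pos h

/-- Dual family: `zvec c` is the vector in the row space whose `T`-coordinates are `δ_{c·}`. -/
noncomputable def zvec (A : Matrix (Fin d) (Fin n) K) (T : Finset (Fin n)) (h : T.card = d)
    (c : Fin d) : Fin n → K :=
  fun k => ∑ r, (minorMat A T h)⁻¹ c r * A r k

lemma zvec_mem (A : Matrix (Fin d) (Fin n) K) (T : Finset (Fin n)) (h : T.card = d) (c : Fin d) :
    zvec A T h c ∈ Submodule.span K (Set.range A) := by
  have : zvec A T h c = ∑ r, (minorMat A T h)⁻¹ c r • A r := by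
    funext k
    simp [zvec, Finset.sum_apply]
  rw [this]
  exact Submodule.sum_mem _ fun r _ =>
    Submodule.smul_mem _ _ (Submodule.subset_span ⟨r, rfl⟩)

lemma zvec_colEnum (A : Matrix (Fin d) (Fin n) K) (T : Finset (Fin n)) (h : T.card = d)
    (hdet : (minorMat A T h).det ≠ 0) (c c' : Fin d) :
    zvec A T h c (colEnum T h c') = (1 : Matrix (Fin d) (Fin d) K) c c' := by
  have hinv : (minorMat A T h)⁻¹ * minorMat A T h = 1 :=
    Matrix.nonsing_inv_mul _ (isUnit_iff_ne_zero.2 hdet)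
  calc zvec A T h c (colEnum T h c')
      = ((minorMat A T h)⁻¹ * minorMat A T h) c c' := by
        rw [Matrix.mul_apply]; rfl
    _ = (1 : Matrix (Fin d) (Fin d) K) c c' := by rw [hinv]

lemma repr_span (A : Matrix (Fin d) (Fin n) K) (T : Finset (Fin n)) (h : T.card = d)
    (hdet : (minorMat A T h).det ≠ 0) {u : Fin n → K}
    (hu : u ∈ Submodule.span K (Set.range A)) (k : Fin n) :
    u k = ∑ c, u (colEnum T h c) * zvec A T h c k := by
  obtain ⟨y, hy⟩ := (Submodule.mem_span_range_iff_exists_fun K).1 hu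
  have hinv : minorMat A T h * (minorMat A T h)⁻¹ = 1 :=
    Matrix.mul_nonsing_inv _ (isUnit_iff_ne_zero.2 hdet)
  have hu' : ∀ m : Fin n, u m = ∑ r, y r * A r m := by
    intro m; rw [← hy]; simp [Finset.sum_apply]
  have key : ∀ r : Fin d, ∑ c, minorMat A T h r c * zvec A T h c k = A r k := by
    intro r
    have : ∀ c, minorMat A T h r c * zvec A T h c k
        = ∑ r', minorMat A T h r c * ((minorMat A T h)⁻¹ c r' * A r' k) := by
      intro c; rw [zvec, Finset.mul_sum]
    rw [Finset.sum_congr rfl fun c _ => this c, Finset.sum_comm]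
    have : ∀ r' : Fin d, ∑ c, minorMat A T h r c * ((minorMat A T h)⁻¹ c r' * A r' k)
        = (minorMat A T h * (minorMat A T h)⁻¹) r r' * A r' k := by
      intro r'
      rw [Matrix.mul_apply, Finset.sum_mul]
      exact Finset.sum_congr rfl fun c _ => (mul_assoc _ _ _).symm
    rw [Finset.sum_congr rfl fun r' _ => this r', hinv]
    simp [Matrix.one_apply]
  calc u k = ∑ r, y r * A r k := hu' k
    _ = ∑ r, y r * ∑ c, minorMat A T h r c * zvec A T h c k := by
        exact Finset.sum_congr rfl fun r _ => by rw [key r]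
    _ = ∑ r, ∑ c, y r * (minorMat A T h r c * zvec A T h c k) := by
        exact Finset.sum_congr rfl fun r _ => Finset.mul_sum _ _ _
    _ = ∑ c, (∑ r, y r * minorMat A T h r c) * zvec A T h c k := by
        rw [Finset.sum_comm]
        exact Finset.sum_congr rfl fun c _ => by
          rw [Finset.sum_mul]
          exact Finset.sum_congr rfl fun r _ => (mul_assoc _ _ _).symm
    _ = ∑ c, u (colEnum T h c) * zvec A T h c k := by
        refine Finset.sum_congr rfl fun c _ => ?_
        rw [hu' (colEnum T h c)]
        rfl


/-- The cocircuit vector: `vvec k` is the determinant of the column matrix of `T`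
with the column at position `ci` replaced by the `k`-th column of `A`. -/
noncomputable def vvec (A : Matrix (Fin d) (Fin n) K) (T : Finset (Fin n)) (h : T.card = d)
    (ci : Fin d) : Fin n → K :=
  fun k => ((minorMat A T h).updateCol ci (fun r => A r k)).det

lemma vvec_mem (A : Matrix (Fin d) (Fin n) K) (T : Finset (Fin n)) (h : T.card = d)
    (ci : Fin d) : vvec A T h ci ∈ Submodule.span K (Set.range A) := by
  have hv : vvec A T h ci
      = ∑ r, (Matrix.cramer (minorMat A T h) (Pi.single r 1) ci) • A r := by
    funext k
    have h1 : (fun r => A r k) = ∑ r, (A r k) • (Pi.single r 1 : Fin d → K) := by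
      funext m
      rw [Finset.sum_apply]
      have hterm : ∀ r : Fin d, (A r k • (Pi.single r 1 : Fin d → K)) m = if m = r then A r k else 0 := by
        intro r
        by_cases hm : m = r <;> simp [Pi.single_apply, hm]
      rw [Finset.sum_congr rfl fun r _ => hterm r, Finset.sum_ite_eq]
      simp
    show ((minorMat A T h).updateCol ci fun r => A r k).det = _
    rw [← Matrix.cramer_apply, h1, map_sum]
    simp only [Finset.sum_apply, Pi.smul_apply, smul_eq_mul]
    refine Finset.sum_congr rfl fun r _ => ?_
    rw [map_smul]
    simp [mul_comm]
  rw [hv]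
  exact Submodule.sum_mem _ fun r _ =>
    Submodule.smul_mem _ _ (Submodule.subset_span ⟨r, rfl⟩)

lemma vvec_colEnum_self (A : Matrix (Fin d) (Fin n) K) (T : Finset (Fin n)) (h : T.card = d)
    (ci : Fin d) : vvec A T h ci (colEnum T h ci) = (minorMat A T h).det := by
  have : (fun r => A r (colEnum T h ci)) = fun r => minorMat A T h r ci := rfl
  rw [vvec, this, Matrix.updateCol_eq_self]

lemma vvec_colEnum_ne (A : Matrix (Fin d) (Fin n) K) (T : Finset (Fin n)) (h : T.card = d)
    {ci c' : Fin d} (hne : c' ≠ ci) : vvec A T h ci (colEnum T h c') = 0 := by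
  refine Matrix.det_zero_of_column_eq (Ne.symm hne) fun r => ?_
  rw [Matrix.updateCol_self, Matrix.updateCol_ne hne]
  rfl

lemma vvec_deg (V : ValData K) (A : Matrix (Fin d) (Fin n) K)
    (hA : ∀ S : Finset (Fin n), S.card = d → minorOn A S ≠ 0)
    (S : Finset (Fin n)) (i : Fin n) (hi : i ∉ S) (hcard : (insert i S).card = d)
    {ci : Fin d} (hci : colEnum (insert i S) hcard ci = i)
    (k : Fin n) (hk : k ∉ S) :
    vvec A (insert i S) hcard ci k ≠ 0 ∧
      V.deg (vvec A (insert i S) hcard ci k) = minorDeg V A (insert k S) := by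
  have hScard : S.card + 1 = d := by
    rw [← hcard, Finset.card_insert_of_notMem hi]
  have hT1 : (insert k S).card = d := by
    rw [Finset.card_insert_of_notMem hk]; exact hScard
  have hM1ne : (minorMat A (insert k S) hT1).det ≠ 0 := by
    rw [← minorOn_eq]; exact hA _ hT1
  set f : Fin d → Fin n := fun c => if c = ci then k else colEnum (insert i S) hcard c with hf
  have hmemS : ∀ c : Fin d, c ≠ ci → colEnum (insert i S) hcard c ∈ S := by
    intro c hc
    rcases Finset.mem_insert.1 (colEnum_mem (insert i S) hcard c) with h2 | h2
    · exact absurd (colEnum_inj _ _ (h2.trans hci.symm)) hc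
    · exact h2
  have hfmem : ∀ c, f c ∈ insert k S := by
    intro c
    by_cases hc : c = ci
    · rw [hf]; simp [hc]
    · rw [hf]; simp only [if_neg hc]
      exact Finset.mem_insert_of_mem (hmemS c hc)
  have hfinj : Function.Injective f := by
    intro a b hab
    by_cases ha : a = ci <;> by_cases hb2 : b = ci
    · rw [ha, hb2]
    · exfalso
      rw [hf] at hab; simp only [if_pos ha, if_neg hb2] at hab
      exact hk (hab ▸ hmemS b hb2)
    · exfalso
      rw [hf] at hab; simp only [if_pos hb2, if_neg ha] at hab
      exact hk (hab ▸ hmemS a ha)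
    · rw [hf] at hab; simp only [if_neg ha, if_neg hb2] at hab
      exact colEnum_inj _ _ hab
  have hgbij : Function.Bijective
      (fun c => ((insert k S).orderIsoOfFin hT1).symm ⟨f c, hfmem c⟩) := by
    rw [← Finite.injective_iff_bijective]
    intro a b hab
    apply hfinj
    have := congrArg (fun x => (((insert k S).orderIsoOfFin hT1) x : Fin n)) hab
    simpa using this
  set σ : Equiv.Perm (Fin d) := Equiv.ofBijective _ hgbij with hσ
  have hgcol : ∀ c, colEnum (insert k S) hT1 (σ c) = f c := by
    intro c
    show (((insert k S).orderIsoOfFin hT1)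
      (((insert k S).orderIsoOfFin hT1).symm ⟨f c, hfmem c⟩) : Fin n) = f c
    rw [OrderIso.apply_symm_apply]
  have hU : (minorMat A (insert i S) hcard).updateCol ci (fun r => A r k)
      = (minorMat A (insert k S) hT1).submatrix id σ := by
    ext r c
    simp only [Matrix.submatrix_apply, id_eq]
    have hM1 : (minorMat A (insert k S) hT1) r (σ c) = A r (f c) := by
      show A r (colEnum (insert k S) hT1 (σ c)) = A r (f c)
      rw [hgcol]
    rw [hM1]
    by_cases hc : c = ci
    · subst hc
      rw [Matrix.updateCol_self, hf]; simp
    · rw [Matrix.updateCol_ne hc, hf]; simp only [if_neg hc]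
      rfl
  have hdet : vvec A (insert i S) hcard ci k
      = (Equiv.Perm.sign σ : ℤ) * (minorMat A (insert k S) hT1).det := by
    rw [vvec, hU, Matrix.det_permute']
  have hmd : minorDeg V A (insert k S) = V.deg ((minorMat A (insert k S) hT1).det) := by
    rw [minorDeg, minorOn_eq A _ hT1]
  rcases Int.units_eq_one_or (Equiv.Perm.sign σ) with hs | hs
  · have hv : vvec A (insert i S) hcard ci k = (minorMat A (insert k S) hT1).det := by
      rw [hdet, hs]; norm_num
    rw [hv, hmd]
    exact ⟨hM1ne, rfl⟩
  · have hv : vvec A (insert i S) hcard ci k = -(minorMat A (insert k S) hT1).det := by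
      rw [hdet, hs]; push_cast; ring
    rw [hv, hmd]
    exact ⟨neg_ne_zero.2 hM1ne, V.deg_neg' hM1ne⟩


lemma pluecker_char (V : ValData K) (A : Matrix (Fin d) (Fin n) K)
    (hA : ∀ S : Finset (Fin n), S.card = d → minorOn A S ≠ 0)
    (S : Finset (Fin n)) (i j : Fin n) (hi : i ∉ S) (hj : j ∉ S) (hij : i ≠ j)
    (hcard : (insert i S).card = d) (r : ℝ) :
    (∃ b : ℝ, ∀ M : ℝ, ∃ p ∈ closure { p : Fin n → ℝ | ∃ u : Fin n → K,
          u ∈ Submodule.span K (Set.range A) ∧ (∀ k, u k ≠ 0) ∧ p = fun k => V.deg (u k) },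
        (∀ s ∈ S, M ≤ p s) ∧ p i ≤ b ∧ p i - p j = r)
      ↔ r = minorDeg V A (insert i S) - minorDeg V A (insert j S) := by
  set X := { p : Fin n → ℝ | ∃ u : Fin n → K,
      u ∈ Submodule.span K (Set.range A) ∧ (∀ k, u k ≠ 0) ∧ p = fun k => V.deg (u k) } with hX
  have hdetN : (minorMat A (insert i S) hcard).det ≠ 0 := by
    rw [← minorOn_eq]; exact hA _ hcard
  obtain ⟨ci, hci⟩ := colEnum_surj (insert i S) hcard (Finset.mem_insert_self i S)
  set v := vvec A (insert i S) hcard ci with hv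
  have hvm : v ∈ Submodule.span K (Set.range A) := vvec_mem A (insert i S) hcard ci
  have hvdeg : ∀ k ∉ S, v k ≠ 0 ∧ V.deg (v k) = minorDeg V A (insert k S) :=
    fun k hk => vvec_deg V A hA S i hi hcard hci k hk
  have hmemS : ∀ c : Fin d, c ≠ ci → colEnum (insert i S) hcard c ∈ S := by
    intro c hc
    rcases Finset.mem_insert.1 (colEnum_mem (insert i S) hcard c) with h2 | h2
    · exact absurd (colEnum_inj _ _ (h2.trans hci.symm)) hc
    · exact h2
  have hvS : ∀ s ∈ S, v s = 0 := by
    intro s hs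
    obtain ⟨cs, hcs⟩ := colEnum_surj (insert i S) hcard (Finset.mem_insert_of_mem hs)
    have hcsne : cs ≠ ci := by
      intro hcc
      rw [hcc, hci] at hcs
      exact hi (hcs ▸ hs)
    rw [hv, ← hcs]
    exact vvec_colEnum_ne A _ hcard hcsne
  set z := zvec A (insert i S) hcard with hz
  have hzm : ∀ c, z c ∈ Submodule.span K (Set.range A) := fun c => zvec_mem A _ hcard c
  have hrepr : ∀ u ∈ Submodule.span K (Set.range A), ∀ k,
      u k = ∑ c, u (colEnum (insert i S) hcard c) * z c k :=
    fun u hu k => repr_span A (insert i S) hcard hdetN hu k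
  have hzc : ∀ c c' : Fin d, z c (colEnum (insert i S) hcard c') = if c = c' then 1 else 0 := by
    intro c c'
    rw [hz, zvec_colEnum A _ hcard hdetN c c', Matrix.one_apply]
  have hvi_ne : v i ≠ 0 := (hvdeg i hi).1
  have hvj_ne : v j ≠ 0 := (hvdeg j hj).1
  have hvj : v j = v i * z ci j := by
    have h0 := hrepr v hvm j
    have hsum : ∑ c, v (colEnum (insert i S) hcard c) * z c j
        = v (colEnum (insert i S) hcard ci) * z ci j := by
      refine Finset.sum_eq_single ci (fun b _ hb => ?_) (fun h => absurd (Finset.mem_univ ci) h)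
      rw [hvS _ (hmemS b hb), zero_mul]
    rw [h0, hsum, hci]
  have hzcij_ne : z ci j ≠ 0 := by
    intro h0
    rw [h0, mul_zero] at hvj
    exact hvj_ne hvj
  set δ := V.deg (v i) - V.deg (v j) with hδ
  have hzdeg : V.deg (z ci j) = -δ := by
    have h1 := V.deg_mul (v i) (z ci j) hvi_ne hzcij_ne
    rw [← hvj] at h1
    rw [hδ]; linarith
  have hdelta : δ = minorDeg V A (insert i S) - minorDeg V A (insert j S) := by
    rw [hδ, (hvdeg i hi).2, (hvdeg j hj).2]
  haveI : Nonempty (Fin d) := ⟨ci⟩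
  haveI : Nonempty (Fin n) := ⟨i⟩
  -- Existence of degree points with huge S-coordinates and prescribed i,j coordinates
  have exist : ∀ M : ℝ, ∃ p ∈ X, (∀ s ∈ S, M ≤ p s) ∧ p i = V.deg (v i) ∧ p j = V.deg (v j) := by
    intro M
    set w : Fin n → K := ∑ c ∈ Finset.univ.erase ci, z c with hw
    have hwm : w ∈ Submodule.span K (Set.range A) :=
      Submodule.sum_mem _ fun c _ => hzm c
    have hws : ∀ s ∈ S, w s = 1 := by
      intro s hs
      obtain ⟨cs, hcs⟩ := colEnum_surj (insert i S) hcard (Finset.mem_insert_of_mem hs)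
      have hcsne : cs ≠ ci := by
        intro hcc
        rw [hcc, hci] at hcs
        exact hi (hcs ▸ hs)
      rw [hw, Finset.sum_apply, ← hcs]
      rw [Finset.sum_congr rfl fun c _ => hzc c cs, Finset.sum_ite_eq']
      simp [Finset.mem_erase, hcsne]
    set R := max M (1 + Finset.univ.sup' Finset.univ_nonempty
      (fun k : Fin n => V.deg (v k) - V.deg (w k))) with hR
    obtain ⟨cc, hcc0, hccR⟩ := V.surj R
    set u : Fin n → K := fun k => v k + cc * w k with hu
    have hcoord : ∀ k ∉ S, u k ≠ 0 ∧ V.deg (u k) = V.deg (v k) := by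
      intro k hk
      have hvk := (hvdeg k hk).1
      by_cases hwk : w k = 0
      · rw [hu]
        simp only
        rw [hwk, mul_zero, add_zero]
        exact ⟨hvk, rfl⟩
      · have hcwk : cc * w k ≠ 0 := mul_ne_zero hcc0 hwk
        have hlt : V.deg (v k) < V.deg (cc * w k) := by
          rw [V.deg_mul cc (w k) hcc0 hwk, hccR]
          have hsup : V.deg (v k) - V.deg (w k)
              ≤ Finset.univ.sup' Finset.univ_nonempty
                (fun k : Fin n => V.deg (v k) - V.deg (w k)) :=
            Finset.le_sup' (f := fun k : Fin n => V.deg (v k) - V.deg (w k)) (Finset.mem_univ k)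
          have h2 : 1 + (V.deg (v k) - V.deg (w k)) ≤ R :=
            le_trans (by linarith) (le_max_right _ _)
          linarith
        exact V.deg_add_left hvk hcwk hlt
    have hcoordS : ∀ s ∈ S, u s = cc := by
      intro s hs
      rw [hu]
      simp only
      rw [hvS s hs, hws s hs, mul_one, zero_add]
    have humem : u ∈ Submodule.span K (Set.range A) := by
      have hu2 : u = v + cc • w := rfl
      rw [hu2]
      exact Submodule.add_mem _ hvm (Submodule.smul_mem _ cc hwm)
    refine ⟨fun k => V.deg (u k), ⟨u, humem, ?_, rfl⟩, ?_, ?_, ?_⟩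
    · intro k
      by_cases hk : k ∈ S
      · rw [hcoordS k hk]; exact hcc0
      · exact (hcoord k hk).1
    · intro s hs
      show M ≤ V.deg (u s)
      rw [hcoordS s hs, hccR]
      exact le_max_left _ _
    · exact (hcoord i hi).2
    · exact (hcoord j hj).2
  -- Rigidity
  have rigid : ∀ B : ℝ, ∃ M0 : ℝ, ∀ u : Fin n → K, u ∈ Submodule.span K (Set.range A) →
      (∀ k, u k ≠ 0) → (∀ s ∈ S, M0 ≤ V.deg (u s)) → V.deg (u i) ≤ B →
      V.deg (u i) - V.deg (u j) = δ := by
    intro B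
    set C := Finset.univ.inf' Finset.univ_nonempty (fun c : Fin d => V.deg (z c j)) with hC
    refine ⟨B - δ - C + 1, fun u hu hunz hus hui => ?_⟩
    have hterm : u j = u i * z ci j
        + ∑ c ∈ Finset.univ.erase ci, u (colEnum (insert i S) hcard c) * z c j := by
      rw [hrepr u hu j, ← Finset.add_sum_erase _ _ (Finset.mem_univ ci), hci]
    set t := u i * z ci j with ht
    set rest := ∑ c ∈ Finset.univ.erase ci, u (colEnum (insert i S) hcard c) * z c j with hrest
    have htne : t ≠ 0 := mul_ne_zero (hunz i) hzcij_ne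
    have hdegt : V.deg t = V.deg (u i) - δ := by
      rw [ht, V.deg_mul _ _ (hunz i) hzcij_ne, hzdeg]
      ring
    have hdegt_le : V.deg t ≤ B - δ := by
      rw [hdegt]; linarith
    have hrest_ge : rest ≠ 0 → (B - δ + 1) ≤ V.deg rest := by
      intro h0
      refine V.deg_sum_ge _ _ _ ?_ h0
      intro c hcmem hcne0
      have hc : c ≠ ci := (Finset.mem_erase.1 hcmem).1
      have hz0 : z c j ≠ 0 := right_ne_zero_of_mul hcne0
      have h1 : C ≤ V.deg (z c j) := Finset.inf'_le _ (Finset.mem_univ c)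
      have h2 : B - δ - C + 1 ≤ V.deg (u (colEnum (insert i S) hcard c)) := hus _ (hmemS c hc)
      rw [V.deg_mul _ _ (left_ne_zero_of_mul hcne0) hz0]
      linarith
    by_cases h0 : rest = 0
    · have huj : V.deg (u j) = V.deg t := by rw [hterm, h0, add_zero]
      rw [huj, hdegt]; ring
    · have hlt : V.deg t < V.deg rest :=
        lt_of_le_of_lt (by linarith) (lt_of_lt_of_le (by linarith) (hrest_ge h0))
      have hadd := (V.deg_add_left htne h0 hlt).2
      have huj : V.deg (u j) = V.deg t := by rw [hterm]; exact hadd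
      rw [huj, hdegt]; ring
  rw [← hdelta]
  constructor
  · rintro ⟨b, hb⟩
    by_contra hne
    have hη0 : 0 < |r - δ| := abs_pos.2 (sub_ne_zero.2 hne)
    set ε := min (|r - δ| / 4) 1 with hε
    have hε0 : 0 < ε := lt_min (by linarith) one_pos
    have hε1 : ε ≤ 1 := min_le_right _ _
    have hε4 : ε ≤ |r - δ| / 4 := min_le_left _ _
    obtain ⟨M0, hM0⟩ := rigid (b + 1)
    obtain ⟨p, hpX, hpS, hpi, hpij⟩ := hb (M0 + 1)
    obtain ⟨q, hqX, hq⟩ := Metric.mem_closure_iff.1 hpX ε hε0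
    obtain ⟨u, hu, hunz, hqe⟩ := hqX
    have hcoordq : ∀ k, |p k - q k| < ε := fun k =>
      lt_of_le_of_lt (by rw [← Real.dist_eq]; exact dist_le_pi_dist p q k) hq
    have hqu : ∀ k, q k = V.deg (u k) := fun k => by rw [hqe]
    have h1 : ∀ s ∈ S, M0 ≤ V.deg (u s) := by
      intro s hs
      have ha := hcoordq s
      have hb2 := hpS s hs
      rw [← hqu s]
      have : |p s - q s| < 1 := lt_of_lt_of_le ha hε1
      have h3 := abs_lt.1 this
      linarith [h3.1, h3.2]
    have h2 : V.deg (u i) ≤ b + 1 := by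
      rw [← hqu i]
      have h3 := abs_lt.1 (lt_of_lt_of_le (hcoordq i) hε1)
      linarith [h3.1, h3.2]
    have h3 := hM0 u hu hunz h1 h2
    have heqr : r - δ = (p i - q i) - (p j - q j) := by
      rw [← hpij]
      have : q i - q j = δ := by rw [hqu i, hqu j]; exact h3
      linarith [this]
    have habs : |r - δ| ≤ |p i - q i| + |p j - q j| := by
      rw [heqr]
      exact abs_sub _ _
    have hi' := hcoordq i
    have hj' := hcoordq j
    have : |r - δ| < 2 * ε := by linarith
    linarith
  · intro hr
    refine ⟨V.deg (v i), fun M => ?_⟩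
    obtain ⟨p, hpX, hpS, hpi, hpj⟩ := exist M
    exact ⟨p, subset_closure hpX, hpS, le_of_eq hpi, by rw [hpi, hpj, hr]⟩

end PlueckerAux

/-- let `X, X′ ⊆ Kⁿ` be the row spaces of `d × n` matrices `A, A′` all of whose
maximal minors (Plücker coordinates) are nonzero, over an algebraically closed field with a
surjective real valuation.  If the closures of the coordinatewise-degree images of
`X ∩ (Kˣ)ⁿ` and `X′ ∩ (Kˣ)ⁿ` coincide, then the tropical Plücker vectors `deg ξ` and
`deg ξ′` differ by a constant; i.e. the map `w ↦ L_w` from the tropical Grassmannian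
(modulo the all-ones vector) to tropical `d`-planes is injective. -/
theorem tropical_plane_determines_pluecker_vector {K : Type} [Field K] [IsAlgClosed K]
    (V : ValData K) (d n : ℕ) (hd : 1 ≤ d) (hdn : d ≤ n)
    (A A' : Matrix (Fin d) (Fin n) K)
    (hA : ∀ S : Finset (Fin n), S.card = d → minorOn A S ≠ 0)
    (hA' : ∀ S : Finset (Fin n), S.card = d → minorOn A' S ≠ 0)
    (heq : closure { p : Fin n → ℝ | ∃ u : Fin n → K,
          u ∈ Submodule.span K (Set.range A) ∧ (∀ i, u i ≠ 0) ∧ p = fun i => V.deg (u i) }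
        = closure { p : Fin n → ℝ | ∃ u : Fin n → K,
          u ∈ Submodule.span K (Set.range A') ∧ (∀ i, u i ≠ 0) ∧ p = fun i => V.deg (u i) }) :
    ∃ c : ℝ, ∀ S : Finset (Fin n), S.card = d →
      minorDeg V A S - minorDeg V A' S = c := by

  classical
  have adjacent : ∀ (S : Finset (Fin n)) (i j : Fin n), i ∉ S → j ∉ S → i ≠ j →
      (insert i S).card = d →
      minorDeg V A (insert i S) - minorDeg V A' (insert i S)
        = minorDeg V A (insert j S) - minorDeg V A' (insert j S) := by
    intro S i j hi' hj' hij hcard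
    have h1 := pluecker_char V A hA S i j hi' hj' hij hcard
    have h2 := pluecker_char V A' hA' S i j hi' hj' hij hcard
    have hP := (h2 (minorDeg V A' (insert i S) - minorDeg V A' (insert j S))).2 rfl
    rw [← heq] at hP
    have h3 := (h1 _).1 hP
    linarith [h3]
  have key : ∀ (m : ℕ) (I J : Finset (Fin n)), I.card = d → J.card = d → (I \ J).card = m →
      minorDeg V A I - minorDeg V A' I = minorDeg V A J - minorDeg V A' J := by
    intro m
    induction m with
    | zero =>
      intro I J hI hJ hm
      have hIJ : I = J := by
        have hsub : I ⊆ J := by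
          rw [← Finset.sdiff_eq_empty_iff_subset]
          exact Finset.card_eq_zero.1 hm
        exact Finset.eq_of_subset_of_card_le hsub (by rw [hI, hJ])
      rw [hIJ]
    | succ m ih =>
      intro I J hI hJ hm
      have hne : (I \ J).Nonempty := by
        rw [← Finset.card_pos, hm]; omega
      obtain ⟨i, hiIJ⟩ := hne
      have hJI : (J \ I).Nonempty := by
        rw [← Finset.card_pos, Finset.card_sdiff_comm (by rw [hI, hJ]), hm]; omega
      obtain ⟨j, hjJI⟩ := hJI
      have hiI : i ∈ I := (Finset.mem_sdiff.1 hiIJ).1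
      have hiJ : i ∉ J := (Finset.mem_sdiff.1 hiIJ).2
      have hjJ : j ∈ J := (Finset.mem_sdiff.1 hjJI).1
      have hjI : j ∉ I := (Finset.mem_sdiff.1 hjJI).2
      set S := I.erase i with hS
      have hins : insert i S = I := Finset.insert_erase hiI
      have hiS : i ∉ S := Finset.notMem_erase i I
      have hjS : j ∉ S := fun h => hjI ((Finset.erase_subset _ _) h)
      have hij : i ≠ j := fun h => hiJ (h ▸ hjJ)
      have hcardI : (insert i S).card = d := by rw [hins, hI]
      have hadj := adjacent S i j hiS hjS hij hcardI
      rw [hins] at hadj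
      have hJScard : (insert j S).card = d := by
        rw [Finset.card_insert_of_notMem hjS, hS, Finset.card_erase_of_mem hiI, hI]
        omega
      have hsd : ((insert j S) \ J).card = m := by
        rw [Finset.insert_sdiff_of_mem _ hjJ]
        have hSJ : S \ J = (I \ J).erase i := by
          ext x
          simp only [Finset.mem_sdiff, Finset.mem_erase, hS]
          tauto
        rw [hSJ, Finset.card_erase_of_mem hiIJ, hm]
        omega
      have hstep := ih (insert j S) J hJScard hJ hsd
      rw [hadj, hstep]
  obtain ⟨I0, -, hI0⟩ := Finset.exists_subset_card_eq (s := (Finset.univ : Finset (Fin n))) (n := d)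
    (by rw [Finset.card_univ, Fintype.card_fin]; exact hdn)
  exact ⟨minorDeg V A I0 - minorDeg V A' I0, fun S hS => key ((S \ I0).card) S I0 hS hI0 rfl⟩
end

section
/- Let k be a field of characteristic different from 2, and let I_{3,7} be the Plücker ideal in k[p_{ijk} : 1 ≤ i < j < k ≤ 7]. Define w ∈ ℝ^{C(7,3)} by w_T = 1 if T is one of the seven Fano-plane triples {1,2,4}, {2,3,5}, {3,4,6}, {4,5,7}, {1,5,6}, {2,6,7}, {1,3,7}, and w_T = 0 otherwise. Then the initial ideal in_w(I_{3,7}) contains the monomial p_{123} p_{467} p_{567}. In particular, w does not lie in the tropical Grassmannian G_{3,7} over k. -/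
open scoped Classical

open MvPolynomial

/-- The `w`-weight of an exponent vector `a`, namely `∑ aᵢ wᵢ`. -/
noncomputable def expWeight {σ : Type*} (w : σ → ℝ) (a : σ →₀ ℕ) : ℝ :=
  a.sum fun i e => (e : ℝ) * w i

/-- The initial form of `f` with respect to the weight vector `w`: the sum of the terms of `f`
of minimal `w`-weight. -/
noncomputable def initForm {σ : Type*} {k : Type*} [CommRing k] (w : σ → ℝ)
    (f : MvPolynomial σ k) : MvPolynomial σ k :=
  ∑ a ∈ f.support.filter (fun a => ∀ b ∈ f.support, expWeight w a ≤ expWeight w b),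
    monomial a (f.coeff a)

/-- The initial ideal `in_w(I) = ⟨in_w(f) : f ∈ I⟩`. -/
noncomputable def initIdeal {σ : Type*} {k : Type*} [CommRing k] (w : σ → ℝ)
    (I : Ideal (MvPolynomial σ k)) : Ideal (MvPolynomial σ k) :=
  Ideal.span { g | ∃ f ∈ I, g = initForm w f }

/-- A monomial: a nonzero scalar multiple of a product of variables. -/
def IsMonomial {σ : Type*} {k : Type*} [CommRing k] (g : MvPolynomial σ k) : Prop :=
  ∃ (a : σ →₀ ℕ) (c : k), c ≠ 0 ∧ g = monomial a c

/-- An ideal is monomial-free if it contains no monomial. -/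
def MonomialFree {σ : Type*} {k : Type*} [CommRing k] (I : Ideal (MvPolynomial σ k)) : Prop :=
  ∀ g ∈ I, ¬ IsMonomial g

/-- The Plücker (algebra) map, sending the variable `p_S` (for a `d`-subset `S` of `{0,…,n-1}`)
to the `d × d` minor on the columns indexed by `S` of a `d × n` matrix of indeterminates. -/
noncomputable def pluckerMap (k : Type*) [CommRing k] (d n : ℕ) :
    MvPolynomial {s : Finset (Fin n) // s.card = d} k →ₐ[k] MvPolynomial (Fin d × Fin n) k :=
  aeval fun S =>
    (Matrix.of fun r c : Fin d => (X (r, ((S.1.orderIsoOfFin S.2 c : S.1) : Fin n)) :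
       MvPolynomial (Fin d × Fin n) k)).det

/-- The Plücker ideal `I_{d,n}`: the ideal of algebraic relations among the maximal
minors of a generic `d × n` matrix. -/
noncomputable def pluckerIdeal (k : Type*) [CommRing k] (d n : ℕ) :
    Ideal (MvPolynomial {s : Finset (Fin n) // s.card = d} k) :=
  RingHom.ker (pluckerMap k d n)

/-- The variable index `p_{ijk}` for a `3`-element subset `{i,j,k}` of `{0,…,6}`
(representing `{1,…,7}`). -/
def tri7 (i j l : Fin 7) (h : ({i, j, l} : Finset (Fin 7)).card = 3) :
    {s : Finset (Fin 7) // s.card = 3} := ⟨{i, j, l}, h⟩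

/-- The Fano weight vector: `w_T = 1` if `T` is one of the seven lines
`{1,2,4}, {2,3,5}, {3,4,6}, {4,5,7}, {1,5,6}, {2,6,7}, {1,3,7}` of the Fano plane
(indices shifted to `{0,…,6}`), and `w_T = 0` otherwise. -/
noncomputable def wFano (S : {s : Finset (Fin 7) // s.card = 3}) : ℝ :=
  if S.1 ∈ ({{0, 1, 3}, {1, 2, 4}, {2, 3, 5}, {3, 4, 6}, {0, 4, 5}, {1, 5, 6}, {0, 2, 6}} :
      Finset (Finset (Fin 7))) then 1
  else 0

private abbrev PS : Type := {s : Finset (Fin 7) // s.card = 3}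

private def S012 : PS := tri7 0 1 2 (by decide)
private def S013 : PS := tri7 0 1 3 (by decide)
private def S014 : PS := tri7 0 1 4 (by decide)
private def S015 : PS := tri7 0 1 5 (by decide)
private def S016 : PS := tri7 0 1 6 (by decide)
private def S023 : PS := tri7 0 2 3 (by decide)
private def S024 : PS := tri7 0 2 4 (by decide)
private def S025 : PS := tri7 0 2 5 (by decide)
private def S026 : PS := tri7 0 2 6 (by decide)
private def S035 : PS := tri7 0 3 5 (by decide)
private def S036 : PS := tri7 0 3 6 (by decide)
private def S045 : PS := tri7 0 4 5 (by decide)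
private def S046 : PS := tri7 0 4 6 (by decide)
private def S056 : PS := tri7 0 5 6 (by decide)
private def S123 : PS := tri7 1 2 3 (by decide)
private def S124 : PS := tri7 1 2 4 (by decide)
private def S125 : PS := tri7 1 2 5 (by decide)
private def S126 : PS := tri7 1 2 6 (by decide)
private def S135 : PS := tri7 1 3 5 (by decide)
private def S136 : PS := tri7 1 3 6 (by decide)
private def S145 : PS := tri7 1 4 5 (by decide)
private def S146 : PS := tri7 1 4 6 (by decide)
private def S156 : PS := tri7 1 5 6 (by decide)
private def S235 : PS := tri7 2 3 5 (by decide)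
private def S236 : PS := tri7 2 3 6 (by decide)
private def S245 : PS := tri7 2 4 5 (by decide)
private def S246 : PS := tri7 2 4 6 (by decide)
private def S256 : PS := tri7 2 5 6 (by decide)
private def S345 : PS := tri7 3 4 5 (by decide)
private def S346 : PS := tri7 3 4 6 (by decide)
private def S356 : PS := tri7 3 5 6 (by decide)
private def S456 : PS := tri7 4 5 6 (by decide)

private lemma wv012 : wFano S012 = 0 := by
  rw [wFano]; rw [if_neg (by decide)]
private lemma wv013 : wFano S013 = 1 := by
  rw [wFano]; rw [if_pos (by decide)]
private lemma wv014 : wFano S014 = 0 := by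
  rw [wFano]; rw [if_neg (by decide)]
private lemma wv015 : wFano S015 = 0 := by
  rw [wFano]; rw [if_neg (by decide)]
private lemma wv016 : wFano S016 = 0 := by
  rw [wFano]; rw [if_neg (by decide)]
private lemma wv023 : wFano S023 = 0 := by
  rw [wFano]; rw [if_neg (by decide)]
private lemma wv024 : wFano S024 = 0 := by
  rw [wFano]; rw [if_neg (by decide)]
private lemma wv025 : wFano S025 = 0 := by
  rw [wFano]; rw [if_neg (by decide)]
private lemma wv026 : wFano S026 = 1 := by
  rw [wFano]; rw [if_pos (by decide)]
private lemma wv035 : wFano S035 = 0 := by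
  rw [wFano]; rw [if_neg (by decide)]
private lemma wv036 : wFano S036 = 0 := by
  rw [wFano]; rw [if_neg (by decide)]
private lemma wv045 : wFano S045 = 1 := by
  rw [wFano]; rw [if_pos (by decide)]
private lemma wv046 : wFano S046 = 0 := by
  rw [wFano]; rw [if_neg (by decide)]
private lemma wv056 : wFano S056 = 0 := by
  rw [wFano]; rw [if_neg (by decide)]
private lemma wv123 : wFano S123 = 0 := by
  rw [wFano]; rw [if_neg (by decide)]
private lemma wv124 : wFano S124 = 1 := by
  rw [wFano]; rw [if_pos (by decide)]
private lemma wv125 : wFano S125 = 0 := by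
  rw [wFano]; rw [if_neg (by decide)]
private lemma wv126 : wFano S126 = 0 := by
  rw [wFano]; rw [if_neg (by decide)]
private lemma wv135 : wFano S135 = 0 := by
  rw [wFano]; rw [if_neg (by decide)]
private lemma wv136 : wFano S136 = 0 := by
  rw [wFano]; rw [if_neg (by decide)]
private lemma wv145 : wFano S145 = 0 := by
  rw [wFano]; rw [if_neg (by decide)]
private lemma wv146 : wFano S146 = 0 := by
  rw [wFano]; rw [if_neg (by decide)]
private lemma wv156 : wFano S156 = 1 := by
  rw [wFano]; rw [if_pos (by decide)]
private lemma wv235 : wFano S235 = 1 := by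
  rw [wFano]; rw [if_pos (by decide)]
private lemma wv236 : wFano S236 = 0 := by
  rw [wFano]; rw [if_neg (by decide)]
private lemma wv245 : wFano S245 = 0 := by
  rw [wFano]; rw [if_neg (by decide)]
private lemma wv246 : wFano S246 = 0 := by
  rw [wFano]; rw [if_neg (by decide)]
private lemma wv256 : wFano S256 = 0 := by
  rw [wFano]; rw [if_neg (by decide)]
private lemma wv345 : wFano S345 = 0 := by
  rw [wFano]; rw [if_neg (by decide)]
private lemma wv346 : wFano S346 = 1 := by
  rw [wFano]; rw [if_pos (by decide)]
private lemma wv356 : wFano S356 = 0 := by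
  rw [wFano]; rw [if_neg (by decide)]
private lemma wv456 : wFano S456 = 0 := by
  rw [wFano]; rw [if_neg (by decide)]

private noncomputable def e2 (A B : PS) : PS →₀ ℕ := Finsupp.single A 1 + Finsupp.single B 1

private lemma expWeight_add {σ : Type*} (w : σ → ℝ) (a b : σ →₀ ℕ) :
    expWeight w (a + b) = expWeight w a + expWeight w b := by
  classical
  unfold expWeight
  rw [Finsupp.sum_add_index]
  · intro i _; simp
  · intro i _ e1 e2; push_cast; ring

private lemma expWeight_single {σ : Type*} (w : σ → ℝ) (i : σ) (n : ℕ) :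
    expWeight w (Finsupp.single i n) = n * w i := by
  unfold expWeight
  rw [Finsupp.sum_single_index]
  simp

private lemma expWeight_e2 (w : PS → ℝ) (A B : PS) :
    expWeight w (e2 A B) = w A + w B := by
  rw [e2, expWeight_add, expWeight_single, expWeight_single]
  push_cast; ring

private lemma e2_ne {A B C D : PS} (x : PS)
    (h : ((if A = x then 1 else 0) + (if B = x then 1 else 0) : ℕ) ≠
      (if C = x then 1 else 0) + (if D = x then 1 else 0)) : e2 A B ≠ e2 C D := by
  intro he
  apply h
  have := DFunLike.congr_fun he x
  simpa [e2, Finsupp.single_apply] using this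

section CharTwo
variable {k : Type} [Field k]

private lemma XX (A B : PS) : (monomial (e2 A B) (1 : k)) = X A * X B := by
  rw [e2, show (X A : MvPolynomial PS k) = monomial (Finsupp.single A 1) 1 from rfl,
    show (X B : MvPolynomial PS k) = monomial (Finsupp.single B 1) 1 from rfl,
    monomial_mul, one_mul]

private lemma XXn (A B : PS) : (monomial (e2 A B) (-1 : k)) = -(X A * X B) := by
  rw [← XX]
  exact _root_.map_neg (monomial (e2 A B) : k →ₗ[k] MvPolynomial PS k) 1

private lemma supp1 (e1 : PS →₀ ℕ) (c1 : k) (h1 : c1 ≠ 0) :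
    (monomial e1 c1 : MvPolynomial PS k).support = {e1} := by
  rw [support_monomial, if_neg h1]

private lemma supp2 (e1 e2 : PS →₀ ℕ) (c1 c2 : k) (h : e1 ≠ e2) (h1 : c1 ≠ 0) (h2 : c2 ≠ 0) :
    (monomial e1 c1 + monomial e2 c2 : MvPolynomial PS k).support = {e1, e2} := by
  have hd : Disjoint (monomial e1 c1 : MvPolynomial PS k).support (monomial e2 c2).support := by
    rw [supp1 e1 c1 h1, supp1 e2 c2 h2]; simp [h, h.symm]
  have hs : (monomial e1 c1 + monomial e2 c2 : MvPolynomial PS k).support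
      = (monomial e1 c1 : MvPolynomial PS k).support ∪ (monomial e2 c2 : MvPolynomial PS k).support :=
    Finsupp.support_add_eq hd
  rw [hs, supp1 e1 c1 h1, supp1 e2 c2 h2, ← Finset.insert_eq]

private lemma supp3 (e1 e2 e3 : PS →₀ ℕ) (c1 c2 c3 : k) (h12 : e1 ≠ e2) (h13 : e1 ≠ e3)
    (h23 : e2 ≠ e3) (h1 : c1 ≠ 0) (h2 : c2 ≠ 0) (h3 : c3 ≠ 0) :
    (monomial e1 c1 + (monomial e2 c2 + monomial e3 c3) : MvPolynomial PS k).support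
      = {e1, e2, e3} := by
  have hd : Disjoint (monomial e1 c1 : MvPolynomial PS k).support
      (monomial e2 c2 + monomial e3 c3 : MvPolynomial PS k).support := by
    rw [supp1 e1 c1 h1, supp2 e2 e3 c2 c3 h23 h2 h3]; simp [h12, h13, h12.symm, h13.symm]
  have hs : (monomial e1 c1 + (monomial e2 c2 + monomial e3 c3) : MvPolynomial PS k).support
      = (monomial e1 c1 : MvPolynomial PS k).support
        ∪ (monomial e2 c2 + monomial e3 c3 : MvPolynomial PS k).support :=
    Finsupp.support_add_eq hd
  rw [hs, supp1 e1 c1 h1, supp2 e2 e3 c2 c3 h23 h2 h3, ← Finset.insert_eq]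

private lemma supp4 (e1 e2 e3 e4 : PS →₀ ℕ) (c1 c2 c3 c4 : k) (h12 : e1 ≠ e2) (h13 : e1 ≠ e3)
    (h14 : e1 ≠ e4) (h23 : e2 ≠ e3) (h24 : e2 ≠ e4) (h34 : e3 ≠ e4)
    (h1 : c1 ≠ 0) (h2 : c2 ≠ 0) (h3 : c3 ≠ 0) (h4 : c4 ≠ 0) :
    (monomial e1 c1 + (monomial e2 c2 + (monomial e3 c3 + monomial e4 c4)) :
      MvPolynomial PS k).support = {e1, e2, e3, e4} := by
  have hd : Disjoint (monomial e1 c1 : MvPolynomial PS k).support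
      (monomial e2 c2 + (monomial e3 c3 + monomial e4 c4) : MvPolynomial PS k).support := by
    rw [supp1 e1 c1 h1, supp3 e2 e3 e4 c2 c3 c4 h23 h24 h34 h2 h3 h4]
    simp [h12, h13, h14, h12.symm, h13.symm, h14.symm]
  have hs : (monomial e1 c1 + (monomial e2 c2 + (monomial e3 c3 + monomial e4 c4)) :
      MvPolynomial PS k).support
      = (monomial e1 c1 : MvPolynomial PS k).support
        ∪ (monomial e2 c2 + (monomial e3 c3 + monomial e4 c4) : MvPolynomial PS k).support :=
    Finsupp.support_add_eq hd
  rw [hs, supp1 e1 c1 h1, supp3 e2 e3 e4 c2 c3 c4 h23 h24 h34 h2 h3 h4, ← Finset.insert_eq]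

private lemma initForm_add_right (w : PS → ℝ) (f g : MvPolynomial PS k) (hf : f ≠ 0)
    (hdisj : Disjoint f.support g.support)
    (hconst : ∀ a ∈ f.support, ∀ b ∈ f.support, expWeight w a = expWeight w b)
    (hlt : ∀ a ∈ f.support, ∀ b ∈ g.support, expWeight w a < expWeight w b) :
    initForm w (f + g) = f := by
  classical
  have hsupp : (f + g).support = f.support ∪ g.support := Finsupp.support_add_eq hdisj
  have hfil : ((f + g).support.filter
      (fun a => ∀ b ∈ (f + g).support, expWeight w a ≤ expWeight w b)) = f.support := by
    ext a
    simp only [Finset.mem_filter, hsupp, Finset.mem_union]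
    constructor
    · rintro ⟨ha | ha, hall⟩
      · exact ha
      · obtain ⟨a0, ha0⟩ := MvPolynomial.support_nonempty.2 hf
        exact absurd (hall a0 (Or.inl ha0)) (not_le.2 (hlt a0 ha0 a ha))
    · intro ha
      refine ⟨Or.inl ha, ?_⟩
      rintro b (hb | hb)
      · exact le_of_eq (hconst a ha b hb)
      · exact le_of_lt (hlt a ha b hb)
  rw [initForm, hfil]
  have hco : ∀ a ∈ f.support, MvPolynomial.coeff a (f + g) = MvPolynomial.coeff a f := by
    intro a ha
    rw [MvPolynomial.coeff_add,
      MvPolynomial.notMem_support_iff.1 (fun hb => (Finset.disjoint_left.1 hdisj ha hb)),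
      add_zero]
  rw [Finset.sum_congr rfl fun a ha => by rw [hco a ha]]
  exact MvPolynomial.support_sum_monomial_coeff f

private lemma matOf3 (a b c : Fin 7) (hab : a < b) (hbc : b < c)
    (h : ({a,b,c} : Finset (Fin 7)).card = 3) (i : Fin 3) :
    (((({a,b,c} : Finset (Fin 7)).orderIsoOfFin h i :
      {x // x ∈ ({a,b,c} : Finset (Fin 7))})) : Fin 7) = ![a,b,c] i := by
  rw [Finset.coe_orderIsoOfFin_apply]
  rw [Finset.orderEmbOfFin_unique h (f := ![a,b,c])]
  · intro j; fin_cases j <;> simp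
  · intro x y hxy
    fin_cases x <;> fin_cases y <;> simp_all <;> omega

private noncomputable def mm (a b c : Fin 7) : MvPolynomial (Fin 3 × Fin 7) k :=
  X (0,a) * X (1,b) * X (2,c) - X (0,a) * X (1,c) * X (2,b) - X (0,b) * X (1,a) * X (2,c)
  + X (0,b) * X (1,c) * X (2,a) + X (0,c) * X (1,a) * X (2,b) - X (0,c) * X (1,b) * X (2,a)

private lemma pm_X (a b c : Fin 7) (hab : a < b) (hbc : b < c)
    (h : ({a,b,c} : Finset (Fin 7)).card = 3) :
    pluckerMap k 3 7 (X ⟨{a,b,c}, h⟩) = mm a b c := by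
  simp only [pluckerMap, aeval_X]
  rw [Matrix.det_fin_three]
  simp only [Matrix.of_apply, matOf3 a b c hab hbc h]
  simp [mm]

private lemma hsB0 : ((monomial (e2 S012 S356) (1 : k) + (monomial (e2 S015 S236) (1 : k))) : MvPolynomial PS k).support = {e2 S012 S356, e2 S015 S236} :=
  supp2 (e2 S012 S356) (e2 S015 S236) 1 1 (e2_ne S012 (by decide)) one_ne_zero one_ne_zero

private lemma hsR0 : ((monomial (e2 S013 S256) ((-1) : k) + (monomial (e2 S016 S235) ((-1) : k))) : MvPolynomial PS k).support = {e2 S013 S256, e2 S016 S235} :=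
  supp2 (e2 S013 S256) (e2 S016 S235) (-1) (-1) (e2_ne S013 (by decide)) (neg_ne_zero.mpr one_ne_zero) (neg_ne_zero.mpr one_ne_zero)

private lemma hq0 : ((monomial (e2 S012 S356) (1 : k) + (monomial (e2 S015 S236) (1 : k))) + (monomial (e2 S013 S256) ((-1) : k) + (monomial (e2 S016 S235) ((-1) : k))) : MvPolynomial PS k) ∈ pluckerIdeal k 3 7 := by
  have hx : ((monomial (e2 S012 S356) (1 : k) + (monomial (e2 S015 S236) (1 : k))) + (monomial (e2 S013 S256) ((-1) : k) + (monomial (e2 S016 S235) ((-1) : k))) : MvPolynomial PS k) = X S012 * X S356 + X S015 * X S236 - X S013 * X S256 - X S016 * X S235 := by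
    simp only [XX, XXn]; ring
  rw [pluckerIdeal, RingHom.mem_ker, hx]
  simp only [S012, S013, S015, S016, S235, S236, S256, S356, tri7]
  simp only [map_add, map_sub, map_mul, map_neg]
  simp only [pm_X 0 1 2 (by decide) (by decide), pm_X 0 1 3 (by decide) (by decide), pm_X 0 1 5 (by decide) (by decide), pm_X 0 1 6 (by decide) (by decide), pm_X 2 3 5 (by decide) (by decide), pm_X 2 3 6 (by decide) (by decide), pm_X 2 5 6 (by decide) (by decide), pm_X 3 5 6 (by decide) (by decide)]
  simp only [mm]
  ring

private lemma hi0 :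
    initForm wFano ((monomial (e2 S012 S356) (1 : k) + (monomial (e2 S015 S236) (1 : k))) + (monomial (e2 S013 S256) ((-1) : k) + (monomial (e2 S016 S235) ((-1) : k))) : MvPolynomial PS k) = (monomial (e2 S012 S356) (1 : k) + (monomial (e2 S015 S236) (1 : k))) := by
  apply initForm_add_right
  · intro h0
    have h1 := congrArg MvPolynomial.support h0
    rw [hsB0] at h1
    simp at h1
  · rw [hsB0, hsR0, Finset.disjoint_left]
    intro a ha hb
    simp only [Finset.mem_insert, Finset.mem_singleton] at ha hb
    rcases ha with rfl|rfl <;> rcases hb with h|h <;>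
    first
      | exact (e2_ne S012 (by decide)) h
      | exact (e2_ne S012 (by decide)) h
      | exact (e2_ne S013 (by decide)) h
      | exact (e2_ne S015 (by decide)) h
  · intro a ha b hb
    rw [hsB0] at ha
    rw [hsB0] at hb
    simp only [Finset.mem_insert, Finset.mem_singleton] at ha hb
    rcases ha with rfl|rfl <;> rcases hb with rfl|rfl <;>
      simp only [expWeight_e2, wv012, wv013, wv015, wv016, wv235, wv236, wv256, wv356] <;> norm_num
  · intro a ha b hb
    rw [hsB0] at ha
    rw [hsR0] at hb
    simp only [Finset.mem_insert, Finset.mem_singleton] at ha hb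
    rcases ha with rfl|rfl <;> rcases hb with rfl|rfl <;>
      simp only [expWeight_e2, wv012, wv013, wv015, wv016, wv235, wv236, wv256, wv356] <;> norm_num

private lemma hB0 :
    ((monomial (e2 S012 S356) (1 : k) + (monomial (e2 S015 S236) (1 : k))) : MvPolynomial PS k) ∈ initIdeal wFano (pluckerIdeal k 3 7) :=
  Ideal.subset_span ⟨_, hq0, (hi0).symm⟩

private lemma hsB1 : ((monomial (e2 S012 S456) (1 : k) + (monomial (e2 S014 S256) ((-1) : k) + (monomial (e2 S015 S246) (1 : k) + (monomial (e2 S016 S245) ((-1) : k))))) : MvPolynomial PS k).support = {e2 S012 S456, e2 S014 S256, e2 S015 S246, e2 S016 S245} :=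
  supp4 (e2 S012 S456) (e2 S014 S256) (e2 S015 S246) (e2 S016 S245) 1 (-1) 1 (-1) (e2_ne S012 (by decide)) (e2_ne S012 (by decide)) (e2_ne S012 (by decide)) (e2_ne S014 (by decide)) (e2_ne S014 (by decide)) (e2_ne S015 (by decide)) one_ne_zero (neg_ne_zero.mpr one_ne_zero) one_ne_zero (neg_ne_zero.mpr one_ne_zero)

private lemma hq1 : ((monomial (e2 S012 S456) (1 : k) + (monomial (e2 S014 S256) ((-1) : k) + (monomial (e2 S015 S246) (1 : k) + (monomial (e2 S016 S245) ((-1) : k))))) + ((0 : MvPolynomial PS k)) : MvPolynomial PS k) ∈ pluckerIdeal k 3 7 := by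
  have hx : ((monomial (e2 S012 S456) (1 : k) + (monomial (e2 S014 S256) ((-1) : k) + (monomial (e2 S015 S246) (1 : k) + (monomial (e2 S016 S245) ((-1) : k))))) + ((0 : MvPolynomial PS k)) : MvPolynomial PS k) = X S012 * X S456 - X S014 * X S256 + X S015 * X S246 - X S016 * X S245 := by
    simp only [XX, XXn]; ring
  rw [pluckerIdeal, RingHom.mem_ker, hx]
  simp only [S012, S014, S015, S016, S245, S246, S256, S456, tri7]
  simp only [map_add, map_sub, map_mul, map_neg]
  simp only [pm_X 0 1 2 (by decide) (by decide), pm_X 0 1 4 (by decide) (by decide), pm_X 0 1 5 (by decide) (by decide), pm_X 0 1 6 (by decide) (by decide), pm_X 2 4 5 (by decide) (by decide), pm_X 2 4 6 (by decide) (by decide), pm_X 2 5 6 (by decide) (by decide), pm_X 4 5 6 (by decide) (by decide)]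
  simp only [mm]
  ring

private lemma hi1 :
    initForm wFano ((monomial (e2 S012 S456) (1 : k) + (monomial (e2 S014 S256) ((-1) : k) + (monomial (e2 S015 S246) (1 : k) + (monomial (e2 S016 S245) ((-1) : k))))) + ((0 : MvPolynomial PS k)) : MvPolynomial PS k) = (monomial (e2 S012 S456) (1 : k) + (monomial (e2 S014 S256) ((-1) : k) + (monomial (e2 S015 S246) (1 : k) + (monomial (e2 S016 S245) ((-1) : k))))) := by
  apply initForm_add_right
  · intro h0
    have h1 := congrArg MvPolynomial.support h0
    rw [hsB1] at h1
    simp at h1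
  · rw [hsB1]
    simp
  · intro a ha b hb
    rw [hsB1] at ha
    rw [hsB1] at hb
    simp only [Finset.mem_insert, Finset.mem_singleton] at ha hb
    rcases ha with rfl|rfl|rfl|rfl <;> rcases hb with rfl|rfl|rfl|rfl <;>
      simp only [expWeight_e2, wv012, wv014, wv015, wv016, wv245, wv246, wv256, wv456] <;> norm_num
  · intro a ha b hb
    simp only [MvPolynomial.support_zero, Finset.notMem_empty] at hb

private lemma hB1 :
    ((monomial (e2 S012 S456) (1 : k) + (monomial (e2 S014 S256) ((-1) : k) + (monomial (e2 S015 S246) (1 : k) + (monomial (e2 S016 S245) ((-1) : k))))) : MvPolynomial PS k) ∈ initIdeal wFano (pluckerIdeal k 3 7) :=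
  Ideal.subset_span ⟨_, hq1, (hi1).symm⟩

private lemma hsB2 : ((monomial (e2 S014 S356) ((-1) : k) + (monomial (e2 S016 S345) ((-1) : k))) : MvPolynomial PS k).support = {e2 S014 S356, e2 S016 S345} :=
  supp2 (e2 S014 S356) (e2 S016 S345) (-1) (-1) (e2_ne S014 (by decide)) (neg_ne_zero.mpr one_ne_zero) (neg_ne_zero.mpr one_ne_zero)

private lemma hsR2 : ((monomial (e2 S013 S456) (1 : k) + (monomial (e2 S015 S346) (1 : k))) : MvPolynomial PS k).support = {e2 S013 S456, e2 S015 S346} :=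
  supp2 (e2 S013 S456) (e2 S015 S346) 1 1 (e2_ne S013 (by decide)) one_ne_zero one_ne_zero

private lemma hq2 : ((monomial (e2 S014 S356) ((-1) : k) + (monomial (e2 S016 S345) ((-1) : k))) + (monomial (e2 S013 S456) (1 : k) + (monomial (e2 S015 S346) (1 : k))) : MvPolynomial PS k) ∈ pluckerIdeal k 3 7 := by
  have hx : ((monomial (e2 S014 S356) ((-1) : k) + (monomial (e2 S016 S345) ((-1) : k))) + (monomial (e2 S013 S456) (1 : k) + (monomial (e2 S015 S346) (1 : k))) : MvPolynomial PS k) = -(X S014 * X S356) - X S016 * X S345 + X S013 * X S456 + X S015 * X S346 := by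
    simp only [XX, XXn]; ring
  rw [pluckerIdeal, RingHom.mem_ker, hx]
  simp only [S013, S014, S015, S016, S345, S346, S356, S456, tri7]
  simp only [map_add, map_sub, map_mul, map_neg]
  simp only [pm_X 0 1 3 (by decide) (by decide), pm_X 0 1 4 (by decide) (by decide), pm_X 0 1 5 (by decide) (by decide), pm_X 0 1 6 (by decide) (by decide), pm_X 3 4 5 (by decide) (by decide), pm_X 3 4 6 (by decide) (by decide), pm_X 3 5 6 (by decide) (by decide), pm_X 4 5 6 (by decide) (by decide)]
  simp only [mm]
  ring

private lemma hi2 :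
    initForm wFano ((monomial (e2 S014 S356) ((-1) : k) + (monomial (e2 S016 S345) ((-1) : k))) + (monomial (e2 S013 S456) (1 : k) + (monomial (e2 S015 S346) (1 : k))) : MvPolynomial PS k) = (monomial (e2 S014 S356) ((-1) : k) + (monomial (e2 S016 S345) ((-1) : k))) := by
  apply initForm_add_right
  · intro h0
    have h1 := congrArg MvPolynomial.support h0
    rw [hsB2] at h1
    simp at h1
  · rw [hsB2, hsR2, Finset.disjoint_left]
    intro a ha hb
    simp only [Finset.mem_insert, Finset.mem_singleton] at ha hb
    rcases ha with rfl|rfl <;> rcases hb with h|h <;>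
    first
      | exact (e2_ne S013 (by decide)) h
      | exact (e2_ne S014 (by decide)) h
      | exact (e2_ne S013 (by decide)) h
      | exact (e2_ne S015 (by decide)) h
  · intro a ha b hb
    rw [hsB2] at ha
    rw [hsB2] at hb
    simp only [Finset.mem_insert, Finset.mem_singleton] at ha hb
    rcases ha with rfl|rfl <;> rcases hb with rfl|rfl <;>
      simp only [expWeight_e2, wv013, wv014, wv015, wv016, wv345, wv346, wv356, wv456] <;> norm_num
  · intro a ha b hb
    rw [hsB2] at ha
    rw [hsR2] at hb
    simp only [Finset.mem_insert, Finset.mem_singleton] at ha hb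
    rcases ha with rfl|rfl <;> rcases hb with rfl|rfl <;>
      simp only [expWeight_e2, wv013, wv014, wv015, wv016, wv345, wv346, wv356, wv456] <;> norm_num

private lemma hB2 :
    ((monomial (e2 S014 S356) ((-1) : k) + (monomial (e2 S016 S345) ((-1) : k))) : MvPolynomial PS k) ∈ initIdeal wFano (pluckerIdeal k 3 7) :=
  Ideal.subset_span ⟨_, hq2, (hi2).symm⟩

private lemma hsB3 : ((monomial (e2 S012 S356) (1 : k) + (monomial (e2 S025 S136) ((-1) : k))) : MvPolynomial PS k).support = {e2 S012 S356, e2 S025 S136} :=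
  supp2 (e2 S012 S356) (e2 S025 S136) 1 (-1) (e2_ne S012 (by decide)) one_ne_zero (neg_ne_zero.mpr one_ne_zero)

private lemma hsR3 : ((monomial (e2 S023 S156) (1 : k) + (monomial (e2 S026 S135) (1 : k))) : MvPolynomial PS k).support = {e2 S023 S156, e2 S026 S135} :=
  supp2 (e2 S023 S156) (e2 S026 S135) 1 1 (e2_ne S023 (by decide)) one_ne_zero one_ne_zero

private lemma hq3 : ((monomial (e2 S012 S356) (1 : k) + (monomial (e2 S025 S136) ((-1) : k))) + (monomial (e2 S023 S156) (1 : k) + (monomial (e2 S026 S135) (1 : k))) : MvPolynomial PS k) ∈ pluckerIdeal k 3 7 := by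
  have hx : ((monomial (e2 S012 S356) (1 : k) + (monomial (e2 S025 S136) ((-1) : k))) + (monomial (e2 S023 S156) (1 : k) + (monomial (e2 S026 S135) (1 : k))) : MvPolynomial PS k) = X S012 * X S356 - X S025 * X S136 + X S023 * X S156 + X S026 * X S135 := by
    simp only [XX, XXn]; ring
  rw [pluckerIdeal, RingHom.mem_ker, hx]
  simp only [S012, S023, S025, S026, S135, S136, S156, S356, tri7]
  simp only [map_add, map_sub, map_mul, map_neg]
  simp only [pm_X 0 1 2 (by decide) (by decide), pm_X 0 2 3 (by decide) (by decide), pm_X 0 2 5 (by decide) (by decide), pm_X 0 2 6 (by decide) (by decide), pm_X 1 3 5 (by decide) (by decide), pm_X 1 3 6 (by decide) (by decide), pm_X 1 5 6 (by decide) (by decide), pm_X 3 5 6 (by decide) (by decide)]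
  simp only [mm]
  ring

private lemma hi3 :
    initForm wFano ((monomial (e2 S012 S356) (1 : k) + (monomial (e2 S025 S136) ((-1) : k))) + (monomial (e2 S023 S156) (1 : k) + (monomial (e2 S026 S135) (1 : k))) : MvPolynomial PS k) = (monomial (e2 S012 S356) (1 : k) + (monomial (e2 S025 S136) ((-1) : k))) := by
  apply initForm_add_right
  · intro h0
    have h1 := congrArg MvPolynomial.support h0
    rw [hsB3] at h1
    simp at h1
  · rw [hsB3, hsR3, Finset.disjoint_left]
    intro a ha hb
    simp only [Finset.mem_insert, Finset.mem_singleton] at ha hb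
    rcases ha with rfl|rfl <;> rcases hb with h|h <;>
    first
      | exact (e2_ne S012 (by decide)) h
      | exact (e2_ne S012 (by decide)) h
      | exact (e2_ne S023 (by decide)) h
      | exact (e2_ne S025 (by decide)) h
  · intro a ha b hb
    rw [hsB3] at ha
    rw [hsB3] at hb
    simp only [Finset.mem_insert, Finset.mem_singleton] at ha hb
    rcases ha with rfl|rfl <;> rcases hb with rfl|rfl <;>
      simp only [expWeight_e2, wv012, wv023, wv025, wv026, wv135, wv136, wv156, wv356] <;> norm_num
  · intro a ha b hb
    rw [hsB3] at ha
    rw [hsR3] at hb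
    simp only [Finset.mem_insert, Finset.mem_singleton] at ha hb
    rcases ha with rfl|rfl <;> rcases hb with rfl|rfl <;>
      simp only [expWeight_e2, wv012, wv023, wv025, wv026, wv135, wv136, wv156, wv356] <;> norm_num

private lemma hB3 :
    ((monomial (e2 S012 S356) (1 : k) + (monomial (e2 S025 S136) ((-1) : k))) : MvPolynomial PS k) ∈ initIdeal wFano (pluckerIdeal k 3 7) :=
  Ideal.subset_span ⟨_, hq3, (hi3).symm⟩

private lemma hsB4 : ((monomial (e2 S012 S456) (1 : k) + (monomial (e2 S025 S146) ((-1) : k))) : MvPolynomial PS k).support = {e2 S012 S456, e2 S025 S146} :=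
  supp2 (e2 S012 S456) (e2 S025 S146) 1 (-1) (e2_ne S012 (by decide)) one_ne_zero (neg_ne_zero.mpr one_ne_zero)

private lemma hsR4 : ((monomial (e2 S024 S156) (1 : k) + (monomial (e2 S026 S145) (1 : k))) : MvPolynomial PS k).support = {e2 S024 S156, e2 S026 S145} :=
  supp2 (e2 S024 S156) (e2 S026 S145) 1 1 (e2_ne S024 (by decide)) one_ne_zero one_ne_zero

private lemma hq4 : ((monomial (e2 S012 S456) (1 : k) + (monomial (e2 S025 S146) ((-1) : k))) + (monomial (e2 S024 S156) (1 : k) + (monomial (e2 S026 S145) (1 : k))) : MvPolynomial PS k) ∈ pluckerIdeal k 3 7 := by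
  have hx : ((monomial (e2 S012 S456) (1 : k) + (monomial (e2 S025 S146) ((-1) : k))) + (monomial (e2 S024 S156) (1 : k) + (monomial (e2 S026 S145) (1 : k))) : MvPolynomial PS k) = X S012 * X S456 - X S025 * X S146 + X S024 * X S156 + X S026 * X S145 := by
    simp only [XX, XXn]; ring
  rw [pluckerIdeal, RingHom.mem_ker, hx]
  simp only [S012, S024, S025, S026, S145, S146, S156, S456, tri7]
  simp only [map_add, map_sub, map_mul, map_neg]
  simp only [pm_X 0 1 2 (by decide) (by decide), pm_X 0 2 4 (by decide) (by decide), pm_X 0 2 5 (by decide) (by decide), pm_X 0 2 6 (by decide) (by decide), pm_X 1 4 5 (by decide) (by decide), pm_X 1 4 6 (by decide) (by decide), pm_X 1 5 6 (by decide) (by decide), pm_X 4 5 6 (by decide) (by decide)]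
  simp only [mm]
  ring

private lemma hi4 :
    initForm wFano ((monomial (e2 S012 S456) (1 : k) + (monomial (e2 S025 S146) ((-1) : k))) + (monomial (e2 S024 S156) (1 : k) + (monomial (e2 S026 S145) (1 : k))) : MvPolynomial PS k) = (monomial (e2 S012 S456) (1 : k) + (monomial (e2 S025 S146) ((-1) : k))) := by
  apply initForm_add_right
  · intro h0
    have h1 := congrArg MvPolynomial.support h0
    rw [hsB4] at h1
    simp at h1
  · rw [hsB4, hsR4, Finset.disjoint_left]
    intro a ha hb
    simp only [Finset.mem_insert, Finset.mem_singleton] at ha hb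
    rcases ha with rfl|rfl <;> rcases hb with h|h <;>
    first
      | exact (e2_ne S012 (by decide)) h
      | exact (e2_ne S012 (by decide)) h
      | exact (e2_ne S024 (by decide)) h
      | exact (e2_ne S025 (by decide)) h
  · intro a ha b hb
    rw [hsB4] at ha
    rw [hsB4] at hb
    simp only [Finset.mem_insert, Finset.mem_singleton] at ha hb
    rcases ha with rfl|rfl <;> rcases hb with rfl|rfl <;>
      simp only [expWeight_e2, wv012, wv024, wv025, wv026, wv145, wv146, wv156, wv456] <;> norm_num
  · intro a ha b hb
    rw [hsB4] at ha
    rw [hsR4] at hb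
    simp only [Finset.mem_insert, Finset.mem_singleton] at ha hb
    rcases ha with rfl|rfl <;> rcases hb with rfl|rfl <;>
      simp only [expWeight_e2, wv012, wv024, wv025, wv026, wv145, wv146, wv156, wv456] <;> norm_num

private lemma hB4 :
    ((monomial (e2 S012 S456) (1 : k) + (monomial (e2 S025 S146) ((-1) : k))) : MvPolynomial PS k) ∈ initIdeal wFano (pluckerIdeal k 3 7) :=
  Ideal.subset_span ⟨_, hq4, (hi4).symm⟩

private lemma hsB5 : ((monomial (e2 S035 S126) ((-1) : k) + (monomial (e2 S036 S125) (1 : k))) : MvPolynomial PS k).support = {e2 S035 S126, e2 S036 S125} :=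
  supp2 (e2 S035 S126) (e2 S036 S125) (-1) 1 (e2_ne S035 (by decide)) (neg_ne_zero.mpr one_ne_zero) one_ne_zero

private lemma hsR5 : ((monomial (e2 S013 S256) (1 : k) + (monomial (e2 S023 S156) ((-1) : k))) : MvPolynomial PS k).support = {e2 S013 S256, e2 S023 S156} :=
  supp2 (e2 S013 S256) (e2 S023 S156) 1 (-1) (e2_ne S013 (by decide)) one_ne_zero (neg_ne_zero.mpr one_ne_zero)

private lemma hq5 : ((monomial (e2 S035 S126) ((-1) : k) + (monomial (e2 S036 S125) (1 : k))) + (monomial (e2 S013 S256) (1 : k) + (monomial (e2 S023 S156) ((-1) : k))) : MvPolynomial PS k) ∈ pluckerIdeal k 3 7 := by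
  have hx : ((monomial (e2 S035 S126) ((-1) : k) + (monomial (e2 S036 S125) (1 : k))) + (monomial (e2 S013 S256) (1 : k) + (monomial (e2 S023 S156) ((-1) : k))) : MvPolynomial PS k) = -(X S035 * X S126) + X S036 * X S125 + X S013 * X S256 - X S023 * X S156 := by
    simp only [XX, XXn]; ring
  rw [pluckerIdeal, RingHom.mem_ker, hx]
  simp only [S013, S023, S035, S036, S125, S126, S156, S256, tri7]
  simp only [map_add, map_sub, map_mul, map_neg]
  simp only [pm_X 0 1 3 (by decide) (by decide), pm_X 0 2 3 (by decide) (by decide), pm_X 0 3 5 (by decide) (by decide), pm_X 0 3 6 (by decide) (by decide), pm_X 1 2 5 (by decide) (by decide), pm_X 1 2 6 (by decide) (by decide), pm_X 1 5 6 (by decide) (by decide), pm_X 2 5 6 (by decide) (by decide)]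
  simp only [mm]
  ring

private lemma hi5 :
    initForm wFano ((monomial (e2 S035 S126) ((-1) : k) + (monomial (e2 S036 S125) (1 : k))) + (monomial (e2 S013 S256) (1 : k) + (monomial (e2 S023 S156) ((-1) : k))) : MvPolynomial PS k) = (monomial (e2 S035 S126) ((-1) : k) + (monomial (e2 S036 S125) (1 : k))) := by
  apply initForm_add_right
  · intro h0
    have h1 := congrArg MvPolynomial.support h0
    rw [hsB5] at h1
    simp at h1
  · rw [hsB5, hsR5, Finset.disjoint_left]
    intro a ha hb
    simp only [Finset.mem_insert, Finset.mem_singleton] at ha hb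
    rcases ha with rfl|rfl <;> rcases hb with h|h <;>
    first
      | exact (e2_ne S013 (by decide)) h
      | exact (e2_ne S023 (by decide)) h
      | exact (e2_ne S013 (by decide)) h
      | exact (e2_ne S023 (by decide)) h
  · intro a ha b hb
    rw [hsB5] at ha
    rw [hsB5] at hb
    simp only [Finset.mem_insert, Finset.mem_singleton] at ha hb
    rcases ha with rfl|rfl <;> rcases hb with rfl|rfl <;>
      simp only [expWeight_e2, wv013, wv023, wv035, wv036, wv125, wv126, wv156, wv256] <;> norm_num
  · intro a ha b hb
    rw [hsB5] at ha
    rw [hsR5] at hb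
    simp only [Finset.mem_insert, Finset.mem_singleton] at ha hb
    rcases ha with rfl|rfl <;> rcases hb with rfl|rfl <;>
      simp only [expWeight_e2, wv013, wv023, wv035, wv036, wv125, wv126, wv156, wv256] <;> norm_num

private lemma hB5 :
    ((monomial (e2 S035 S126) ((-1) : k) + (monomial (e2 S036 S125) (1 : k))) : MvPolynomial PS k) ∈ initIdeal wFano (pluckerIdeal k 3 7) :=
  Ideal.subset_span ⟨_, hq5, (hi5).symm⟩

private lemma hsB6 : ((monomial (e2 S014 S256) (1 : k) + (monomial (e2 S046 S125) (1 : k))) : MvPolynomial PS k).support = {e2 S014 S256, e2 S046 S125} :=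
  supp2 (e2 S014 S256) (e2 S046 S125) 1 1 (e2_ne S014 (by decide)) one_ne_zero one_ne_zero

private lemma hsR6 : ((monomial (e2 S024 S156) ((-1) : k) + (monomial (e2 S045 S126) ((-1) : k))) : MvPolynomial PS k).support = {e2 S024 S156, e2 S045 S126} :=
  supp2 (e2 S024 S156) (e2 S045 S126) (-1) (-1) (e2_ne S024 (by decide)) (neg_ne_zero.mpr one_ne_zero) (neg_ne_zero.mpr one_ne_zero)

private lemma hq6 : ((monomial (e2 S014 S256) (1 : k) + (monomial (e2 S046 S125) (1 : k))) + (monomial (e2 S024 S156) ((-1) : k) + (monomial (e2 S045 S126) ((-1) : k))) : MvPolynomial PS k) ∈ pluckerIdeal k 3 7 := by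
  have hx : ((monomial (e2 S014 S256) (1 : k) + (monomial (e2 S046 S125) (1 : k))) + (monomial (e2 S024 S156) ((-1) : k) + (monomial (e2 S045 S126) ((-1) : k))) : MvPolynomial PS k) = X S014 * X S256 + X S046 * X S125 - X S024 * X S156 - X S045 * X S126 := by
    simp only [XX, XXn]; ring
  rw [pluckerIdeal, RingHom.mem_ker, hx]
  simp only [S014, S024, S045, S046, S125, S126, S156, S256, tri7]
  simp only [map_add, map_sub, map_mul, map_neg]
  simp only [pm_X 0 1 4 (by decide) (by decide), pm_X 0 2 4 (by decide) (by decide), pm_X 0 4 5 (by decide) (by decide), pm_X 0 4 6 (by decide) (by decide), pm_X 1 2 5 (by decide) (by decide), pm_X 1 2 6 (by decide) (by decide), pm_X 1 5 6 (by decide) (by decide), pm_X 2 5 6 (by decide) (by decide)]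
  simp only [mm]
  ring

private lemma hi6 :
    initForm wFano ((monomial (e2 S014 S256) (1 : k) + (monomial (e2 S046 S125) (1 : k))) + (monomial (e2 S024 S156) ((-1) : k) + (monomial (e2 S045 S126) ((-1) : k))) : MvPolynomial PS k) = (monomial (e2 S014 S256) (1 : k) + (monomial (e2 S046 S125) (1 : k))) := by
  apply initForm_add_right
  · intro h0
    have h1 := congrArg MvPolynomial.support h0
    rw [hsB6] at h1
    simp at h1
  · rw [hsB6, hsR6, Finset.disjoint_left]
    intro a ha hb
    simp only [Finset.mem_insert, Finset.mem_singleton] at ha hb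
    rcases ha with rfl|rfl <;> rcases hb with h|h <;>
    first
      | exact (e2_ne S014 (by decide)) h
      | exact (e2_ne S014 (by decide)) h
      | exact (e2_ne S024 (by decide)) h
      | exact (e2_ne S045 (by decide)) h
  · intro a ha b hb
    rw [hsB6] at ha
    rw [hsB6] at hb
    simp only [Finset.mem_insert, Finset.mem_singleton] at ha hb
    rcases ha with rfl|rfl <;> rcases hb with rfl|rfl <;>
      simp only [expWeight_e2, wv014, wv024, wv045, wv046, wv125, wv126, wv156, wv256] <;> norm_num
  · intro a ha b hb
    rw [hsB6] at ha
    rw [hsR6] at hb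
    simp only [Finset.mem_insert, Finset.mem_singleton] at ha hb
    rcases ha with rfl|rfl <;> rcases hb with rfl|rfl <;>
      simp only [expWeight_e2, wv014, wv024, wv045, wv046, wv125, wv126, wv156, wv256] <;> norm_num

private lemma hB6 :
    ((monomial (e2 S014 S256) (1 : k) + (monomial (e2 S046 S125) (1 : k))) : MvPolynomial PS k) ∈ initIdeal wFano (pluckerIdeal k 3 7) :=
  Ideal.subset_span ⟨_, hq6, (hi6).symm⟩

private lemma hsB7 : ((monomial (e2 S015 S236) (1 : k) + (monomial (e2 S025 S136) ((-1) : k) + (monomial (e2 S035 S126) (1 : k) + (monomial (e2 S056 S123) (1 : k))))) : MvPolynomial PS k).support = {e2 S015 S236, e2 S025 S136, e2 S035 S126, e2 S056 S123} :=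
  supp4 (e2 S015 S236) (e2 S025 S136) (e2 S035 S126) (e2 S056 S123) 1 (-1) 1 1 (e2_ne S015 (by decide)) (e2_ne S015 (by decide)) (e2_ne S015 (by decide)) (e2_ne S025 (by decide)) (e2_ne S025 (by decide)) (e2_ne S035 (by decide)) one_ne_zero (neg_ne_zero.mpr one_ne_zero) one_ne_zero one_ne_zero

private lemma hq7 : ((monomial (e2 S015 S236) (1 : k) + (monomial (e2 S025 S136) ((-1) : k) + (monomial (e2 S035 S126) (1 : k) + (monomial (e2 S056 S123) (1 : k))))) + ((0 : MvPolynomial PS k)) : MvPolynomial PS k) ∈ pluckerIdeal k 3 7 := by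
  have hx : ((monomial (e2 S015 S236) (1 : k) + (monomial (e2 S025 S136) ((-1) : k) + (monomial (e2 S035 S126) (1 : k) + (monomial (e2 S056 S123) (1 : k))))) + ((0 : MvPolynomial PS k)) : MvPolynomial PS k) = X S015 * X S236 - X S025 * X S136 + X S035 * X S126 + X S056 * X S123 := by
    simp only [XX, XXn]; ring
  rw [pluckerIdeal, RingHom.mem_ker, hx]
  simp only [S015, S025, S035, S056, S123, S126, S136, S236, tri7]
  simp only [map_add, map_sub, map_mul, map_neg]
  simp only [pm_X 0 1 5 (by decide) (by decide), pm_X 0 2 5 (by decide) (by decide), pm_X 0 3 5 (by decide) (by decide), pm_X 0 5 6 (by decide) (by decide), pm_X 1 2 3 (by decide) (by decide), pm_X 1 2 6 (by decide) (by decide), pm_X 1 3 6 (by decide) (by decide), pm_X 2 3 6 (by decide) (by decide)]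
  simp only [mm]
  ring

private lemma hi7 :
    initForm wFano ((monomial (e2 S015 S236) (1 : k) + (monomial (e2 S025 S136) ((-1) : k) + (monomial (e2 S035 S126) (1 : k) + (monomial (e2 S056 S123) (1 : k))))) + ((0 : MvPolynomial PS k)) : MvPolynomial PS k) = (monomial (e2 S015 S236) (1 : k) + (monomial (e2 S025 S136) ((-1) : k) + (monomial (e2 S035 S126) (1 : k) + (monomial (e2 S056 S123) (1 : k))))) := by
  apply initForm_add_right
  · intro h0
    have h1 := congrArg MvPolynomial.support h0
    rw [hsB7] at h1
    simp at h1
  · rw [hsB7]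
    simp
  · intro a ha b hb
    rw [hsB7] at ha
    rw [hsB7] at hb
    simp only [Finset.mem_insert, Finset.mem_singleton] at ha hb
    rcases ha with rfl|rfl|rfl|rfl <;> rcases hb with rfl|rfl|rfl|rfl <;>
      simp only [expWeight_e2, wv015, wv025, wv035, wv056, wv123, wv126, wv136, wv236] <;> norm_num
  · intro a ha b hb
    simp only [MvPolynomial.support_zero, Finset.notMem_empty] at hb

private lemma hB7 :
    ((monomial (e2 S015 S236) (1 : k) + (monomial (e2 S025 S136) ((-1) : k) + (monomial (e2 S035 S126) (1 : k) + (monomial (e2 S056 S123) (1 : k))))) : MvPolynomial PS k) ∈ initIdeal wFano (pluckerIdeal k 3 7) :=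
  Ideal.subset_span ⟨_, hq7, (hi7).symm⟩

private lemma hsB8 : ((monomial (e2 S015 S246) (1 : k) + (monomial (e2 S025 S146) ((-1) : k))) : MvPolynomial PS k).support = {e2 S015 S246, e2 S025 S146} :=
  supp2 (e2 S015 S246) (e2 S025 S146) 1 (-1) (e2_ne S015 (by decide)) one_ne_zero (neg_ne_zero.mpr one_ne_zero)

private lemma hsR8 : ((monomial (e2 S045 S126) (1 : k) + (monomial (e2 S056 S124) (1 : k))) : MvPolynomial PS k).support = {e2 S045 S126, e2 S056 S124} :=
  supp2 (e2 S045 S126) (e2 S056 S124) 1 1 (e2_ne S045 (by decide)) one_ne_zero one_ne_zero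

private lemma hq8 : ((monomial (e2 S015 S246) (1 : k) + (monomial (e2 S025 S146) ((-1) : k))) + (monomial (e2 S045 S126) (1 : k) + (monomial (e2 S056 S124) (1 : k))) : MvPolynomial PS k) ∈ pluckerIdeal k 3 7 := by
  have hx : ((monomial (e2 S015 S246) (1 : k) + (monomial (e2 S025 S146) ((-1) : k))) + (monomial (e2 S045 S126) (1 : k) + (monomial (e2 S056 S124) (1 : k))) : MvPolynomial PS k) = X S015 * X S246 - X S025 * X S146 + X S045 * X S126 + X S056 * X S124 := by
    simp only [XX, XXn]; ring
  rw [pluckerIdeal, RingHom.mem_ker, hx]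
  simp only [S015, S025, S045, S056, S124, S126, S146, S246, tri7]
  simp only [map_add, map_sub, map_mul, map_neg]
  simp only [pm_X 0 1 5 (by decide) (by decide), pm_X 0 2 5 (by decide) (by decide), pm_X 0 4 5 (by decide) (by decide), pm_X 0 5 6 (by decide) (by decide), pm_X 1 2 4 (by decide) (by decide), pm_X 1 2 6 (by decide) (by decide), pm_X 1 4 6 (by decide) (by decide), pm_X 2 4 6 (by decide) (by decide)]
  simp only [mm]
  ring

private lemma hi8 :
    initForm wFano ((monomial (e2 S015 S246) (1 : k) + (monomial (e2 S025 S146) ((-1) : k))) + (monomial (e2 S045 S126) (1 : k) + (monomial (e2 S056 S124) (1 : k))) : MvPolynomial PS k) = (monomial (e2 S015 S246) (1 : k) + (monomial (e2 S025 S146) ((-1) : k))) := by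
  apply initForm_add_right
  · intro h0
    have h1 := congrArg MvPolynomial.support h0
    rw [hsB8] at h1
    simp at h1
  · rw [hsB8, hsR8, Finset.disjoint_left]
    intro a ha hb
    simp only [Finset.mem_insert, Finset.mem_singleton] at ha hb
    rcases ha with rfl|rfl <;> rcases hb with h|h <;>
    first
      | exact (e2_ne S015 (by decide)) h
      | exact (e2_ne S015 (by decide)) h
      | exact (e2_ne S025 (by decide)) h
      | exact (e2_ne S025 (by decide)) h
  · intro a ha b hb
    rw [hsB8] at ha
    rw [hsB8] at hb
    simp only [Finset.mem_insert, Finset.mem_singleton] at ha hb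
    rcases ha with rfl|rfl <;> rcases hb with rfl|rfl <;>
      simp only [expWeight_e2, wv015, wv025, wv045, wv056, wv124, wv126, wv146, wv246] <;> norm_num
  · intro a ha b hb
    rw [hsB8] at ha
    rw [hsR8] at hb
    simp only [Finset.mem_insert, Finset.mem_singleton] at ha hb
    rcases ha with rfl|rfl <;> rcases hb with rfl|rfl <;>
      simp only [expWeight_e2, wv015, wv025, wv045, wv056, wv124, wv126, wv146, wv246] <;> norm_num

private lemma hB8 :
    ((monomial (e2 S015 S246) (1 : k) + (monomial (e2 S025 S146) ((-1) : k))) : MvPolynomial PS k) ∈ initIdeal wFano (pluckerIdeal k 3 7) :=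
  Ideal.subset_span ⟨_, hq8, (hi8).symm⟩

private lemma hsB9 : ((monomial (e2 S035 S456) (1 : k) + (monomial (e2 S056 S345) (1 : k))) : MvPolynomial PS k).support = {e2 S035 S456, e2 S056 S345} :=
  supp2 (e2 S035 S456) (e2 S056 S345) 1 1 (e2_ne S035 (by decide)) one_ne_zero one_ne_zero

private lemma hsR9 : ((monomial (e2 S045 S356) ((-1) : k)) : MvPolynomial PS k).support = {e2 S045 S356} :=
  supp1 (e2 S045 S356) (-1) (neg_ne_zero.mpr one_ne_zero)

private lemma hq9 : ((monomial (e2 S035 S456) (1 : k) + (monomial (e2 S056 S345) (1 : k))) + (monomial (e2 S045 S356) ((-1) : k)) : MvPolynomial PS k) ∈ pluckerIdeal k 3 7 := by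
  have hx : ((monomial (e2 S035 S456) (1 : k) + (monomial (e2 S056 S345) (1 : k))) + (monomial (e2 S045 S356) ((-1) : k)) : MvPolynomial PS k) = X S035 * X S456 + X S056 * X S345 - X S045 * X S356 := by
    simp only [XX, XXn]; ring
  rw [pluckerIdeal, RingHom.mem_ker, hx]
  simp only [S035, S045, S056, S345, S356, S456, tri7]
  simp only [map_add, map_sub, map_mul, map_neg]
  simp only [pm_X 0 3 5 (by decide) (by decide), pm_X 0 4 5 (by decide) (by decide), pm_X 0 5 6 (by decide) (by decide), pm_X 3 4 5 (by decide) (by decide), pm_X 3 5 6 (by decide) (by decide), pm_X 4 5 6 (by decide) (by decide)]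
  simp only [mm]
  ring

private lemma hi9 :
    initForm wFano ((monomial (e2 S035 S456) (1 : k) + (monomial (e2 S056 S345) (1 : k))) + (monomial (e2 S045 S356) ((-1) : k)) : MvPolynomial PS k) = (monomial (e2 S035 S456) (1 : k) + (monomial (e2 S056 S345) (1 : k))) := by
  apply initForm_add_right
  · intro h0
    have h1 := congrArg MvPolynomial.support h0
    rw [hsB9] at h1
    simp at h1
  · rw [hsB9, hsR9, Finset.disjoint_left]
    intro a ha hb
    simp only [Finset.mem_insert, Finset.mem_singleton] at ha hb
    rcases ha with rfl|rfl <;>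
    first
      | exact (e2_ne S035 (by decide)) hb
      | exact (e2_ne S045 (by decide)) hb
  · intro a ha b hb
    rw [hsB9] at ha
    rw [hsB9] at hb
    simp only [Finset.mem_insert, Finset.mem_singleton] at ha hb
    rcases ha with rfl|rfl <;> rcases hb with rfl|rfl <;>
      simp only [expWeight_e2, wv035, wv045, wv056, wv345, wv356, wv456] <;> norm_num
  · intro a ha b hb
    rw [hsB9] at ha
    rw [hsR9] at hb
    simp only [Finset.mem_insert, Finset.mem_singleton] at ha hb
    rcases ha with rfl|rfl <;> rcases hb with rfl <;>
      simp only [expWeight_e2, wv035, wv045, wv056, wv345, wv356, wv456] <;> norm_num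

private lemma hB9 :
    ((monomial (e2 S035 S456) (1 : k) + (monomial (e2 S056 S345) (1 : k))) : MvPolynomial PS k) ∈ initIdeal wFano (pluckerIdeal k 3 7) :=
  Ideal.subset_span ⟨_, hq9, (hi9).symm⟩

private lemma hsB10 : ((monomial (e2 S036 S125) (1 : k) + (monomial (e2 S056 S123) ((-1) : k))) : MvPolynomial PS k).support = {e2 S036 S125, e2 S056 S123} :=
  supp2 (e2 S036 S125) (e2 S056 S123) 1 (-1) (e2_ne S036 (by decide)) one_ne_zero (neg_ne_zero.mpr one_ne_zero)

private lemma hsR10 : ((monomial (e2 S016 S235) (1 : k) + (monomial (e2 S026 S135) ((-1) : k))) : MvPolynomial PS k).support = {e2 S016 S235, e2 S026 S135} :=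
  supp2 (e2 S016 S235) (e2 S026 S135) 1 (-1) (e2_ne S016 (by decide)) one_ne_zero (neg_ne_zero.mpr one_ne_zero)

private lemma hq10 : ((monomial (e2 S036 S125) (1 : k) + (monomial (e2 S056 S123) ((-1) : k))) + (monomial (e2 S016 S235) (1 : k) + (monomial (e2 S026 S135) ((-1) : k))) : MvPolynomial PS k) ∈ pluckerIdeal k 3 7 := by
  have hx : ((monomial (e2 S036 S125) (1 : k) + (monomial (e2 S056 S123) ((-1) : k))) + (monomial (e2 S016 S235) (1 : k) + (monomial (e2 S026 S135) ((-1) : k))) : MvPolynomial PS k) = X S036 * X S125 - X S056 * X S123 + X S016 * X S235 - X S026 * X S135 := by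
    simp only [XX, XXn]; ring
  rw [pluckerIdeal, RingHom.mem_ker, hx]
  simp only [S016, S026, S036, S056, S123, S125, S135, S235, tri7]
  simp only [map_add, map_sub, map_mul, map_neg]
  simp only [pm_X 0 1 6 (by decide) (by decide), pm_X 0 2 6 (by decide) (by decide), pm_X 0 3 6 (by decide) (by decide), pm_X 0 5 6 (by decide) (by decide), pm_X 1 2 3 (by decide) (by decide), pm_X 1 2 5 (by decide) (by decide), pm_X 1 3 5 (by decide) (by decide), pm_X 2 3 5 (by decide) (by decide)]
  simp only [mm]
  ring

private lemma hi10 :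
    initForm wFano ((monomial (e2 S036 S125) (1 : k) + (monomial (e2 S056 S123) ((-1) : k))) + (monomial (e2 S016 S235) (1 : k) + (monomial (e2 S026 S135) ((-1) : k))) : MvPolynomial PS k) = (monomial (e2 S036 S125) (1 : k) + (monomial (e2 S056 S123) ((-1) : k))) := by
  apply initForm_add_right
  · intro h0
    have h1 := congrArg MvPolynomial.support h0
    rw [hsB10] at h1
    simp at h1
  · rw [hsB10, hsR10, Finset.disjoint_left]
    intro a ha hb
    simp only [Finset.mem_insert, Finset.mem_singleton] at ha hb
    rcases ha with rfl|rfl <;> rcases hb with h|h <;>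
    first
      | exact (e2_ne S016 (by decide)) h
      | exact (e2_ne S026 (by decide)) h
      | exact (e2_ne S016 (by decide)) h
      | exact (e2_ne S026 (by decide)) h
  · intro a ha b hb
    rw [hsB10] at ha
    rw [hsB10] at hb
    simp only [Finset.mem_insert, Finset.mem_singleton] at ha hb
    rcases ha with rfl|rfl <;> rcases hb with rfl|rfl <;>
      simp only [expWeight_e2, wv016, wv026, wv036, wv056, wv123, wv125, wv135, wv235] <;> norm_num
  · intro a ha b hb
    rw [hsB10] at ha
    rw [hsR10] at hb
    simp only [Finset.mem_insert, Finset.mem_singleton] at ha hb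
    rcases ha with rfl|rfl <;> rcases hb with rfl|rfl <;>
      simp only [expWeight_e2, wv016, wv026, wv036, wv056, wv123, wv125, wv135, wv235] <;> norm_num

private lemma hB10 :
    ((monomial (e2 S036 S125) (1 : k) + (monomial (e2 S056 S123) ((-1) : k))) : MvPolynomial PS k) ∈ initIdeal wFano (pluckerIdeal k 3 7) :=
  Ideal.subset_span ⟨_, hq10, (hi10).symm⟩

private lemma hsB11 : ((monomial (e2 S016 S245) (1 : k) + (monomial (e2 S046 S125) (1 : k))) : MvPolynomial PS k).support = {e2 S016 S245, e2 S046 S125} :=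
  supp2 (e2 S016 S245) (e2 S046 S125) 1 1 (e2_ne S016 (by decide)) one_ne_zero one_ne_zero

private lemma hsR11 : ((monomial (e2 S026 S145) ((-1) : k) + (monomial (e2 S056 S124) ((-1) : k))) : MvPolynomial PS k).support = {e2 S026 S145, e2 S056 S124} :=
  supp2 (e2 S026 S145) (e2 S056 S124) (-1) (-1) (e2_ne S026 (by decide)) (neg_ne_zero.mpr one_ne_zero) (neg_ne_zero.mpr one_ne_zero)

private lemma hq11 : ((monomial (e2 S016 S245) (1 : k) + (monomial (e2 S046 S125) (1 : k))) + (monomial (e2 S026 S145) ((-1) : k) + (monomial (e2 S056 S124) ((-1) : k))) : MvPolynomial PS k) ∈ pluckerIdeal k 3 7 := by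
  have hx : ((monomial (e2 S016 S245) (1 : k) + (monomial (e2 S046 S125) (1 : k))) + (monomial (e2 S026 S145) ((-1) : k) + (monomial (e2 S056 S124) ((-1) : k))) : MvPolynomial PS k) = X S016 * X S245 + X S046 * X S125 - X S026 * X S145 - X S056 * X S124 := by
    simp only [XX, XXn]; ring
  rw [pluckerIdeal, RingHom.mem_ker, hx]
  simp only [S016, S026, S046, S056, S124, S125, S145, S245, tri7]
  simp only [map_add, map_sub, map_mul, map_neg]
  simp only [pm_X 0 1 6 (by decide) (by decide), pm_X 0 2 6 (by decide) (by decide), pm_X 0 4 6 (by decide) (by decide), pm_X 0 5 6 (by decide) (by decide), pm_X 1 2 4 (by decide) (by decide), pm_X 1 2 5 (by decide) (by decide), pm_X 1 4 5 (by decide) (by decide), pm_X 2 4 5 (by decide) (by decide)]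
  simp only [mm]
  ring

private lemma hi11 :
    initForm wFano ((monomial (e2 S016 S245) (1 : k) + (monomial (e2 S046 S125) (1 : k))) + (monomial (e2 S026 S145) ((-1) : k) + (monomial (e2 S056 S124) ((-1) : k))) : MvPolynomial PS k) = (monomial (e2 S016 S245) (1 : k) + (monomial (e2 S046 S125) (1 : k))) := by
  apply initForm_add_right
  · intro h0
    have h1 := congrArg MvPolynomial.support h0
    rw [hsB11] at h1
    simp at h1
  · rw [hsB11, hsR11, Finset.disjoint_left]
    intro a ha hb
    simp only [Finset.mem_insert, Finset.mem_singleton] at ha hb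
    rcases ha with rfl|rfl <;> rcases hb with h|h <;>
    first
      | exact (e2_ne S016 (by decide)) h
      | exact (e2_ne S016 (by decide)) h
      | exact (e2_ne S026 (by decide)) h
      | exact (e2_ne S046 (by decide)) h
  · intro a ha b hb
    rw [hsB11] at ha
    rw [hsB11] at hb
    simp only [Finset.mem_insert, Finset.mem_singleton] at ha hb
    rcases ha with rfl|rfl <;> rcases hb with rfl|rfl <;>
      simp only [expWeight_e2, wv016, wv026, wv046, wv056, wv124, wv125, wv145, wv245] <;> norm_num
  · intro a ha b hb
    rw [hsB11] at ha
    rw [hsR11] at hb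
    simp only [Finset.mem_insert, Finset.mem_singleton] at ha hb
    rcases ha with rfl|rfl <;> rcases hb with rfl|rfl <;>
      simp only [expWeight_e2, wv016, wv026, wv046, wv056, wv124, wv125, wv145, wv245] <;> norm_num

private lemma hB11 :
    ((monomial (e2 S016 S245) (1 : k) + (monomial (e2 S046 S125) (1 : k))) : MvPolynomial PS k) ∈ initIdeal wFano (pluckerIdeal k 3 7) :=
  Ideal.subset_span ⟨_, hq11, (hi11).symm⟩

private lemma hsB12 : ((monomial (e2 S016 S256) (1 : k) + (monomial (e2 S056 S126) (1 : k))) : MvPolynomial PS k).support = {e2 S016 S256, e2 S056 S126} :=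
  supp2 (e2 S016 S256) (e2 S056 S126) 1 1 (e2_ne S016 (by decide)) one_ne_zero one_ne_zero

private lemma hsR12 : ((monomial (e2 S026 S156) ((-1) : k)) : MvPolynomial PS k).support = {e2 S026 S156} :=
  supp1 (e2 S026 S156) (-1) (neg_ne_zero.mpr one_ne_zero)

private lemma hq12 : ((monomial (e2 S016 S256) (1 : k) + (monomial (e2 S056 S126) (1 : k))) + (monomial (e2 S026 S156) ((-1) : k)) : MvPolynomial PS k) ∈ pluckerIdeal k 3 7 := by
  have hx : ((monomial (e2 S016 S256) (1 : k) + (monomial (e2 S056 S126) (1 : k))) + (monomial (e2 S026 S156) ((-1) : k)) : MvPolynomial PS k) = X S016 * X S256 + X S056 * X S126 - X S026 * X S156 := by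
    simp only [XX, XXn]; ring
  rw [pluckerIdeal, RingHom.mem_ker, hx]
  simp only [S016, S026, S056, S126, S156, S256, tri7]
  simp only [map_add, map_sub, map_mul, map_neg]
  simp only [pm_X 0 1 6 (by decide) (by decide), pm_X 0 2 6 (by decide) (by decide), pm_X 0 5 6 (by decide) (by decide), pm_X 1 2 6 (by decide) (by decide), pm_X 1 5 6 (by decide) (by decide), pm_X 2 5 6 (by decide) (by decide)]
  simp only [mm]
  ring

private lemma hi12 :
    initForm wFano ((monomial (e2 S016 S256) (1 : k) + (monomial (e2 S056 S126) (1 : k))) + (monomial (e2 S026 S156) ((-1) : k)) : MvPolynomial PS k) = (monomial (e2 S016 S256) (1 : k) + (monomial (e2 S056 S126) (1 : k))) := by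
  apply initForm_add_right
  · intro h0
    have h1 := congrArg MvPolynomial.support h0
    rw [hsB12] at h1
    simp at h1
  · rw [hsB12, hsR12, Finset.disjoint_left]
    intro a ha hb
    simp only [Finset.mem_insert, Finset.mem_singleton] at ha hb
    rcases ha with rfl|rfl <;>
    first
      | exact (e2_ne S016 (by decide)) hb
      | exact (e2_ne S026 (by decide)) hb
  · intro a ha b hb
    rw [hsB12] at ha
    rw [hsB12] at hb
    simp only [Finset.mem_insert, Finset.mem_singleton] at ha hb
    rcases ha with rfl|rfl <;> rcases hb with rfl|rfl <;>
      simp only [expWeight_e2, wv016, wv026, wv056, wv126, wv156, wv256] <;> norm_num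
  · intro a ha b hb
    rw [hsB12] at ha
    rw [hsR12] at hb
    simp only [Finset.mem_insert, Finset.mem_singleton] at ha hb
    rcases ha with rfl|rfl <;> rcases hb with rfl <;>
      simp only [expWeight_e2, wv016, wv026, wv056, wv126, wv156, wv256] <;> norm_num

private lemma hB12 :
    ((monomial (e2 S016 S256) (1 : k) + (monomial (e2 S056 S126) (1 : k))) : MvPolynomial PS k) ∈ initIdeal wFano (pluckerIdeal k 3 7) :=
  Ideal.subset_span ⟨_, hq12, (hi12).symm⟩

private lemma hg :
    ((1 : MvPolynomial PS k) * (X S456 * (monomial (e2 S012 S356) (1 : k) + (monomial (e2 S015 S236) (1 : k)))) + ((1 : MvPolynomial PS k) * (X S356 * (monomial (e2 S012 S456) (1 : k) + (monomial (e2 S014 S256) ((-1) : k) + (monomial (e2 S015 S246) (1 : k) + (monomial (e2 S016 S245) ((-1) : k)))))) + ((-2 : MvPolynomial PS k) * (X S256 * (monomial (e2 S014 S356) ((-1) : k) + (monomial (e2 S016 S345) ((-1) : k)))) + ((1 : MvPolynomial PS k) * (X S456 * (monomial (e2 S012 S356) (1 : k) + (monomial (e2 S025 S136) ((-1) : k))))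 + ((1 : MvPolynomial PS k) * (X S356 * (monomial (e2 S012 S456) (1 : k) + (monomial (e2 S025 S146) ((-1) : k)))) + ((1 : MvPolynomial PS k) * (X S456 * (monomial (e2 S035 S126) ((-1) : k) + (monomial (e2 S036 S125) (1 : k)))) + ((-1 : MvPolynomial PS k) * (X S356 * (monomial (e2 S014 S256) (1 : k) + (monomial (e2 S046 S125) (1 : k)))) + ((-1 : MvPolynomial PS k) * (X S456 * (monomial (e2 S015 S236) (1 : k) + (monomial (e2 S025 S136) ((-1) : k) + (monomial (e2 S035 S126) (1 : k) + (monomial (e2 S056 S123) (1 : k)))))) + ((-1 : MvPolynomial PS k) * (X S356 * (monomial (e2 S015 S246) (1 : k) + (monomial (e2 S025 S146) ((-1) : k)))) + ((2 : MvPolynomial PS k) * (X S126 * (monomial (e2 S035 S456) (1 : k) + (monomial (e2 S056 S345) (1 : k)))) + ((-1 : MvPolynomial PS k) * (X S456 * (monomial (e2 S036 S125) (1 : k) + (monomial (e2 S056 S123) ((-1) : k)))) + ((1 : MvPolynomial PS k) * (X S356 * (monomial (e2 S016 S245) (1 : k) + (monomial (e2 S046 S125) (1 : k)))) + ((-2 :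 MvPolynomial PS k) * (X S345 * (monomial (e2 S016 S256) (1 : k) + (monomial (e2 S056 S126) (1 : k))))))))))))))))) ∈ initIdeal wFano (pluckerIdeal k 3 7) :=
  (Ideal.add_mem _ (Ideal.mul_mem_left _ _ (Ideal.mul_mem_left _ _ hB0)) (Ideal.add_mem _ (Ideal.mul_mem_left _ _ (Ideal.mul_mem_left _ _ hB1)) (Ideal.add_mem _ (Ideal.mul_mem_left _ _ (Ideal.mul_mem_left _ _ hB2)) (Ideal.add_mem _ (Ideal.mul_mem_left _ _ (Ideal.mul_mem_left _ _ hB3)) (Ideal.add_mem _ (Ideal.mul_mem_left _ _ (Ideal.mul_mem_left _ _ hB4)) (Ideal.add_mem _ (Ideal.mul_mem_left _ _ (Ideal.mul_mem_left _ _ hB5)) (Ideal.add_mem _ (Ideal.mul_mem_left _ _ (Ideal.mul_mem_left _ _ hB6)) (Ideal.add_mem _ (Ideal.mul_mem_left _ _ (Ideal.mul_mem_left _ _ hB7)) (Ideal.add_mem _ (Ideal.mul_mem_left _ _ (Ideal.mul_mem_left _ _ hB8)) (Ideal.add_mem _ (Ideal.mul_mem_left _ _ (Ideal.mul_mem_left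 _ _ hB9)) (Ideal.add_mem _ (Ideal.mul_mem_left _ _ (Ideal.mul_mem_left _ _ hB10)) (Ideal.add_mem _ (Ideal.mul_mem_left _ _ (Ideal.mul_mem_left _ _ hB11)) (Ideal.mul_mem_left _ _ (Ideal.mul_mem_left _ _ hB12))))))))))))))

private lemma hXg :
    ((1 : MvPolynomial PS k) * (X S456 * (monomial (e2 S012 S356) (1 : k) + (monomial (e2 S015 S236) (1 : k)))) + ((1 : MvPolynomial PS k) * (X S356 * (monomial (e2 S012 S456) (1 : k) + (monomial (e2 S014 S256) ((-1) : k) + (monomial (e2 S015 S246) (1 : k) + (monomial (e2 S016 S245) ((-1) : k)))))) + ((-2 : MvPolynomial PS k) * (X S256 * (monomial (e2 S014 S356) ((-1) : k) + (monomial (e2 S016 S345) ((-1) : k)))) + ((1 : MvPolynomial PS k) * (X S456 * (monomial (e2 S012 S356) (1 : k) + (monomial (e2 S025 S136) ((-1) : k)))) + ((1 : MvPolynomial PS k) * (X S356 * (monomial (e2 S012 S456) (1 : k) + (monomial (e2 S025 S146) ((-1) : k)))) + ((1 : MvPolynomial PS k) * (X S456 * (monomial (e2 S035 S126) ((-1)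 : k) + (monomial (e2 S036 S125) (1 : k)))) + ((-1 : MvPolynomial PS k) * (X S356 * (monomial (e2 S014 S256) (1 : k) + (monomial (e2 S046 S125) (1 : k)))) + ((-1 : MvPolynomial PS k) * (X S456 * (monomial (e2 S015 S236) (1 : k) + (monomial (e2 S025 S136) ((-1) : k) + (monomial (e2 S035 S126) (1 : k) + (monomial (e2 S056 S123) (1 : k)))))) + ((-1 : MvPolynomial PS k) * (X S356 * (monomial (e2 S015 S246) (1 : k) + (monomial (e2 S025 S146) ((-1) : k)))) + ((2 : MvPolynomial PS k) * (X S126 * (monomial (e2 S035 S456) (1 : k) + (monomial (e2 S056 S345) (1 : k)))) + ((-1 : MvPolynomial PS k) * (X S456 * (monomial (e2 S036 S125) (1 : k) + (monomial (e2 S056 S123) ((-1) : k)))) + ((1 : MvPolynomial PS k) * (X S356 * (monomial (e2 S016 S245) (1 : k) + (monomial (e2 S046 S125) (1 : k)))) + ((-2 : MvPolynomial PS k) * (X S345 * (monomial (e2 S016 S256) (1 : k) + (monomial (e2 S056 S126) (1 : k)))))))))))))))))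
    = 4 * ((X S012 : MvPolynomial PS k) * (X S356 * X S456)) := by
  simp only [XX, XXn]; ring

end CharTwo

/-- over a field of characteristic different from two, the initial ideal
`in_w(I_{3,7})` of the Plücker ideal with respect to the Fano weight vector contains the
monomial `p_{123} p_{467} p_{567}`; in particular `w ∉ G_{3,7}`. -/
theorem fano_initIdeal_contains_monomial_of_char_ne_two (k : Type) [Field k]
    (h2 : (2 : k) ≠ 0) :
    X (tri7 0 1 2 (by decide)) * X (tri7 3 5 6 (by decide)) * X (tri7 4 5 6 (by decide)) ∈
      initIdeal wFano (pluckerIdeal k 3 7) := by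
  have h4 : ((2 : k) * 2) ≠ 0 := mul_ne_zero h2 h2
  have hC : (C ((2 : k) * 2) : MvPolynomial PS k) = 4 := by
    rw [show (2 : k) * 2 = 4 by norm_num]
    exact map_ofNat C 4
  have key : (X S012 : MvPolynomial PS k) * X S356 * X S456
      = C ((2 : k) * 2)⁻¹ * ((1 : MvPolynomial PS k) * (X S456 * (monomial (e2 S012 S356) (1 : k) + (monomial (e2 S015 S236) (1 : k)))) + ((1 : MvPolynomial PS k) * (X S356 * (monomial (e2 S012 S456) (1 : k) + (monomial (e2 S014 S256) ((-1) : k) + (monomial (e2 S015 S246) (1 : k) + (monomial (e2 S016 S245) ((-1) : k)))))) + ((-2 : MvPolynomial PS k) * (X S256 * (monomial (e2 S014 S356) ((-1) : k) + (monomial (e2 S016 S345) ((-1) : k)))) + ((1 : MvPolynomial PS k) * (X S456 * (monomial (e2 S012 S356) (1 : k) + (monomial (e2 S025 S136) ((-1) : k)))) + ((1 : MvPolynomial PS k) * (X S356 * (monomial (e2 S012 S456) (1 : k) + (monomial (e2 S025 S146) ((-1) : k)))) + ((1 : MvPolynomial PS k) * (X S456 * (monomial (e2 S035 S126) ((-1)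 : k) + (monomial (e2 S036 S125) (1 : k)))) + ((-1 : MvPolynomial PS k) * (X S356 * (monomial (e2 S014 S256) (1 : k) + (monomial (e2 S046 S125) (1 : k)))) + ((-1 : MvPolynomial PS k) * (X S456 * (monomial (e2 S015 S236) (1 : k) + (monomial (e2 S025 S136) ((-1) : k) + (monomial (e2 S035 S126) (1 : k) + (monomial (e2 S056 S123) (1 : k)))))) + ((-1 : MvPolynomial PS k) * (X S356 * (monomial (e2 S015 S246) (1 : k) + (monomial (e2 S025 S146) ((-1) : k)))) + ((2 : MvPolynomial PS k) * (X S126 * (monomial (e2 S035 S456) (1 : k) + (monomial (e2 S056 S345) (1 : k)))) + ((-1 : MvPolynomial PS k) * (X S456 * (monomial (e2 S036 S125) (1 : k) + (monomial (e2 S056 S123) ((-1) : k)))) + ((1 : MvPolynomial PS k) * (X S356 * (monomial (e2 S016 S245) (1 : k) + (monomial (e2 S046 S125) (1 : k)))) + ((-2 : MvPolynomial PS k) * (X S345 * (monomial (e2 S016 S256) (1 : k) + (monomial (e2 S056 S126) (1 : k))))))))))))))))) := by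
    rw [hXg, ← hC, ← mul_assoc, ← C_mul, inv_mul_cancel₀ h4, C_1, one_mul, mul_assoc]
  show (X S012 : MvPolynomial PS k) * X S356 * X S456 ∈ initIdeal wFano (pluckerIdeal k 3 7)
  rw [key]
  exact Ideal.mul_mem_left _ _ hg
end

section
/- Let k be a field, let k[x₁,…,x₆, y₁,…,y₆, z₁,…,z₆] be the polynomial ring in 18 variables, and let m_{ijk} (1 ≤ i < j < k ≤ 6) denote the 3×3 minor on columns i, j, k of the 3×6 matrix whose rows are (x₁,…,x₆), (y₁,…,y₆), (z₁,…,z₆). Assign weights to the variables by the matrix W with rows (2,1,2,1,0,0), (1,2,0,0,2,1), (0,0,1,2,1,2): the weight of x_j is W_{1j}, of y_j is W_{2j}, of z_j is W_{3j}, and the weight of a monomial is the sum of the weights of its variable factors. Let ≺ be any monomial order refining W, in the sense that whenever monomial u has strictly smaller W-weight than monomial v, then u ≺ v, and define the initial monomial in_≺(f) of a nonzero polynomial f to be its ≺-smallest monomial. Then the 3×3 minors are not a sagbi basis with respect to ≺: there exists a polynomial g in the k-subalgebra generated by the 20 minors m_{ijk} such that in_≺(g) does not belong to the k-subalgebra generated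 by the 20 monomials in_≺(m_{ijk}). In particular, the maximal minors of a generic 3×6 matrix do not form a universal sagbi basis. -/
open scoped Classical

open MvPolynomial

set_option synthInstance.maxSize 1000
set_option maxHeartbeats 1000000

/-- A monomial order on the monomials of a polynomial ring with variables indexed by `σ`:
a multiplicative well-ordering. -/
structure MonoOrder (σ : Type*) where
  lt : (σ →₀ ℕ) → (σ →₀ ℕ) → Prop
  trichot : ∀ a b, lt a b ∨ a = b ∨ lt b a
  trans : ∀ a b c, lt a b → lt b c → lt a c
  irrefl : ∀ a, ¬ lt a a
  add_right : ∀ a b c, lt a b → lt (a + c) (b + c)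
  wf : WellFounded lt

/-- With the minimum convention, `a` is the exponent of the initial monomial `in_≺(f)`:
`a` lies in the support of `f` and is `≺`-smaller than every other exponent of `f`. -/
def IsLead {σ : Type*} {k : Type*} [CommRing k] (o : MonoOrder σ) (f : MvPolynomial σ k)
    (a : σ →₀ ℕ) : Prop :=
  a ∈ f.support ∧ ∀ b ∈ f.support, b ≠ a → o.lt a b

/-- The `3 × 3` minor on columns `i, j, l` of the `3 × 6` matrix of indeterminates
with rows `x`, `y`, `z`. -/
noncomputable def minor36 (k : Type*) [CommRing k] (i j l : Fin 6) :
    MvPolynomial (Fin 3 × Fin 6) k :=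
  (Matrix.of fun r c : Fin 3 =>
    (X (r, (![i, j, l] : Fin 3 → Fin 6) c) : MvPolynomial (Fin 3 × Fin 6) k)).det

/-- The weight matrix `W` with rows `(2,1,2,1,0,0)`, `(1,2,0,0,2,1)`, `(0,0,1,2,1,2)`. -/
noncomputable def Wmat : Fin 3 → Fin 6 → ℝ :=
  ![![2, 1, 2, 1, 0, 0], ![1, 2, 0, 0, 2, 1], ![0, 0, 1, 2, 1, 2]]

/-- The `W`-weight of a monomial: the sum of the weights of its variable factors. -/
noncomputable def monWeight (a : Fin 3 × Fin 6 →₀ ℕ) : ℝ :=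
  a.sum fun v e => (e : ℝ) * Wmat v.1 v.2

/- ### Auxiliary machinery -/

def f3 (a b c : Fin 6) (p : Fin 3 × Fin 6) : ℕ :=
  (if ((0:Fin 3), a) = p then 1 else 0) + (if ((1:Fin 3), b) = p then 1 else 0)
    + (if ((2:Fin 3), c) = p then 1 else 0)

noncomputable def ex3 (a b c : Fin 6) : Fin 3 × Fin 6 →₀ ℕ :=
  Finsupp.single ((0:Fin 3), a) 1 + Finsupp.single ((1:Fin 3), b) 1
    + Finsupp.single ((2:Fin 3), c) 1

noncomputable def ex6 (a b c d e f : Fin 6) : Fin 3 × Fin 6 →₀ ℕ :=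
  ex3 a c e + ex3 b d f

lemma ex3_apply (a b c : Fin 6) (p : Fin 3 × Fin 6) : ex3 a b c p = f3 a b c p := by
  simp [ex3, f3, Finsupp.single_apply]

lemma ex6_apply (a b c d e f : Fin 6) (p : Fin 3 × Fin 6) :
    ex6 a b c d e f p = f3 a c e p + f3 b d f p := by
  simp [ex6, ex3_apply]

lemma ex3_eq_iff {a b c a' b' c' : Fin 6} :
    ex3 a b c = ex3 a' b' c' ↔ a = a' ∧ b = b' ∧ c = c' := by
  constructor
  · intro h
    refine ⟨?_, ?_, ?_⟩
    · have h0 := DFunLike.ext_iff.mp h ((0:Fin 3), a)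
      simp only [ex3_apply, f3] at h0
      by_contra hne
      have hne' : _ ≠ _ := fun hh => hne hh.symm
      simp [Prod.ext_iff, hne'] at h0
    · have h0 := DFunLike.ext_iff.mp h ((1:Fin 3), b)
      simp only [ex3_apply, f3] at h0
      by_contra hne
      have hne' : _ ≠ _ := fun hh => hne hh.symm
      simp [Prod.ext_iff, hne'] at h0
    · have h0 := DFunLike.ext_iff.mp h ((2:Fin 3), c)
      simp only [ex3_apply, f3] at h0
      by_contra hne
      have hne' : _ ≠ _ := fun hh => hne hh.symm
      simp [Prod.ext_iff, hne'] at h0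
  · rintro ⟨rfl, rfl, rfl⟩; rfl

lemma mw_add (u v : Fin 3 × Fin 6 →₀ ℕ) : monWeight (u + v) = monWeight u + monWeight v :=
  Finsupp.sum_add_index' (by simp) (by intro a b₁ b₂; push_cast; ring)

lemma mw_single (p : Fin 3 × Fin 6) : monWeight (Finsupp.single p 1) = Wmat p.1 p.2 := by
  rw [monWeight, Finsupp.sum_single_index] <;> simp

lemma mw3 (a b c : Fin 6) : monWeight (ex3 a b c) = Wmat 0 a + Wmat 1 b + Wmat 2 c := by
  rw [ex3, mw_add, mw_add, mw_single, mw_single, mw_single]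

lemma mw6 (a b c d e f : Fin 6) :
    monWeight (ex6 a b c d e f)
      = (Wmat 0 a + Wmat 1 c + Wmat 2 e) + (Wmat 0 b + Wmat 1 d + Wmat 2 f) := by
  rw [ex6, mw_add, mw3, mw3]

lemma W00 : Wmat 0 0 = 2 := rfl
lemma W01 : Wmat 0 1 = 1 := rfl
lemma W02 : Wmat 0 2 = 2 := rfl
lemma W03 : Wmat 0 3 = 1 := rfl
lemma W04 : Wmat 0 4 = 0 := rfl
lemma W05 : Wmat 0 5 = 0 := rfl
lemma W10 : Wmat 1 0 = 1 := rfl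
lemma W11 : Wmat 1 1 = 2 := rfl
lemma W12 : Wmat 1 2 = 0 := rfl
lemma W13 : Wmat 1 3 = 0 := rfl
lemma W14 : Wmat 1 4 = 2 := rfl
lemma W15 : Wmat 1 5 = 1 := rfl
lemma W20 : Wmat 2 0 = 0 := rfl
lemma W21 : Wmat 2 1 = 0 := rfl
lemma W22 : Wmat 2 2 = 1 := rfl
lemma W23 : Wmat 2 3 = 2 := rfl
lemma W24 : Wmat 2 4 = 1 := rfl
lemma W25 : Wmat 2 5 = 2 := rfl

variable {k : Type} [Field k]

lemma X3 (a b c : Fin 6) :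
    (X (0, a) * X (1, b) * X (2, c) : MvPolynomial (Fin 3 × Fin 6) k)
      = monomial (ex3 a b c) 1 := by
  rw [ex3, monomial_add_single, monomial_add_single]
  simp [X_pow_eq_monomial, pow_one]
  rfl

lemma X6 (a b c d e f : Fin 6) :
    (X (0, a) * X (0, b) * X (1, c) * X (1, d) * X (2, e) * X (2, f)
        : MvPolynomial (Fin 3 × Fin 6) k)
      = monomial (ex6 a b c d e f) 1 := by
  have : (X (0, a) * X (0, b) * X (1, c) * X (1, d) * X (2, e) * X (2, f)
        : MvPolynomial (Fin 3 × Fin 6) k)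
      = (X (0, a) * X (1, c) * X (2, e)) * (X (0, b) * X (1, d) * X (2, f)) := by ring
  rw [this, X3, X3, monomial_mul, one_mul, ex6]

lemma minor_eqm (i j l : Fin 6) :
    minor36 k i j l
      = monomial (ex3 i j l) 1 - monomial (ex3 i l j) 1 - monomial (ex3 j i l) 1
        + monomial (ex3 l i j) 1 + monomial (ex3 j l i) 1 - monomial (ex3 l j i) 1 := by
  simp only [← X3]
  simp [minor36, Matrix.det_fin_three]
  ring

lemma support_minor (i j l : Fin 6) (b : Fin 3 × Fin 6 →₀ ℕ)
    (hb : b ∈ (minor36 k i j l).support) :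
    ex3 i j l = b ∨ ex3 i l j = b ∨ ex3 j i l = b ∨ ex3 l i j = b ∨ ex3 j l i = b
      ∨ ex3 l j i = b := by
  rw [mem_support_iff, minor_eqm] at hb
  simp only [coeff_sub, coeff_add, coeff_monomial] at hb
  by_contra hc
  push_neg at hc
  obtain ⟨h1, h2, h3, h4, h5, h6⟩ := hc
  simp [h1, h2, h3, h4, h5, h6] at hb

lemma exists_lead (o : MonoOrder (Fin 3 × Fin 6)) (f : MvPolynomial (Fin 3 × Fin 6) k)
    (hf : f ≠ 0) : ∃ a, IsLead o f a := by
  obtain ⟨a, ha, hmin⟩ := o.wf.has_min (↑f.support : Set _)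
    (by simpa using MvPolynomial.support_nonempty.mpr hf)
  refine ⟨a, ha, fun b hb hne => ?_⟩
  rcases o.trichot a b with h | h | h
  · exact h
  · exact absurd h.symm hne
  · exact absurd h (hmin b hb)

lemma lead012 (o : MonoOrder (Fin 3 × Fin 6))
    (href : ∀ a b, monWeight a < monWeight b → o.lt a b)
    (b : Fin 3 × Fin 6 →₀ ℕ) (hb : IsLead o (minor36 k 0 1 2) b) :
    b = ex3 1 2 0 := by
  have hm : ex3 1 2 0 ∈ (minor36 k 0 1 2).support := by
    rw [mem_support_iff, minor_eqm]
    simp [ex3_eq_iff]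
  by_contra hne
  have hlt := hb.2 _ hm (fun h => hne h.symm)
  have hsupp := support_minor 0 1 2 b hb.1
  have hwlt : monWeight (ex3 1 2 0) < monWeight b := by
    rcases hsupp with h | h | h | h | h | h <;> rw [← h] <;>
      first
        | exact absurd h.symm hne
        | norm_num [mw3, W00, W01, W02, W03, W04, W05, W10, W11, W12, W13, W14, W15, W20, W21, W22, W23, W24, W25]
  exact o.irrefl b (o.trans _ _ _ hlt (href _ _ hwlt))

lemma lead013 (o : MonoOrder (Fin 3 × Fin 6))
    (href : ∀ a b, monWeight a < monWeight b → o.lt a b)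
    (b : Fin 3 × Fin 6 →₀ ℕ) (hb : IsLead o (minor36 k 0 1 3) b) :
    b = ex3 1 3 0 := by
  have hm : ex3 1 3 0 ∈ (minor36 k 0 1 3).support := by
    rw [mem_support_iff, minor_eqm]
    simp [ex3_eq_iff]
  by_contra hne
  have hlt := hb.2 _ hm (fun h => hne h.symm)
  have hsupp := support_minor 0 1 3 b hb.1
  have hwlt : monWeight (ex3 1 3 0) < monWeight b := by
    rcases hsupp with h | h | h | h | h | h <;> rw [← h] <;>
      first
        | exact absurd h.symm hne
        | norm_num [mw3, W00, W01, W02, W03, W04, W05, W10, W11, W12, W13, W14, W15, W20, W21, W22, W23, W24, W25]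
  exact o.irrefl b (o.trans _ _ _ hlt (href _ _ hwlt))

lemma lead014 (o : MonoOrder (Fin 3 × Fin 6))
    (href : ∀ a b, monWeight a < monWeight b → o.lt a b)
    (b : Fin 3 × Fin 6 →₀ ℕ) (hb : IsLead o (minor36 k 0 1 4) b) :
    b = ex3 4 0 1 := by
  have hm : ex3 4 0 1 ∈ (minor36 k 0 1 4).support := by
    rw [mem_support_iff, minor_eqm]
    simp [ex3_eq_iff]
  by_contra hne
  have hlt := hb.2 _ hm (fun h => hne h.symm)
  have hsupp := support_minor 0 1 4 b hb.1
  have hwlt : monWeight (ex3 4 0 1) < monWeight b := by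
    rcases hsupp with h | h | h | h | h | h <;> rw [← h] <;>
      first
        | exact absurd h.symm hne
        | norm_num [mw3, W00, W01, W02, W03, W04, W05, W10, W11, W12, W13, W14, W15, W20, W21, W22, W23, W24, W25]
  exact o.irrefl b (o.trans _ _ _ hlt (href _ _ hwlt))

lemma lead015 (o : MonoOrder (Fin 3 × Fin 6))
    (href : ∀ a b, monWeight a < monWeight b → o.lt a b)
    (b : Fin 3 × Fin 6 →₀ ℕ) (hb : IsLead o (minor36 k 0 1 5) b) :
    b = ex3 5 0 1 := by
  have hm : ex3 5 0 1 ∈ (minor36 k 0 1 5).support := by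
    rw [mem_support_iff, minor_eqm]
    simp [ex3_eq_iff]
  by_contra hne
  have hlt := hb.2 _ hm (fun h => hne h.symm)
  have hsupp := support_minor 0 1 5 b hb.1
  have hwlt : monWeight (ex3 5 0 1) < monWeight b := by
    rcases hsupp with h | h | h | h | h | h <;> rw [← h] <;>
      first
        | exact absurd h.symm hne
        | norm_num [mw3, W00, W01, W02, W03, W04, W05, W10, W11, W12, W13, W14, W15, W20, W21, W22, W23, W24, W25]
  exact o.irrefl b (o.trans _ _ _ hlt (href _ _ hwlt))

lemma lead023 (o : MonoOrder (Fin 3 × Fin 6))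
    (href : ∀ a b, monWeight a < monWeight b → o.lt a b)
    (b : Fin 3 × Fin 6 →₀ ℕ) (hb : IsLead o (minor36 k 0 2 3) b) :
    b = ex3 3 2 0 := by
  have hm : ex3 3 2 0 ∈ (minor36 k 0 2 3).support := by
    rw [mem_support_iff, minor_eqm]
    simp [ex3_eq_iff]
  by_contra hne
  have hlt := hb.2 _ hm (fun h => hne h.symm)
  have hsupp := support_minor 0 2 3 b hb.1
  have hwlt : monWeight (ex3 3 2 0) < monWeight b := by
    rcases hsupp with h | h | h | h | h | h <;> rw [← h] <;>
      first
        | exact absurd h.symm hne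
        | norm_num [mw3, W00, W01, W02, W03, W04, W05, W10, W11, W12, W13, W14, W15, W20, W21, W22, W23, W24, W25]
  exact o.irrefl b (o.trans _ _ _ hlt (href _ _ hwlt))

lemma lead024 (o : MonoOrder (Fin 3 × Fin 6))
    (href : ∀ a b, monWeight a < monWeight b → o.lt a b)
    (b : Fin 3 × Fin 6 →₀ ℕ) (hb : IsLead o (minor36 k 0 2 4) b) :
    b = ex3 4 2 0 := by
  have hm : ex3 4 2 0 ∈ (minor36 k 0 2 4).support := by
    rw [mem_support_iff, minor_eqm]
    simp [ex3_eq_iff]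
  by_contra hne
  have hlt := hb.2 _ hm (fun h => hne h.symm)
  have hsupp := support_minor 0 2 4 b hb.1
  have hwlt : monWeight (ex3 4 2 0) < monWeight b := by
    rcases hsupp with h | h | h | h | h | h <;> rw [← h] <;>
      first
        | exact absurd h.symm hne
        | norm_num [mw3, W00, W01, W02, W03, W04, W05, W10, W11, W12, W13, W14, W15, W20, W21, W22, W23, W24, W25]
  exact o.irrefl b (o.trans _ _ _ hlt (href _ _ hwlt))

lemma lead025 (o : MonoOrder (Fin 3 × Fin 6))
    (href : ∀ a b, monWeight a < monWeight b → o.lt a b)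
    (b : Fin 3 × Fin 6 →₀ ℕ) (hb : IsLead o (minor36 k 0 2 5) b) :
    b = ex3 5 2 0 := by
  have hm : ex3 5 2 0 ∈ (minor36 k 0 2 5).support := by
    rw [mem_support_iff, minor_eqm]
    simp [ex3_eq_iff]
  by_contra hne
  have hlt := hb.2 _ hm (fun h => hne h.symm)
  have hsupp := support_minor 0 2 5 b hb.1
  have hwlt : monWeight (ex3 5 2 0) < monWeight b := by
    rcases hsupp with h | h | h | h | h | h <;> rw [← h] <;>
      first
        | exact absurd h.symm hne
        | norm_num [mw3, W00, W01, W02, W03, W04, W05, W10, W11, W12, W13, W14, W15, W20, W21, W22, W23, W24, W25]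
  exact o.irrefl b (o.trans _ _ _ hlt (href _ _ hwlt))

lemma lead034 (o : MonoOrder (Fin 3 × Fin 6))
    (href : ∀ a b, monWeight a < monWeight b → o.lt a b)
    (b : Fin 3 × Fin 6 →₀ ℕ) (hb : IsLead o (minor36 k 0 3 4) b) :
    b = ex3 4 3 0 := by
  have hm : ex3 4 3 0 ∈ (minor36 k 0 3 4).support := by
    rw [mem_support_iff, minor_eqm]
    simp [ex3_eq_iff]
  by_contra hne
  have hlt := hb.2 _ hm (fun h => hne h.symm)
  have hsupp := support_minor 0 3 4 b hb.1
  have hwlt : monWeight (ex3 4 3 0) < monWeight b := by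
    rcases hsupp with h | h | h | h | h | h <;> rw [← h] <;>
      first
        | exact absurd h.symm hne
        | norm_num [mw3, W00, W01, W02, W03, W04, W05, W10, W11, W12, W13, W14, W15, W20, W21, W22, W23, W24, W25]
  exact o.irrefl b (o.trans _ _ _ hlt (href _ _ hwlt))

lemma lead035 (o : MonoOrder (Fin 3 × Fin 6))
    (href : ∀ a b, monWeight a < monWeight b → o.lt a b)
    (b : Fin 3 × Fin 6 →₀ ℕ) (hb : IsLead o (minor36 k 0 3 5) b) :
    b = ex3 5 3 0 := by
  have hm : ex3 5 3 0 ∈ (minor36 k 0 3 5).support := by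
    rw [mem_support_iff, minor_eqm]
    simp [ex3_eq_iff]
  by_contra hne
  have hlt := hb.2 _ hm (fun h => hne h.symm)
  have hsupp := support_minor 0 3 5 b hb.1
  have hwlt : monWeight (ex3 5 3 0) < monWeight b := by
    rcases hsupp with h | h | h | h | h | h <;> rw [← h] <;>
      first
        | exact absurd h.symm hne
        | norm_num [mw3, W00, W01, W02, W03, W04, W05, W10, W11, W12, W13, W14, W15, W20, W21, W22, W23, W24, W25]
  exact o.irrefl b (o.trans _ _ _ hlt (href _ _ hwlt))

lemma lead045 (o : MonoOrder (Fin 3 × Fin 6))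
    (href : ∀ a b, monWeight a < monWeight b → o.lt a b)
    (b : Fin 3 × Fin 6 →₀ ℕ) (hb : IsLead o (minor36 k 0 4 5) b) :
    b = ex3 4 5 0 := by
  have hm : ex3 4 5 0 ∈ (minor36 k 0 4 5).support := by
    rw [mem_support_iff, minor_eqm]
    simp [ex3_eq_iff]
  by_contra hne
  have hlt := hb.2 _ hm (fun h => hne h.symm)
  have hsupp := support_minor 0 4 5 b hb.1
  have hwlt : monWeight (ex3 4 5 0) < monWeight b := by
    rcases hsupp with h | h | h | h | h | h <;> rw [← h] <;>
      first
        | exact absurd h.symm hne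
        | norm_num [mw3, W00, W01, W02, W03, W04, W05, W10, W11, W12, W13, W14, W15, W20, W21, W22, W23, W24, W25]
  exact o.irrefl b (o.trans _ _ _ hlt (href _ _ hwlt))

lemma lead123 (o : MonoOrder (Fin 3 × Fin 6))
    (href : ∀ a b, monWeight a < monWeight b → o.lt a b)
    (b : Fin 3 × Fin 6 →₀ ℕ) (hb : IsLead o (minor36 k 1 2 3) b) :
    b = ex3 3 2 1 := by
  have hm : ex3 3 2 1 ∈ (minor36 k 1 2 3).support := by
    rw [mem_support_iff, minor_eqm]
    simp [ex3_eq_iff]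
  by_contra hne
  have hlt := hb.2 _ hm (fun h => hne h.symm)
  have hsupp := support_minor 1 2 3 b hb.1
  have hwlt : monWeight (ex3 3 2 1) < monWeight b := by
    rcases hsupp with h | h | h | h | h | h <;> rw [← h] <;>
      first
        | exact absurd h.symm hne
        | norm_num [mw3, W00, W01, W02, W03, W04, W05, W10, W11, W12, W13, W14, W15, W20, W21, W22, W23, W24, W25]
  exact o.irrefl b (o.trans _ _ _ hlt (href _ _ hwlt))

lemma lead124 (o : MonoOrder (Fin 3 × Fin 6))
    (href : ∀ a b, monWeight a < monWeight b → o.lt a b)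
    (b : Fin 3 × Fin 6 →₀ ℕ) (hb : IsLead o (minor36 k 1 2 4) b) :
    b = ex3 4 2 1 := by
  have hm : ex3 4 2 1 ∈ (minor36 k 1 2 4).support := by
    rw [mem_support_iff, minor_eqm]
    simp [ex3_eq_iff]
  by_contra hne
  have hlt := hb.2 _ hm (fun h => hne h.symm)
  have hsupp := support_minor 1 2 4 b hb.1
  have hwlt : monWeight (ex3 4 2 1) < monWeight b := by
    rcases hsupp with h | h | h | h | h | h <;> rw [← h] <;>
      first
        | exact absurd h.symm hne
        | norm_num [mw3, W00, W01, W02, W03, W04, W05, W10, W11, W12, W13, W14, W15, W20, W21, W22, W23, W24, W25]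
  exact o.irrefl b (o.trans _ _ _ hlt (href _ _ hwlt))

lemma lead125 (o : MonoOrder (Fin 3 × Fin 6))
    (href : ∀ a b, monWeight a < monWeight b → o.lt a b)
    (b : Fin 3 × Fin 6 →₀ ℕ) (hb : IsLead o (minor36 k 1 2 5) b) :
    b = ex3 5 2 1 := by
  have hm : ex3 5 2 1 ∈ (minor36 k 1 2 5).support := by
    rw [mem_support_iff, minor_eqm]
    simp [ex3_eq_iff]
  by_contra hne
  have hlt := hb.2 _ hm (fun h => hne h.symm)
  have hsupp := support_minor 1 2 5 b hb.1
  have hwlt : monWeight (ex3 5 2 1) < monWeight b := by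
    rcases hsupp with h | h | h | h | h | h <;> rw [← h] <;>
      first
        | exact absurd h.symm hne
        | norm_num [mw3, W00, W01, W02, W03, W04, W05, W10, W11, W12, W13, W14, W15, W20, W21, W22, W23, W24, W25]
  exact o.irrefl b (o.trans _ _ _ hlt (href _ _ hwlt))

lemma lead134 (o : MonoOrder (Fin 3 × Fin 6))
    (href : ∀ a b, monWeight a < monWeight b → o.lt a b)
    (b : Fin 3 × Fin 6 →₀ ℕ) (hb : IsLead o (minor36 k 1 3 4) b) :
    b = ex3 4 3 1 := by
  have hm : ex3 4 3 1 ∈ (minor36 k 1 3 4).support := by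
    rw [mem_support_iff, minor_eqm]
    simp [ex3_eq_iff]
  by_contra hne
  have hlt := hb.2 _ hm (fun h => hne h.symm)
  have hsupp := support_minor 1 3 4 b hb.1
  have hwlt : monWeight (ex3 4 3 1) < monWeight b := by
    rcases hsupp with h | h | h | h | h | h <;> rw [← h] <;>
      first
        | exact absurd h.symm hne
        | norm_num [mw3, W00, W01, W02, W03, W04, W05, W10, W11, W12, W13, W14, W15, W20, W21, W22, W23, W24, W25]
  exact o.irrefl b (o.trans _ _ _ hlt (href _ _ hwlt))

lemma lead135 (o : MonoOrder (Fin 3 × Fin 6))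
    (href : ∀ a b, monWeight a < monWeight b → o.lt a b)
    (b : Fin 3 × Fin 6 →₀ ℕ) (hb : IsLead o (minor36 k 1 3 5) b) :
    b = ex3 5 3 1 := by
  have hm : ex3 5 3 1 ∈ (minor36 k 1 3 5).support := by
    rw [mem_support_iff, minor_eqm]
    simp [ex3_eq_iff]
  by_contra hne
  have hlt := hb.2 _ hm (fun h => hne h.symm)
  have hsupp := support_minor 1 3 5 b hb.1
  have hwlt : monWeight (ex3 5 3 1) < monWeight b := by
    rcases hsupp with h | h | h | h | h | h <;> rw [← h] <;>
      first
        | exact absurd h.symm hne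
        | norm_num [mw3, W00, W01, W02, W03, W04, W05, W10, W11, W12, W13, W14, W15, W20, W21, W22, W23, W24, W25]
  exact o.irrefl b (o.trans _ _ _ hlt (href _ _ hwlt))

lemma lead145 (o : MonoOrder (Fin 3 × Fin 6))
    (href : ∀ a b, monWeight a < monWeight b → o.lt a b)
    (b : Fin 3 × Fin 6 →₀ ℕ) (hb : IsLead o (minor36 k 1 4 5) b) :
    b = ex3 4 5 1 := by
  have hm : ex3 4 5 1 ∈ (minor36 k 1 4 5).support := by
    rw [mem_support_iff, minor_eqm]
    simp [ex3_eq_iff]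
  by_contra hne
  have hlt := hb.2 _ hm (fun h => hne h.symm)
  have hsupp := support_minor 1 4 5 b hb.1
  have hwlt : monWeight (ex3 4 5 1) < monWeight b := by
    rcases hsupp with h | h | h | h | h | h <;> rw [← h] <;>
      first
        | exact absurd h.symm hne
        | norm_num [mw3, W00, W01, W02, W03, W04, W05, W10, W11, W12, W13, W14, W15, W20, W21, W22, W23, W24, W25]
  exact o.irrefl b (o.trans _ _ _ hlt (href _ _ hwlt))

lemma lead234 (o : MonoOrder (Fin 3 × Fin 6))
    (href : ∀ a b, monWeight a < monWeight b → o.lt a b)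
    (b : Fin 3 × Fin 6 →₀ ℕ) (hb : IsLead o (minor36 k 2 3 4) b) :
    b = ex3 4 3 2 := by
  have hm : ex3 4 3 2 ∈ (minor36 k 2 3 4).support := by
    rw [mem_support_iff, minor_eqm]
    simp [ex3_eq_iff]
  by_contra hne
  have hlt := hb.2 _ hm (fun h => hne h.symm)
  have hsupp := support_minor 2 3 4 b hb.1
  have hwlt : monWeight (ex3 4 3 2) < monWeight b := by
    rcases hsupp with h | h | h | h | h | h <;> rw [← h] <;>
      first
        | exact absurd h.symm hne
        | norm_num [mw3, W00, W01, W02, W03, W04, W05, W10, W11, W12, W13, W14, W15, W20, W21, W22, W23, W24, W25]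
  exact o.irrefl b (o.trans _ _ _ hlt (href _ _ hwlt))

lemma lead235 (o : MonoOrder (Fin 3 × Fin 6))
    (href : ∀ a b, monWeight a < monWeight b → o.lt a b)
    (b : Fin 3 × Fin 6 →₀ ℕ) (hb : IsLead o (minor36 k 2 3 5) b) :
    b = ex3 5 3 2 := by
  have hm : ex3 5 3 2 ∈ (minor36 k 2 3 5).support := by
    rw [mem_support_iff, minor_eqm]
    simp [ex3_eq_iff]
  by_contra hne
  have hlt := hb.2 _ hm (fun h => hne h.symm)
  have hsupp := support_minor 2 3 5 b hb.1
  have hwlt : monWeight (ex3 5 3 2) < monWeight b := by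
    rcases hsupp with h | h | h | h | h | h <;> rw [← h] <;>
      first
        | exact absurd h.symm hne
        | norm_num [mw3, W00, W01, W02, W03, W04, W05, W10, W11, W12, W13, W14, W15, W20, W21, W22, W23, W24, W25]
  exact o.irrefl b (o.trans _ _ _ hlt (href _ _ hwlt))

lemma lead245 (o : MonoOrder (Fin 3 × Fin 6))
    (href : ∀ a b, monWeight a < monWeight b → o.lt a b)
    (b : Fin 3 × Fin 6 →₀ ℕ) (hb : IsLead o (minor36 k 2 4 5) b) :
    b = ex3 5 2 4 := by
  have hm : ex3 5 2 4 ∈ (minor36 k 2 4 5).support := by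
    rw [mem_support_iff, minor_eqm]
    simp [ex3_eq_iff]
  by_contra hne
  have hlt := hb.2 _ hm (fun h => hne h.symm)
  have hsupp := support_minor 2 4 5 b hb.1
  have hwlt : monWeight (ex3 5 2 4) < monWeight b := by
    rcases hsupp with h | h | h | h | h | h <;> rw [← h] <;>
      first
        | exact absurd h.symm hne
        | norm_num [mw3, W00, W01, W02, W03, W04, W05, W10, W11, W12, W13, W14, W15, W20, W21, W22, W23, W24, W25]
  exact o.irrefl b (o.trans _ _ _ hlt (href _ _ hwlt))

lemma lead345 (o : MonoOrder (Fin 3 × Fin 6))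
    (href : ∀ a b, monWeight a < monWeight b → o.lt a b)
    (b : Fin 3 × Fin 6 →₀ ℕ) (hb : IsLead o (minor36 k 3 4 5) b) :
    b = ex3 5 3 4 := by
  have hm : ex3 5 3 4 ∈ (minor36 k 3 4 5).support := by
    rw [mem_support_iff, minor_eqm]
    simp [ex3_eq_iff]
  by_contra hne
  have hlt := hb.2 _ hm (fun h => hne h.symm)
  have hsupp := support_minor 3 4 5 b hb.1
  have hwlt : monWeight (ex3 5 3 4) < monWeight b := by
    rcases hsupp with h | h | h | h | h | h <;> rw [← h] <;>
      first
        | exact absurd h.symm hne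
        | norm_num [mw3, W00, W01, W02, W03, W04, W05, W10, W11, W12, W13, W14, W15, W20, W21, W22, W23, W24, W25]
  exact o.irrefl b (o.trans _ _ _ hlt (href _ _ hwlt))

noncomputable def gpoly (k : Type) [Field k] : MvPolynomial (Fin 3 × Fin 6) k :=
  minor36 k 0 1 4 * minor36 k 2 3 5 - minor36 k 0 1 5 * minor36 k 2 3 4

lemma g_eq : gpoly k =
    monomial (ex6 1 4 3 5 0 2) 1 + monomial (ex6 3 5 0 2 1 4) 1 - monomial (ex6 0 4 3 5 1 2) 1 
      + monomial (ex6 1 3 2 5 0 4) 1 - monomial (ex6 1 4 2 5 0 3) 1 + monomial (ex6 1 5 0 3 2 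
      4) 1 - monomial (ex6 1 5 3 4 0 2) 1 - monomial (ex6 2 5 0 3 1 4) 1 - monomial (ex6 3 4 0 
      2 1 5) 1 + monomial (ex6 3 4 0 5 1 2) 1 - monomial (ex6 3 5 1 2 0 4) 1 - monomial (ex6 0 
      3 2 5 1 4) 1 + monomial (ex6 0 4 2 5 1 3) 1 + monomial (ex6 0 5 3 4 1 2) 1 - monomial 
      (ex6 1 2 3 5 0 4) 1 - monomial (ex6 1 4 0 3 2 5) 1 - monomial (ex6 1 5 0 2 3 4) 1 + 
      monomial (ex6 1 5 2 4 0 3) 1 + monomial (ex6 2 4 0 3 1 5) 1 + monomial (ex6 2 5 1 3 0 4) 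
      1 + monomial (ex6 3 4 1 2 0 5) 1 - monomial (ex6 3 4 1 5 0 2) 1 - monomial (ex6 3 5 0 4 1 
      2) 1 + monomial (ex6 0 2 3 5 1 4) 1 - monomial (ex6 0 5 1 3 2 4) 1 - monomial (ex6 0 5 2 
      4 1 3) 1 - monomial (ex6 1 3 0 5 2 4) 1 - monomial (ex6 1 3 2 4 0 5) 1 + monomial (ex6 1 
      4 0 2 3 5) 1 - monomial (ex6 2 4 0 5 1 3) 1 - monomial (ex6 2 4 1 3 0 5) 1 + monomial 
      (ex6 3 5 1 4 0 2) 1 + monomial (ex6 0 3 2 4 1 5) 1 + monomial (ex6 0 4 1 3 2 5) 1 + 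
      monomial (ex6 0 5 1 2 3 4) 1 + monomial (ex6 1 2 3 4 0 5) 1 + monomial (ex6 2 4 1 5 0 3) 
      1 + monomial (ex6 2 5 0 4 1 3) 1 - monomial (ex6 0 2 3 4 1 5) 1 + monomial (ex6 0 3 1 5 2 
      4) 1 - monomial (ex6 0 4 1 2 3 5) 1 + monomial (ex6 1 2 0 5 3 4) 1 + monomial (ex6 1 3 0 
      4 2 5) 1 - monomial (ex6 2 5 1 4 0 3) 1 - monomial (ex6 0 2 1 5 3 4) 1 - monomial (ex6 0 
      3 1 4 2 5) 1 - monomial (ex6 1 2 0 4 3 5) 1 + monomial (ex6 0 2 1 4 3 5) 1 := by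
  simp only [← X6]
  simp [gpoly, minor36, Matrix.det_fin_three]
  ring

lemma m1_mem : ex6 1 4 3 5 0 2 ∈ (gpoly k).support := by
  rw [mem_support_iff, g_eq]
  simp only [coeff_add, coeff_sub, coeff_monomial]
  have h2 : ¬ (ex6 3 5 0 2 1 4 = ex6 1 4 3 5 0 2) := by
    intro h
    have := DFunLike.ext_iff.mp h
    simp only [ex6_apply] at this
    exact absurd this (by decide)
  have h3 : ¬ (ex6 0 4 3 5 1 2 = ex6 1 4 3 5 0 2) := by
    intro h
    have := DFunLike.ext_iff.mp h
    simp only [ex6_apply] at this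
    exact absurd this (by decide)
  have h4 : ¬ (ex6 1 3 2 5 0 4 = ex6 1 4 3 5 0 2) := by
    intro h
    have := DFunLike.ext_iff.mp h
    simp only [ex6_apply] at this
    exact absurd this (by decide)
  have h5 : ¬ (ex6 1 4 2 5 0 3 = ex6 1 4 3 5 0 2) := by
    intro h
    have := DFunLike.ext_iff.mp h
    simp only [ex6_apply] at this
    exact absurd this (by decide)
  have h6 : ¬ (ex6 1 5 0 3 2 4 = ex6 1 4 3 5 0 2) := by
    intro h
    have := DFunLike.ext_iff.mp h
    simp only [ex6_apply] at this
    exact absurd this (by decide)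
  have h7 : ¬ (ex6 1 5 3 4 0 2 = ex6 1 4 3 5 0 2) := by
    intro h
    have := DFunLike.ext_iff.mp h
    simp only [ex6_apply] at this
    exact absurd this (by decide)
  have h8 : ¬ (ex6 2 5 0 3 1 4 = ex6 1 4 3 5 0 2) := by
    intro h
    have := DFunLike.ext_iff.mp h
    simp only [ex6_apply] at this
    exact absurd this (by decide)
  have h9 : ¬ (ex6 3 4 0 2 1 5 = ex6 1 4 3 5 0 2) := by
    intro h
    have := DFunLike.ext_iff.mp h
    simp only [ex6_apply] at this
    exact absurd this (by decide)
  have h10 : ¬ (ex6 3 4 0 5 1 2 = ex6 1 4 3 5 0 2) := by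
    intro h
    have := DFunLike.ext_iff.mp h
    simp only [ex6_apply] at this
    exact absurd this (by decide)
  have h11 : ¬ (ex6 3 5 1 2 0 4 = ex6 1 4 3 5 0 2) := by
    intro h
    have := DFunLike.ext_iff.mp h
    simp only [ex6_apply] at this
    exact absurd this (by decide)
  have h12 : ¬ (ex6 0 3 2 5 1 4 = ex6 1 4 3 5 0 2) := by
    intro h
    have := DFunLike.ext_iff.mp h
    simp only [ex6_apply] at this
    exact absurd this (by decide)
  have h13 : ¬ (ex6 0 4 2 5 1 3 = ex6 1 4 3 5 0 2) := by
    intro h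
    have := DFunLike.ext_iff.mp h
    simp only [ex6_apply] at this
    exact absurd this (by decide)
  have h14 : ¬ (ex6 0 5 3 4 1 2 = ex6 1 4 3 5 0 2) := by
    intro h
    have := DFunLike.ext_iff.mp h
    simp only [ex6_apply] at this
    exact absurd this (by decide)
  have h15 : ¬ (ex6 1 2 3 5 0 4 = ex6 1 4 3 5 0 2) := by
    intro h
    have := DFunLike.ext_iff.mp h
    simp only [ex6_apply] at this
    exact absurd this (by decide)
  have h16 : ¬ (ex6 1 4 0 3 2 5 = ex6 1 4 3 5 0 2) := by
    intro h
    have := DFunLike.ext_iff.mp h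
    simp only [ex6_apply] at this
    exact absurd this (by decide)
  have h17 : ¬ (ex6 1 5 0 2 3 4 = ex6 1 4 3 5 0 2) := by
    intro h
    have := DFunLike.ext_iff.mp h
    simp only [ex6_apply] at this
    exact absurd this (by decide)
  have h18 : ¬ (ex6 1 5 2 4 0 3 = ex6 1 4 3 5 0 2) := by
    intro h
    have := DFunLike.ext_iff.mp h
    simp only [ex6_apply] at this
    exact absurd this (by decide)
  have h19 : ¬ (ex6 2 4 0 3 1 5 = ex6 1 4 3 5 0 2) := by
    intro h
    have := DFunLike.ext_iff.mp h
    simp only [ex6_apply] at this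
    exact absurd this (by decide)
  have h20 : ¬ (ex6 2 5 1 3 0 4 = ex6 1 4 3 5 0 2) := by
    intro h
    have := DFunLike.ext_iff.mp h
    simp only [ex6_apply] at this
    exact absurd this (by decide)
  have h21 : ¬ (ex6 3 4 1 2 0 5 = ex6 1 4 3 5 0 2) := by
    intro h
    have := DFunLike.ext_iff.mp h
    simp only [ex6_apply] at this
    exact absurd this (by decide)
  have h22 : ¬ (ex6 3 4 1 5 0 2 = ex6 1 4 3 5 0 2) := by
    intro h
    have := DFunLike.ext_iff.mp h
    simp only [ex6_apply] at this
    exact absurd this (by decide)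
  have h23 : ¬ (ex6 3 5 0 4 1 2 = ex6 1 4 3 5 0 2) := by
    intro h
    have := DFunLike.ext_iff.mp h
    simp only [ex6_apply] at this
    exact absurd this (by decide)
  have h24 : ¬ (ex6 0 2 3 5 1 4 = ex6 1 4 3 5 0 2) := by
    intro h
    have := DFunLike.ext_iff.mp h
    simp only [ex6_apply] at this
    exact absurd this (by decide)
  have h25 : ¬ (ex6 0 5 1 3 2 4 = ex6 1 4 3 5 0 2) := by
    intro h
    have := DFunLike.ext_iff.mp h
    simp only [ex6_apply] at this
    exact absurd this (by decide)
  have h26 : ¬ (ex6 0 5 2 4 1 3 = ex6 1 4 3 5 0 2) := by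
    intro h
    have := DFunLike.ext_iff.mp h
    simp only [ex6_apply] at this
    exact absurd this (by decide)
  have h27 : ¬ (ex6 1 3 0 5 2 4 = ex6 1 4 3 5 0 2) := by
    intro h
    have := DFunLike.ext_iff.mp h
    simp only [ex6_apply] at this
    exact absurd this (by decide)
  have h28 : ¬ (ex6 1 3 2 4 0 5 = ex6 1 4 3 5 0 2) := by
    intro h
    have := DFunLike.ext_iff.mp h
    simp only [ex6_apply] at this
    exact absurd this (by decide)
  have h29 : ¬ (ex6 1 4 0 2 3 5 = ex6 1 4 3 5 0 2) := by
    intro h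
    have := DFunLike.ext_iff.mp h
    simp only [ex6_apply] at this
    exact absurd this (by decide)
  have h30 : ¬ (ex6 2 4 0 5 1 3 = ex6 1 4 3 5 0 2) := by
    intro h
    have := DFunLike.ext_iff.mp h
    simp only [ex6_apply] at this
    exact absurd this (by decide)
  have h31 : ¬ (ex6 2 4 1 3 0 5 = ex6 1 4 3 5 0 2) := by
    intro h
    have := DFunLike.ext_iff.mp h
    simp only [ex6_apply] at this
    exact absurd this (by decide)
  have h32 : ¬ (ex6 3 5 1 4 0 2 = ex6 1 4 3 5 0 2) := by
    intro h
    have := DFunLike.ext_iff.mp h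
    simp only [ex6_apply] at this
    exact absurd this (by decide)
  have h33 : ¬ (ex6 0 3 2 4 1 5 = ex6 1 4 3 5 0 2) := by
    intro h
    have := DFunLike.ext_iff.mp h
    simp only [ex6_apply] at this
    exact absurd this (by decide)
  have h34 : ¬ (ex6 0 4 1 3 2 5 = ex6 1 4 3 5 0 2) := by
    intro h
    have := DFunLike.ext_iff.mp h
    simp only [ex6_apply] at this
    exact absurd this (by decide)
  have h35 : ¬ (ex6 0 5 1 2 3 4 = ex6 1 4 3 5 0 2) := by
    intro h
    have := DFunLike.ext_iff.mp h
    simp only [ex6_apply] at this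
    exact absurd this (by decide)
  have h36 : ¬ (ex6 1 2 3 4 0 5 = ex6 1 4 3 5 0 2) := by
    intro h
    have := DFunLike.ext_iff.mp h
    simp only [ex6_apply] at this
    exact absurd this (by decide)
  have h37 : ¬ (ex6 2 4 1 5 0 3 = ex6 1 4 3 5 0 2) := by
    intro h
    have := DFunLike.ext_iff.mp h
    simp only [ex6_apply] at this
    exact absurd this (by decide)
  have h38 : ¬ (ex6 2 5 0 4 1 3 = ex6 1 4 3 5 0 2) := by
    intro h
    have := DFunLike.ext_iff.mp h
    simp only [ex6_apply] at this
    exact absurd this (by decide)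
  have h39 : ¬ (ex6 0 2 3 4 1 5 = ex6 1 4 3 5 0 2) := by
    intro h
    have := DFunLike.ext_iff.mp h
    simp only [ex6_apply] at this
    exact absurd this (by decide)
  have h40 : ¬ (ex6 0 3 1 5 2 4 = ex6 1 4 3 5 0 2) := by
    intro h
    have := DFunLike.ext_iff.mp h
    simp only [ex6_apply] at this
    exact absurd this (by decide)
  have h41 : ¬ (ex6 0 4 1 2 3 5 = ex6 1 4 3 5 0 2) := by
    intro h
    have := DFunLike.ext_iff.mp h
    simp only [ex6_apply] at this
    exact absurd this (by decide)
  have h42 : ¬ (ex6 1 2 0 5 3 4 = ex6 1 4 3 5 0 2) := by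
    intro h
    have := DFunLike.ext_iff.mp h
    simp only [ex6_apply] at this
    exact absurd this (by decide)
  have h43 : ¬ (ex6 1 3 0 4 2 5 = ex6 1 4 3 5 0 2) := by
    intro h
    have := DFunLike.ext_iff.mp h
    simp only [ex6_apply] at this
    exact absurd this (by decide)
  have h44 : ¬ (ex6 2 5 1 4 0 3 = ex6 1 4 3 5 0 2) := by
    intro h
    have := DFunLike.ext_iff.mp h
    simp only [ex6_apply] at this
    exact absurd this (by decide)
  have h45 : ¬ (ex6 0 2 1 5 3 4 = ex6 1 4 3 5 0 2) := by
    intro h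
    have := DFunLike.ext_iff.mp h
    simp only [ex6_apply] at this
    exact absurd this (by decide)
  have h46 : ¬ (ex6 0 3 1 4 2 5 = ex6 1 4 3 5 0 2) := by
    intro h
    have := DFunLike.ext_iff.mp h
    simp only [ex6_apply] at this
    exact absurd this (by decide)
  have h47 : ¬ (ex6 1 2 0 4 3 5 = ex6 1 4 3 5 0 2) := by
    intro h
    have := DFunLike.ext_iff.mp h
    simp only [ex6_apply] at this
    exact absurd this (by decide)
  have h48 : ¬ (ex6 0 2 1 4 3 5 = ex6 1 4 3 5 0 2) := by
    intro h
    have := DFunLike.ext_iff.mp h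
    simp only [ex6_apply] at this
    exact absurd this (by decide)
  simp [h2, h3, h4, h5, h6, h7, h8, h9, h10, h11, h12, h13, h14, h15, h16, h17, h18, h19, h20, h21, h22, h23, h24, h25, h26, h27, h28, h29, h30, h31, h32, h33, h34, h35, h36, h37, h38, h39, h40, h41, h42, h43, h44, h45, h46, h47, h48]

lemma g_supp (b : Fin 3 × Fin 6 →₀ ℕ) (hb : b ∈ (gpoly k).support) :
    b = ex6 1 4 3 5 0 2 ∨ b = ex6 3 5 0 2 1 4 ∨ monWeight (ex6 1 4 3 5 0 2) < monWeight b := by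
  rw [mem_support_iff, g_eq] at hb
  simp only [coeff_add, coeff_sub, coeff_monomial] at hb
  by_cases h1 : ex6 1 4 3 5 0 2 = b
  · exact Or.inl h1.symm
  by_cases h2 : ex6 3 5 0 2 1 4 = b
  · exact Or.inr (Or.inl h2.symm)
  by_cases h3 : ex6 0 4 3 5 1 2 = b
  · refine Or.inr (Or.inr ?_)
    rw [← h3]
    norm_num [mw6, W00, W01, W02, W03, W04, W05, W10, W11, W12, W13, W14, W15, W20, W21, W22, W23, W24, W25]
  by_cases h4 : ex6 1 3 2 5 0 4 = b
  · refine Or.inr (Or.inr ?_)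
    rw [← h4]
    norm_num [mw6, W00, W01, W02, W03, W04, W05, W10, W11, W12, W13, W14, W15, W20, W21, W22, W23, W24, W25]
  by_cases h5 : ex6 1 4 2 5 0 3 = b
  · refine Or.inr (Or.inr ?_)
    rw [← h5]
    norm_num [mw6, W00, W01, W02, W03, W04, W05, W10, W11, W12, W13, W14, W15, W20, W21, W22, W23, W24, W25]
  by_cases h6 : ex6 1 5 0 3 2 4 = b
  · refine Or.inr (Or.inr ?_)
    rw [← h6]
    norm_num [mw6, W00, W01, W02, W03, W04, W05, W10, W11, W12, W13, W14, W15, W20, W21, W22, W23, W24, W25]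
  by_cases h7 : ex6 1 5 3 4 0 2 = b
  · refine Or.inr (Or.inr ?_)
    rw [← h7]
    norm_num [mw6, W00, W01, W02, W03, W04, W05, W10, W11, W12, W13, W14, W15, W20, W21, W22, W23, W24, W25]
  by_cases h8 : ex6 2 5 0 3 1 4 = b
  · refine Or.inr (Or.inr ?_)
    rw [← h8]
    norm_num [mw6, W00, W01, W02, W03, W04, W05, W10, W11, W12, W13, W14, W15, W20, W21, W22, W23, W24, W25]
  by_cases h9 : ex6 3 4 0 2 1 5 = b
  · refine Or.inr (Or.inr ?_)
    rw [← h9]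
    norm_num [mw6, W00, W01, W02, W03, W04, W05, W10, W11, W12, W13, W14, W15, W20, W21, W22, W23, W24, W25]
  by_cases h10 : ex6 3 4 0 5 1 2 = b
  · refine Or.inr (Or.inr ?_)
    rw [← h10]
    norm_num [mw6, W00, W01, W02, W03, W04, W05, W10, W11, W12, W13, W14, W15, W20, W21, W22, W23, W24, W25]
  by_cases h11 : ex6 3 5 1 2 0 4 = b
  · refine Or.inr (Or.inr ?_)
    rw [← h11]
    norm_num [mw6, W00, W01, W02, W03, W04, W05, W10, W11, W12, W13, W14, W15, W20, W21, W22, W23, W24, W25]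
  by_cases h12 : ex6 0 3 2 5 1 4 = b
  · refine Or.inr (Or.inr ?_)
    rw [← h12]
    norm_num [mw6, W00, W01, W02, W03, W04, W05, W10, W11, W12, W13, W14, W15, W20, W21, W22, W23, W24, W25]
  by_cases h13 : ex6 0 4 2 5 1 3 = b
  · refine Or.inr (Or.inr ?_)
    rw [← h13]
    norm_num [mw6, W00, W01, W02, W03, W04, W05, W10, W11, W12, W13, W14, W15, W20, W21, W22, W23, W24, W25]
  by_cases h14 : ex6 0 5 3 4 1 2 = b
  · refine Or.inr (Or.inr ?_)
    rw [← h14]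
    norm_num [mw6, W00, W01, W02, W03, W04, W05, W10, W11, W12, W13, W14, W15, W20, W21, W22, W23, W24, W25]
  by_cases h15 : ex6 1 2 3 5 0 4 = b
  · refine Or.inr (Or.inr ?_)
    rw [← h15]
    norm_num [mw6, W00, W01, W02, W03, W04, W05, W10, W11, W12, W13, W14, W15, W20, W21, W22, W23, W24, W25]
  by_cases h16 : ex6 1 4 0 3 2 5 = b
  · refine Or.inr (Or.inr ?_)
    rw [← h16]
    norm_num [mw6, W00, W01, W02, W03, W04, W05, W10, W11, W12, W13, W14, W15, W20, W21, W22, W23, W24, W25]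
  by_cases h17 : ex6 1 5 0 2 3 4 = b
  · refine Or.inr (Or.inr ?_)
    rw [← h17]
    norm_num [mw6, W00, W01, W02, W03, W04, W05, W10, W11, W12, W13, W14, W15, W20, W21, W22, W23, W24, W25]
  by_cases h18 : ex6 1 5 2 4 0 3 = b
  · refine Or.inr (Or.inr ?_)
    rw [← h18]
    norm_num [mw6, W00, W01, W02, W03, W04, W05, W10, W11, W12, W13, W14, W15, W20, W21, W22, W23, W24, W25]
  by_cases h19 : ex6 2 4 0 3 1 5 = b
  · refine Or.inr (Or.inr ?_)
    rw [← h19]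
    norm_num [mw6, W00, W01, W02, W03, W04, W05, W10, W11, W12, W13, W14, W15, W20, W21, W22, W23, W24, W25]
  by_cases h20 : ex6 2 5 1 3 0 4 = b
  · refine Or.inr (Or.inr ?_)
    rw [← h20]
    norm_num [mw6, W00, W01, W02, W03, W04, W05, W10, W11, W12, W13, W14, W15, W20, W21, W22, W23, W24, W25]
  by_cases h21 : ex6 3 4 1 2 0 5 = b
  · refine Or.inr (Or.inr ?_)
    rw [← h21]
    norm_num [mw6, W00, W01, W02, W03, W04, W05, W10, W11, W12, W13, W14, W15, W20, W21, W22, W23, W24, W25]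
  by_cases h22 : ex6 3 4 1 5 0 2 = b
  · refine Or.inr (Or.inr ?_)
    rw [← h22]
    norm_num [mw6, W00, W01, W02, W03, W04, W05, W10, W11, W12, W13, W14, W15, W20, W21, W22, W23, W24, W25]
  by_cases h23 : ex6 3 5 0 4 1 2 = b
  · refine Or.inr (Or.inr ?_)
    rw [← h23]
    norm_num [mw6, W00, W01, W02, W03, W04, W05, W10, W11, W12, W13, W14, W15, W20, W21, W22, W23, W24, W25]
  by_cases h24 : ex6 0 2 3 5 1 4 = b
  · refine Or.inr (Or.inr ?_)
    rw [← h24]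
    norm_num [mw6, W00, W01, W02, W03, W04, W05, W10, W11, W12, W13, W14, W15, W20, W21, W22, W23, W24, W25]
  by_cases h25 : ex6 0 5 1 3 2 4 = b
  · refine Or.inr (Or.inr ?_)
    rw [← h25]
    norm_num [mw6, W00, W01, W02, W03, W04, W05, W10, W11, W12, W13, W14, W15, W20, W21, W22, W23, W24, W25]
  by_cases h26 : ex6 0 5 2 4 1 3 = b
  · refine Or.inr (Or.inr ?_)
    rw [← h26]
    norm_num [mw6, W00, W01, W02, W03, W04, W05, W10, W11, W12, W13, W14, W15, W20, W21, W22, W23, W24, W25]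
  by_cases h27 : ex6 1 3 0 5 2 4 = b
  · refine Or.inr (Or.inr ?_)
    rw [← h27]
    norm_num [mw6, W00, W01, W02, W03, W04, W05, W10, W11, W12, W13, W14, W15, W20, W21, W22, W23, W24, W25]
  by_cases h28 : ex6 1 3 2 4 0 5 = b
  · refine Or.inr (Or.inr ?_)
    rw [← h28]
    norm_num [mw6, W00, W01, W02, W03, W04, W05, W10, W11, W12, W13, W14, W15, W20, W21, W22, W23, W24, W25]
  by_cases h29 : ex6 1 4 0 2 3 5 = b
  · refine Or.inr (Or.inr ?_)
    rw [← h29]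
    norm_num [mw6, W00, W01, W02, W03, W04, W05, W10, W11, W12, W13, W14, W15, W20, W21, W22, W23, W24, W25]
  by_cases h30 : ex6 2 4 0 5 1 3 = b
  · refine Or.inr (Or.inr ?_)
    rw [← h30]
    norm_num [mw6, W00, W01, W02, W03, W04, W05, W10, W11, W12, W13, W14, W15, W20, W21, W22, W23, W24, W25]
  by_cases h31 : ex6 2 4 1 3 0 5 = b
  · refine Or.inr (Or.inr ?_)
    rw [← h31]
    norm_num [mw6, W00, W01, W02, W03, W04, W05, W10, W11, W12, W13, W14, W15, W20, W21, W22, W23, W24, W25]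
  by_cases h32 : ex6 3 5 1 4 0 2 = b
  · refine Or.inr (Or.inr ?_)
    rw [← h32]
    norm_num [mw6, W00, W01, W02, W03, W04, W05, W10, W11, W12, W13, W14, W15, W20, W21, W22, W23, W24, W25]
  by_cases h33 : ex6 0 3 2 4 1 5 = b
  · refine Or.inr (Or.inr ?_)
    rw [← h33]
    norm_num [mw6, W00, W01, W02, W03, W04, W05, W10, W11, W12, W13, W14, W15, W20, W21, W22, W23, W24, W25]
  by_cases h34 : ex6 0 4 1 3 2 5 = b
  · refine Or.inr (Or.inr ?_)
    rw [← h34]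
    norm_num [mw6, W00, W01, W02, W03, W04, W05, W10, W11, W12, W13, W14, W15, W20, W21, W22, W23, W24, W25]
  by_cases h35 : ex6 0 5 1 2 3 4 = b
  · refine Or.inr (Or.inr ?_)
    rw [← h35]
    norm_num [mw6, W00, W01, W02, W03, W04, W05, W10, W11, W12, W13, W14, W15, W20, W21, W22, W23, W24, W25]
  by_cases h36 : ex6 1 2 3 4 0 5 = b
  · refine Or.inr (Or.inr ?_)
    rw [← h36]
    norm_num [mw6, W00, W01, W02, W03, W04, W05, W10, W11, W12, W13, W14, W15, W20, W21, W22, W23, W24, W25]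
  by_cases h37 : ex6 2 4 1 5 0 3 = b
  · refine Or.inr (Or.inr ?_)
    rw [← h37]
    norm_num [mw6, W00, W01, W02, W03, W04, W05, W10, W11, W12, W13, W14, W15, W20, W21, W22, W23, W24, W25]
  by_cases h38 : ex6 2 5 0 4 1 3 = b
  · refine Or.inr (Or.inr ?_)
    rw [← h38]
    norm_num [mw6, W00, W01, W02, W03, W04, W05, W10, W11, W12, W13, W14, W15, W20, W21, W22, W23, W24, W25]
  by_cases h39 : ex6 0 2 3 4 1 5 = b
  · refine Or.inr (Or.inr ?_)
    rw [← h39]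
    norm_num [mw6, W00, W01, W02, W03, W04, W05, W10, W11, W12, W13, W14, W15, W20, W21, W22, W23, W24, W25]
  by_cases h40 : ex6 0 3 1 5 2 4 = b
  · refine Or.inr (Or.inr ?_)
    rw [← h40]
    norm_num [mw6, W00, W01, W02, W03, W04, W05, W10, W11, W12, W13, W14, W15, W20, W21, W22, W23, W24, W25]
  by_cases h41 : ex6 0 4 1 2 3 5 = b
  · refine Or.inr (Or.inr ?_)
    rw [← h41]
    norm_num [mw6, W00, W01, W02, W03, W04, W05, W10, W11, W12, W13, W14, W15, W20, W21, W22, W23, W24, W25]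
  by_cases h42 : ex6 1 2 0 5 3 4 = b
  · refine Or.inr (Or.inr ?_)
    rw [← h42]
    norm_num [mw6, W00, W01, W02, W03, W04, W05, W10, W11, W12, W13, W14, W15, W20, W21, W22, W23, W24, W25]
  by_cases h43 : ex6 1 3 0 4 2 5 = b
  · refine Or.inr (Or.inr ?_)
    rw [← h43]
    norm_num [mw6, W00, W01, W02, W03, W04, W05, W10, W11, W12, W13, W14, W15, W20, W21, W22, W23, W24, W25]
  by_cases h44 : ex6 2 5 1 4 0 3 = b
  · refine Or.inr (Or.inr ?_)
    rw [← h44]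
    norm_num [mw6, W00, W01, W02, W03, W04, W05, W10, W11, W12, W13, W14, W15, W20, W21, W22, W23, W24, W25]
  by_cases h45 : ex6 0 2 1 5 3 4 = b
  · refine Or.inr (Or.inr ?_)
    rw [← h45]
    norm_num [mw6, W00, W01, W02, W03, W04, W05, W10, W11, W12, W13, W14, W15, W20, W21, W22, W23, W24, W25]
  by_cases h46 : ex6 0 3 1 4 2 5 = b
  · refine Or.inr (Or.inr ?_)
    rw [← h46]
    norm_num [mw6, W00, W01, W02, W03, W04, W05, W10, W11, W12, W13, W14, W15, W20, W21, W22, W23, W24, W25]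
  by_cases h47 : ex6 1 2 0 4 3 5 = b
  · refine Or.inr (Or.inr ?_)
    rw [← h47]
    norm_num [mw6, W00, W01, W02, W03, W04, W05, W10, W11, W12, W13, W14, W15, W20, W21, W22, W23, W24, W25]
  by_cases h48 : ex6 0 2 1 4 3 5 = b
  · refine Or.inr (Or.inr ?_)
    rw [← h48]
    norm_num [mw6, W00, W01, W02, W03, W04, W05, W10, W11, W12, W13, W14, W15, W20, W21, W22, W23, W24, W25]
  exact absurd hb (by simp [h1, h2, h3, h4, h5, h6, h7, h8, h9, h10, h11, h12, h13, h14, h15, h16, h17, h18, h19, h20, h21, h22, h23, h24, h25, h26, h27, h28, h29, h30, h31, h32, h33, h34, h35, h36, h37, h38, h39, h40, h41, h42, h43, h44, h45, h46, h47, h48])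

noncomputable def Dh : (Fin 3 × Fin 6 →₀ ℕ) →+ ℕ where
  toFun f := ∑ p : Fin 3 × Fin 6, f p
  map_zero' := by simp
  map_add' f g := by simp [Finset.sum_add_distrib]

lemma Dh_ex3 (a b c : Fin 6) : Dh (ex3 a b c) = 3 := by
  simp [Dh, ex3_apply, f3, Finset.sum_add_distrib]

lemma Dh_ex6 (a b c d e f : Fin 6) : Dh (ex6 a b c d e f) = 6 := by
  rw [ex6, map_add, Dh_ex3, Dh_ex3]

def cA : Fin 20 → Fin 6 := ![1,1,4,5,3,4,5,4,5,4,3,4,5,4,5,4,4,5,5,5]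
def cB : Fin 20 → Fin 6 := ![2,3,0,0,2,2,2,3,3,5,2,2,2,3,3,5,3,3,2,3]
def cC : Fin 20 → Fin 6 := ![0,0,1,1,0,0,0,0,0,0,1,1,1,1,1,1,2,2,4,4]

lemma nonrep1 : ∀ t s : Fin 20,
    ¬ ∀ p, f3 (cA t) (cB t) (cC t) p + f3 (cA s) (cB s) (cC s) p
        = f3 1 3 0 p + f3 4 5 2 p := by decide

lemma nonrep2 : ∀ t s : Fin 20,
    ¬ ∀ p, f3 (cA t) (cB t) (cC t) p + f3 (cA s) (cB s) (cC s) p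
        = f3 3 0 1 p + f3 5 2 4 p := by decide

lemma mem_L20 (o : MonoOrder (Fin 3 × Fin 6))
    (href : ∀ a b, monWeight a < monWeight b → o.lt a b)
    (b : Fin 3 × Fin 6 →₀ ℕ)
    (hb : ∃ i j l : Fin 6, i < j ∧ j < l ∧ IsLead o (minor36 k i j l) b) :
    ∃ t : Fin 20, b = ex3 (cA t) (cB t) (cC t) := by
  obtain ⟨i, j, l, hij, hjl, hlead⟩ := hb
  have hcase :
      (i = 0 ∧ j = 1 ∧ l = 2)
      ∨ (i = 0 ∧ j = 1 ∧ l = 3)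
      ∨ (i = 0 ∧ j = 1 ∧ l = 4)
      ∨ (i = 0 ∧ j = 1 ∧ l = 5)
      ∨ (i = 0 ∧ j = 2 ∧ l = 3)
      ∨ (i = 0 ∧ j = 2 ∧ l = 4)
      ∨ (i = 0 ∧ j = 2 ∧ l = 5)
      ∨ (i = 0 ∧ j = 3 ∧ l = 4)
      ∨ (i = 0 ∧ j = 3 ∧ l = 5)
      ∨ (i = 0 ∧ j = 4 ∧ l = 5)
      ∨ (i = 1 ∧ j = 2 ∧ l = 3)
      ∨ (i = 1 ∧ j = 2 ∧ l = 4)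
      ∨ (i = 1 ∧ j = 2 ∧ l = 5)
      ∨ (i = 1 ∧ j = 3 ∧ l = 4)
      ∨ (i = 1 ∧ j = 3 ∧ l = 5)
      ∨ (i = 1 ∧ j = 4 ∧ l = 5)
      ∨ (i = 2 ∧ j = 3 ∧ l = 4)
      ∨ (i = 2 ∧ j = 3 ∧ l = 5)
      ∨ (i = 2 ∧ j = 4 ∧ l = 5)
      ∨ (i = 3 ∧ j = 4 ∧ l = 5) := by
    have hall : ∀ i j l : Fin 6, i < j → j < l →
        (i = 0 ∧ j = 1 ∧ l = 2) ∨ (i = 0 ∧ j = 1 ∧ l = 3) ∨ (i = 0 ∧ j = 1 ∧ l = 4)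
        ∨ (i = 0 ∧ j = 1 ∧ l = 5) ∨ (i = 0 ∧ j = 2 ∧ l = 3) ∨ (i = 0 ∧ j = 2 ∧ l = 4)
        ∨ (i = 0 ∧ j = 2 ∧ l = 5) ∨ (i = 0 ∧ j = 3 ∧ l = 4) ∨ (i = 0 ∧ j = 3 ∧ l = 5)
        ∨ (i = 0 ∧ j = 4 ∧ l = 5) ∨ (i = 1 ∧ j = 2 ∧ l = 3) ∨ (i = 1 ∧ j = 2 ∧ l = 4)
        ∨ (i = 1 ∧ j = 2 ∧ l = 5) ∨ (i = 1 ∧ j = 3 ∧ l = 4) ∨ (i = 1 ∧ j = 3 ∧ l = 5)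
        ∨ (i = 1 ∧ j = 4 ∧ l = 5) ∨ (i = 2 ∧ j = 3 ∧ l = 4) ∨ (i = 2 ∧ j = 3 ∧ l = 5)
        ∨ (i = 2 ∧ j = 4 ∧ l = 5) ∨ (i = 3 ∧ j = 4 ∧ l = 5) := by decide
    exact hall i j l hij hjl

  rcases hcase with ⟨rfl, rfl, rfl⟩ | hcase
  · exact ⟨0, by rw [lead012 o href b hlead]; rfl⟩
  rcases hcase with ⟨rfl, rfl, rfl⟩ | hcase
  · exact ⟨1, by rw [lead013 o href b hlead]; rfl⟩
  rcases hcase with ⟨rfl, rfl, rfl⟩ | hcase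
  · exact ⟨2, by rw [lead014 o href b hlead]; rfl⟩
  rcases hcase with ⟨rfl, rfl, rfl⟩ | hcase
  · exact ⟨3, by rw [lead015 o href b hlead]; rfl⟩
  rcases hcase with ⟨rfl, rfl, rfl⟩ | hcase
  · exact ⟨4, by rw [lead023 o href b hlead]; rfl⟩
  rcases hcase with ⟨rfl, rfl, rfl⟩ | hcase
  · exact ⟨5, by rw [lead024 o href b hlead]; rfl⟩
  rcases hcase with ⟨rfl, rfl, rfl⟩ | hcase
  · exact ⟨6, by rw [lead025 o href b hlead]; rfl⟩
  rcases hcase with ⟨rfl, rfl, rfl⟩ | hcase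
  · exact ⟨7, by rw [lead034 o href b hlead]; rfl⟩
  rcases hcase with ⟨rfl, rfl, rfl⟩ | hcase
  · exact ⟨8, by rw [lead035 o href b hlead]; rfl⟩
  rcases hcase with ⟨rfl, rfl, rfl⟩ | hcase
  · exact ⟨9, by rw [lead045 o href b hlead]; rfl⟩
  rcases hcase with ⟨rfl, rfl, rfl⟩ | hcase
  · exact ⟨10, by rw [lead123 o href b hlead]; rfl⟩
  rcases hcase with ⟨rfl, rfl, rfl⟩ | hcase
  · exact ⟨11, by rw [lead124 o href b hlead]; rfl⟩
  rcases hcase with ⟨rfl, rfl, rfl⟩ | hcase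
  · exact ⟨12, by rw [lead125 o href b hlead]; rfl⟩
  rcases hcase with ⟨rfl, rfl, rfl⟩ | hcase
  · exact ⟨13, by rw [lead134 o href b hlead]; rfl⟩
  rcases hcase with ⟨rfl, rfl, rfl⟩ | hcase
  · exact ⟨14, by rw [lead135 o href b hlead]; rfl⟩
  rcases hcase with ⟨rfl, rfl, rfl⟩ | hcase
  · exact ⟨15, by rw [lead145 o href b hlead]; rfl⟩
  rcases hcase with ⟨rfl, rfl, rfl⟩ | hcase
  · exact ⟨16, by rw [lead234 o href b hlead]; rfl⟩
  rcases hcase with ⟨rfl, rfl, rfl⟩ | hcase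
  · exact ⟨17, by rw [lead235 o href b hlead]; rfl⟩
  rcases hcase with ⟨rfl, rfl, rfl⟩ | hcase
  · exact ⟨18, by rw [lead245 o href b hlead]; rfl⟩
  obtain ⟨rfl, rfl, rfl⟩ := hcase
  exact ⟨19, by rw [lead345 o href b hlead]; rfl⟩

noncomputable def SA (N : AddSubmonoid (Fin 3 × Fin 6 →₀ ℕ)) :
    Subalgebra k (MvPolynomial (Fin 3 × Fin 6) k) where
  carrier := {f | ∀ m ∈ f.support, m ∈ N}
  mul_mem' := by
    intro f g hf hg m hm
    have h2 := MvPolynomial.support_mul f g hm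
    rw [Finset.mem_add] at h2
    obtain ⟨u, hu, v, hv, rfl⟩ := h2
    exact N.add_mem (hf u hu) (hg v hv)
  add_mem' := by
    intro f g hf hg m hm
    rcases Finset.mem_union.mp (MvPolynomial.support_add hm) with h | h
    · exact hf m h
    · exact hg m h
  one_mem' := by
    intro m hm
    rw [show (1 : MvPolynomial (Fin 3 × Fin 6) k) = C 1 from rfl, MvPolynomial.C_apply,
      MvPolynomial.support_monomial] at hm
    split_ifs at hm
    · simp at hm
    · rw [Finset.mem_singleton.mp hm]; exact N.zero_mem
  zero_mem' := by intro m hm; simp at hm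
  algebraMap_mem' := by
    intro r m hm
    rw [MvPolynomial.algebraMap_eq, MvPolynomial.C_apply, MvPolynomial.support_monomial] at hm
    split_ifs at hm
    · simp at hm
    · rw [Finset.mem_singleton.mp hm]; exact N.zero_mem

/-- for any monomial order `≺` refining the weight matrix `W`, the twenty
`3 × 3` minors of the generic `3 × 6` matrix are not a sagbi basis: some element `g` of the
algebra they generate has initial monomial `in_≺(g)` outside the algebra generated by the
initial monomials `in_≺(m_{ijk})`.  In particular the maximal minors of a generic `3 × 6`
matrix do not form a universal sagbi basis. -/
theorem minors_not_sagbi_basis (k : Type) [Field k] (o : MonoOrder (Fin 3 × Fin 6))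
    (href : ∀ a b, monWeight a < monWeight b → o.lt a b) :
    ∃ g ∈ Algebra.adjoin k { m : MvPolynomial (Fin 3 × Fin 6) k |
        ∃ i j l : Fin 6, i < j ∧ j < l ∧ m = minor36 k i j l },
      ∃ a, IsLead o g a ∧
        (monomial a (g.coeff a) : MvPolynomial (Fin 3 × Fin 6) k) ∉
          Algebra.adjoin k { h : MvPolynomial (Fin 3 × Fin 6) k |
            ∃ i j l : Fin 6, i < j ∧ j < l ∧ ∃ b, IsLead o (minor36 k i j l) b ∧
              h = monomial b ((minor36 k i j l).coeff b) } := by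
  have hg_mem : gpoly k ∈ Algebra.adjoin k { m : MvPolynomial (Fin 3 × Fin 6) k |
      ∃ i j l : Fin 6, i < j ∧ j < l ∧ m = minor36 k i j l } := by
    apply sub_mem
    · exact mul_mem (Algebra.subset_adjoin ⟨0, 1, 4, by decide, by decide, rfl⟩)
        (Algebra.subset_adjoin ⟨2, 3, 5, by decide, by decide, rfl⟩)
    · exact mul_mem (Algebra.subset_adjoin ⟨0, 1, 5, by decide, by decide, rfl⟩)
        (Algebra.subset_adjoin ⟨2, 3, 4, by decide, by decide, rfl⟩)
  have hg0 : gpoly k ≠ 0 := by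
    intro h
    have := m1_mem (k := k)
    rw [h] at this
    simp at this
  obtain ⟨a, ha⟩ := exists_lead o (gpoly k) hg0
  refine ⟨gpoly k, hg_mem, a, ha, ?_⟩
  intro hmem
  set N : AddSubmonoid (Fin 3 × Fin 6 →₀ ℕ) := AddSubmonoid.closure
    {b : Fin 3 × Fin 6 →₀ ℕ | ∃ i j l : Fin 6, i < j ∧ j < l ∧ IsLead o (minor36 k i j l) b}
    with hN
  have hAsub : Algebra.adjoin k { h : MvPolynomial (Fin 3 × Fin 6) k |
      ∃ i j l : Fin 6, i < j ∧ j < l ∧ ∃ b, IsLead o (minor36 k i j l) b ∧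
        h = monomial b ((minor36 k i j l).coeff b) } ≤ SA (k := k) N := by
    apply Algebra.adjoin_le
    rintro h ⟨i, j, l, hij, hjl, b, hb, rfl⟩
    intro m hm
    rw [MvPolynomial.support_monomial] at hm
    split_ifs at hm
    · simp at hm
    · rw [Finset.mem_singleton.mp hm]
      exact AddSubmonoid.subset_closure ⟨i, j, l, hij, hjl, hb⟩
  have haN : a ∈ N := by
    have h2 := hAsub hmem
    refine h2 a ?_
    rw [MvPolynomial.mem_support_iff, coeff_monomial, if_pos rfl]
    exact MvPolynomial.mem_support_iff.mp ha.1
  have ham : a = ex6 1 4 3 5 0 2 ∨ a = ex6 3 5 0 2 1 4 := by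
    rcases g_supp (k := k) a ha.1 with h | h | h
    · exact Or.inl h
    · exact Or.inr h
    · exfalso
      have h1 : ex6 1 4 3 5 0 2 ≠ a := by
        intro hh; rw [hh] at h; exact lt_irrefl _ h
      have hlt := ha.2 _ (m1_mem (k := k)) h1
      exact o.irrefl a (o.trans _ _ _ hlt (href _ _ h))
  obtain ⟨lst, hlst, hsum⟩ := AddSubmonoid.exists_list_of_mem_closure haN
  have hlen : lst.length = 2 := by
    have h6 : Dh lst.sum = 6 := by
      rw [hsum]; rcases ham with rfl | rfl <;> exact Dh_ex6 _ _ _ _ _ _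
    rw [map_list_sum] at h6
    have hrep : lst.map Dh = List.replicate (lst.map Dh).length 3 := by
      rw [List.eq_replicate_iff]
      refine ⟨rfl, ?_⟩
      intro x hx
      obtain ⟨y, hy, rfl⟩ := List.mem_map.mp hx
      obtain ⟨t, rfl⟩ := mem_L20 (k := k) o href y (hlst y hy)
      exact Dh_ex3 _ _ _
    rw [hrep, List.sum_replicate, smul_eq_mul, List.length_map] at h6
    omega
  obtain ⟨u, v, rfl⟩ := List.length_eq_two.mp hlen
  obtain ⟨t, rfl⟩ := mem_L20 (k := k) o href u (hlst u (by simp))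
  obtain ⟨s, rfl⟩ := mem_L20 (k := k) o href v (hlst v (by simp))
  have hsum2 : ex3 (cA t) (cB t) (cC t) + ex3 (cA s) (cB s) (cC s) = a := by
    simpa using hsum
  have hpt := DFunLike.ext_iff.mp hsum2
  rcases ham with rfl | rfl
  · refine nonrep1 t s (fun p => ?_)
    have h3 := hpt p
    simpa only [Finsupp.add_apply, ex3_apply, ex6_apply] using h3
  · refine nonrep2 t s (fun p => ?_)
    have h3 := hpt p
    simpa only [Finsupp.add_apply, ex3_apply, ex6_apply] using h3
end
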